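/- arXiv:2403.17875 — 5 statements merged into one kernel-verified Lean document; each statement's English description precedes it below -/
import Mathlib

section
/- Assume lim_{x↓0} ψ'(x)/p'(x) = 0, lim_{x↑∞} ψ(x) = ∞, and lim_{x↑∞} R_Θ(x)/ψ(x) = 0. Then there exists a unique x̲ ∈ (ξ, ∞] such that the derivative of R_Θ'/ψ' is strictly negative at every x ∈ (0, x̲) and strictly positive at every x ∈ (x̲, ∞) (with the convention (∞,∞) = ∅), and moreover lim_{x↑∞} R_Θ'(x)/ψ'(x) = 0. -/
open Filter Set MeasureTheory Topology

set_option maxHeartbeats 4000000 in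
theorem stmt_10
    (b σ r : ℝ → ℝ) (r₀ r₁ : ℝ)
    (hbc : ContinuousOn b (Ioi 0))
    (hσc : ContinuousOn σ (Ioi 0))
    (hrc : ContinuousOn r (Ioi 0))
    (hσpos : ∀ x ∈ Ioi (0:ℝ), 0 < σ x)
    (hr₀ : 0 < r₀) (hr₀₁ : r₀ ≤ r₁)
    (hrbd : ∀ x ∈ Ioi (0:ℝ), r₀ ≤ r x ∧ r x ≤ r₁)
    (p' : ℝ → ℝ)
    (hp' : ∀ x ∈ Ioi (0:ℝ), p' x = Real.exp (-(2:ℝ) * ∫ s in (1:ℝ)..x, b s / (σ s) ^ 2))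
    (φ ψ φ' ψ' φ'' ψ'' : ℝ → ℝ)
    (hφ1 : ∀ x ∈ Ioi (0:ℝ), HasDerivAt φ (φ' x) x)
    (hφ2 : ∀ x ∈ Ioi (0:ℝ), HasDerivAt φ' (φ'' x) x)
    (hφ2c : ContinuousOn φ'' (Ioi 0))
    (hψ1 : ∀ x ∈ Ioi (0:ℝ), HasDerivAt ψ (ψ' x) x)
    (hψ2 : ∀ x ∈ Ioi (0:ℝ), HasDerivAt ψ' (ψ'' x) x)
    (hψ2c : ContinuousOn ψ'' (Ioi 0))
    (hφpos : ∀ x ∈ Ioi (0:ℝ), 0 < φ x)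
    (hφ'neg : ∀ x ∈ Ioi (0:ℝ), φ' x < 0)
    (hψpos : ∀ x ∈ Ioi (0:ℝ), 0 < ψ x)
    (hψ'pos : ∀ x ∈ Ioi (0:ℝ), 0 < ψ' x)
    (hφODE : ∀ x ∈ Ioi (0:ℝ), (1/2) * σ x ^ 2 * φ'' x + b x * φ' x - r x * φ x = 0)
    (hψODE : ∀ x ∈ Ioi (0:ℝ), (1/2) * σ x ^ 2 * ψ'' x + b x * ψ' x - r x * ψ x = 0)
    (C : ℝ) (hC : 0 < C)
    (hWr : ∀ x ∈ Ioi (0:ℝ), φ x * ψ' x - φ' x * ψ x = C * p' x)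
    (Ψ Φ : ℝ → ℝ)
    (hΨ : ∀ x ∈ Ioi (0:ℝ), Ψ x = 2 * ψ x / (C * σ x ^ 2 * p' x))
    (hΦ : ∀ x ∈ Ioi (0:ℝ), Φ x = 2 * φ x / (C * σ x ^ 2 * p' x))
    (Θ : ℝ → ℝ) (hΘc : ContinuousOn Θ (Ioi 0))
    (hΘIC : ∀ x ∈ Ioi (0:ℝ),
      IntegrableOn (fun s => Θ s * Ψ s) (Ioc 0 x) ∧
      IntegrableOn (fun s => Θ s * Φ s) (Ioi x))
    (ξ : ℝ) (hξ : 0 < ξ)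
    (hΘinc : StrictMonoOn (fun x => Θ x / r x) (Ioo 0 ξ))
    (hΘdec : StrictAntiOn (fun x => Θ x / r x) (Ioi ξ))
    (R R' : ℝ → ℝ)
    (hRdef : ∀ x ∈ Ioi (0:ℝ),
      R x = φ x * (∫ s in Ioc (0:ℝ) x, Θ s * Ψ s) + ψ x * (∫ s in Ioi x, Θ s * Φ s))
    (hR'def : ∀ x ∈ Ioi (0:ℝ),
      R' x = φ' x * (∫ s in Ioc (0:ℝ) x, Θ s * Ψ s) + ψ' x * (∫ s in Ioi x, Θ s * Φ s))
    (hψ'p'0 : Tendsto (fun x => ψ' x / p' x) (𝓝[>] (0:ℝ)) (𝓝 0))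
    (hψT : Tendsto ψ atTop atTop)
    (hRψT : Tendsto (fun x => R x / ψ x) atTop (𝓝 0))
    :
    (∃! xl : EReal, (ξ : EReal) < xl ∧
      (∀ x : ℝ, 0 < x → (x : EReal) < xl → deriv (fun y => R' y / ψ' y) x < 0) ∧
      (∀ x : ℝ, xl < (x : EReal) → 0 < deriv (fun y => R' y / ψ' y) x)) ∧
    Tendsto (fun x => R' x / ψ' x) atTop (𝓝 0) := by
  have hopen : IsOpen (Ioi (0:ℝ)) := isOpen_Ioi
  have hσ2pos : ∀ x ∈ Ioi (0:ℝ), (0:ℝ) < σ x ^ 2 := fun x hx => pow_pos (hσpos x hx) 2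
  have hp'pos : ∀ x ∈ Ioi (0:ℝ), (0:ℝ) < p' x := fun x hx => by
    rw [hp' x hx]; exact Real.exp_pos _
  have hrpos : ∀ x ∈ Ioi (0:ℝ), (0:ℝ) < r x := fun x hx => lt_of_lt_of_le hr₀ (hrbd x hx).1
  have hbσc : ContinuousOn (fun s => b s / σ s ^ 2) (Ioi 0) :=
    hbc.div (hσc.pow 2) fun x hx => (hσ2pos x hx).ne'
  have huIcc : ∀ x ∈ Ioi (0:ℝ), ∀ y ∈ Ioi (0:ℝ), uIcc x y ⊆ Ioi (0:ℝ) := by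
    intro x hx y hy t ht
    rcases mem_uIcc.mp ht with h | h
    · exact lt_of_lt_of_le hx h.1
    · exact lt_of_lt_of_le hy h.1
  have hp'deriv : ∀ x ∈ Ioi (0:ℝ), HasDerivAt p' (p' x * (-2 * (b x / σ x ^ 2))) x := by
    intro x hx
    have hint : IntervalIntegrable (fun s => b s / σ s ^ 2) volume 1 x :=
      (hbσc.mono (huIcc 1 (by norm_num) x hx)).intervalIntegrable
    have hFTC : HasDerivAt (fun y => ∫ s in (1:ℝ)..y, b s / σ s ^ 2) (b x / σ x ^ 2) x :=
      intervalIntegral.integral_hasDerivAt_right hint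
        ((hbσc.stronglyMeasurableAtFilter hopen) x hx)
        (hbσc.continuousAt (hopen.mem_nhds hx))
    have hE : HasDerivAt (fun y => Real.exp (-(2:ℝ) * ∫ s in (1:ℝ)..y, b s / σ s ^ 2))
        (Real.exp (-(2:ℝ) * ∫ s in (1:ℝ)..x, b s / σ s ^ 2) * (-(2:ℝ) * (b x / σ x ^ 2))) x :=
      (hFTC.const_mul (-(2:ℝ))).exp
    have heq : p' =ᶠ[𝓝 x] fun y => Real.exp (-(2:ℝ) * ∫ s in (1:ℝ)..y, b s / σ s ^ 2) :=
      eventually_of_mem (hopen.mem_nhds hx) hp'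
    have := hE.congr_of_eventuallyEq heq
    rwa [← hp' x hx] at this
  have hφc : ContinuousOn φ (Ioi 0) := fun x hx => (hφ1 x hx).continuousAt.continuousWithinAt
  have hψc : ContinuousOn ψ (Ioi 0) := fun x hx => (hψ1 x hx).continuousAt.continuousWithinAt
  have hφ'c : ContinuousOn φ' (Ioi 0) := fun x hx => (hφ2 x hx).continuousAt.continuousWithinAt
  have hψ'c : ContinuousOn ψ' (Ioi 0) := fun x hx => (hψ2 x hx).continuousAt.continuousWithinAt
  have hp'c : ContinuousOn p' (Ioi 0) := fun x hx => (hp'deriv x hx).continuousAt.continuousWithinAt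
  have hdenne : ∀ x ∈ Ioi (0:ℝ), C * σ x ^ 2 * p' x ≠ 0 := fun x hx =>
    (mul_pos (mul_pos hC (hσ2pos x hx)) (hp'pos x hx)).ne'
  have hΨc : ContinuousOn Ψ (Ioi 0) := by
    refine ContinuousOn.congr ?_ hΨ
    exact (continuousOn_const.mul hψc).div
      ((continuousOn_const.mul (hσc.pow 2)).mul hp'c) hdenne
  have hΦc : ContinuousOn Φ (Ioi 0) := by
    refine ContinuousOn.congr ?_ hΦ
    exact (continuousOn_const.mul hφc).div
      ((continuousOn_const.mul (hσc.pow 2)).mul hp'c) hdenne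
  have hΨpos : ∀ x ∈ Ioi (0:ℝ), (0:ℝ) < Ψ x := by
    intro x hx
    rw [hΨ x hx]
    exact div_pos (by linarith [hψpos x hx]) (mul_pos (mul_pos hC (hσ2pos x hx)) (hp'pos x hx))
  have hΘΨc : ContinuousOn (fun s => Θ s * Ψ s) (Ioi 0) := hΘc.mul hΨc
  have hΘΦc : ContinuousOn (fun s => Θ s * Φ s) (Ioi 0) := hΘc.mul hΦc
  obtain ⟨A, hA⟩ : ∃ A : ℝ → ℝ, ∀ x, A x = ∫ s in Ioc (0:ℝ) x, Θ s * Ψ s := ⟨_, fun _ => rfl⟩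
  obtain ⟨Bf, hB⟩ : ∃ Bf : ℝ → ℝ, ∀ x, Bf x = ∫ s in Ioi x, Θ s * Φ s := ⟨_, fun _ => rfl⟩
  have hAsplit : ∀ c ∈ Ioi (0:ℝ), ∀ x, c ≤ x → A x = A c + ∫ s in c..x, Θ s * Ψ s := by
    intro c hc x hcx
    have hxpos : x ∈ Ioi (0:ℝ) := lt_of_lt_of_le hc hcx
    rw [intervalIntegral.integral_of_le hcx, hA, hA,
      show Ioc (0:ℝ) x = Ioc 0 c ∪ Ioc c x from (Ioc_union_Ioc_eq_Ioc hc.le hcx).symm,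
      setIntegral_union (Ioc_disjoint_Ioc_of_le le_rfl) measurableSet_Ioc
        (((hΘIC x hxpos).1).mono_set (Ioc_subset_Ioc_right hcx))
        (((hΘIC x hxpos).1).mono_set (Ioc_subset_Ioc_left hc.le))]
  have hBsplit : ∀ c ∈ Ioi (0:ℝ), ∀ x, c ≤ x → Bf c = (∫ s in c..x, Θ s * Φ s) + Bf x := by
    intro c hc x hcx
    rw [intervalIntegral.integral_of_le hcx, hB, hB,
      show Ioi c = Ioc c x ∪ Ioi x from (Ioc_union_Ioi_eq_Ioi hcx).symm,
      setIntegral_union (Ioc_disjoint_Ioi le_rfl) measurableSet_Ioi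
        (((hΘIC c hc).2).mono_set Ioc_subset_Ioi_self)
        (((hΘIC c hc).2).mono_set (Ioi_subset_Ioi hcx))]
  have hAderiv : ∀ x ∈ Ioi (0:ℝ), HasDerivAt A (Θ x * Ψ x) x := by
    intro x hx
    have hc : (0:ℝ) < x / 2 := half_pos hx
    have hint : IntervalIntegrable (fun s => Θ s * Ψ s) volume (x / 2) x :=
      (intervalIntegrable_iff_integrableOn_Ioc_of_le (by linarith)).mpr
        (((hΘIC x hx).1).mono_set (Ioc_subset_Ioc_left hc.le))
    have hFTC : HasDerivAt (fun y => A (x / 2) + ∫ s in (x/2)..y, Θ s * Ψ s) (Θ x * Ψ x) x :=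
      (intervalIntegral.integral_hasDerivAt_right hint
        ((hΘΨc.stronglyMeasurableAtFilter hopen) x hx)
        (hΘΨc.continuousAt (hopen.mem_nhds hx))).const_add (A (x/2))
    apply hFTC.congr_of_eventuallyEq
    filter_upwards [isOpen_Ioi.mem_nhds (show x/2 < x by linarith)] with y hy
    exact hAsplit (x/2) hc y (le_of_lt hy)
  have hBderiv : ∀ x ∈ Ioi (0:ℝ), HasDerivAt Bf (-(Θ x * Φ x)) x := by
    intro x hx
    have hc : (0:ℝ) < x / 2 := half_pos hx
    have hint : IntervalIntegrable (fun s => Θ s * Φ s) volume (x / 2) x :=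
      (intervalIntegrable_iff_integrableOn_Ioc_of_le (by linarith)).mpr
        (((hΘIC (x/2) hc).2).mono_set Ioc_subset_Ioi_self)
    have hFTC : HasDerivAt (fun y => Bf (x / 2) - ∫ s in (x/2)..y, Θ s * Φ s) (-(Θ x * Φ x)) x :=
      ((intervalIntegral.integral_hasDerivAt_right hint
        ((hΘΦc.stronglyMeasurableAtFilter hopen) x hx)
        (hΘΦc.continuousAt (hopen.mem_nhds hx))).const_sub (Bf (x/2)))
    apply hFTC.congr_of_eventuallyEq
    filter_upwards [isOpen_Ioi.mem_nhds (show x/2 < x by linarith)] with y hy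
    have := hBsplit (x/2) hc y (le_of_lt hy)
    linarith
  -- ODE rearrangements
  have hφ''eq : ∀ x ∈ Ioi (0:ℝ), φ'' x = 2 * (r x * φ x - b x * φ' x) / σ x ^ 2 := by
    intro x hx
    rw [eq_div_iff (hσ2pos x hx).ne']
    linarith [hφODE x hx]
  have hψ''eq : ∀ x ∈ Ioi (0:ℝ), ψ'' x = 2 * (r x * ψ x - b x * ψ' x) / σ x ^ 2 := by
    intro x hx
    rw [eq_div_iff (hσ2pos x hx).ne']
    linarith [hψODE x hx]
  have hp'W : ∀ x ∈ Ioi (0:ℝ), p' x = (φ x * ψ' x - φ' x * ψ x) / C := by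
    intro x hx
    rw [hWr x hx]
    field_simp
  have hR'eq : ∀ x ∈ Ioi (0:ℝ), R' x = φ' x * A x + ψ' x * Bf x := by
    intro x hx; rw [hR'def x hx, hA, hB]
  have hReq : ∀ x ∈ Ioi (0:ℝ), R x = φ x * A x + ψ x * Bf x := by
    intro x hx; rw [hRdef x hx, hA, hB]
  -- derivative of R is R'
  have hRderiv : ∀ x ∈ Ioi (0:ℝ), HasDerivAt R (R' x) x := by
    intro x hx
    have hd : HasDerivAt (fun y => φ y * A y + ψ y * Bf y)
        ((φ' x * A x + φ x * (Θ x * Ψ x)) + (ψ' x * Bf x + ψ x * (-(Θ x * Φ x)))) x :=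
      ((hφ1 x hx).mul (hAderiv x hx)).add ((hψ1 x hx).mul (hBderiv x hx))
    have hval : (φ' x * A x + φ x * (Θ x * Ψ x)) + (ψ' x * Bf x + ψ x * (-(Θ x * Φ x))) = R' x := by
      rw [hR'eq x hx, hΨ x hx, hΦ x hx]
      field_simp
      ring
    rw [hval] at hd
    apply hd.congr_of_eventuallyEq
    filter_upwards [hopen.mem_nhds hx] with y hy
    exact hReq y hy
  -- derivative of R'
  have hR'deriv : ∀ x ∈ Ioi (0:ℝ), HasDerivAt R'
      ((φ'' x * A x + φ' x * (Θ x * Ψ x)) + (ψ'' x * Bf x + ψ' x * (-(Θ x * Φ x)))) x := by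
    intro x hx
    have hd : HasDerivAt (fun y => φ' y * A y + ψ' y * Bf y)
        ((φ'' x * A x + φ' x * (Θ x * Ψ x)) + (ψ'' x * Bf x + ψ' x * (-(Θ x * Φ x)))) x :=
      ((hφ2 x hx).mul (hAderiv x hx)).add ((hψ2 x hx).mul (hBderiv x hx))
    apply hd.congr_of_eventuallyEq
    filter_upwards [hopen.mem_nhds hx] with y hy
    exact hR'eq y hy
  have hR'c : ContinuousOn R' (Ioi 0) := fun x hx =>
    (hR'deriv x hx).continuousAt.continuousWithinAt
  have hgderiv : ∀ x ∈ Ioi (0:ℝ), HasDerivAt (fun y => R' y / ψ' y)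
      ((((φ'' x * A x + φ' x * (Θ x * Ψ x)) + (ψ'' x * Bf x + ψ' x * (-(Θ x * Φ x)))) * ψ' x
        - R' x * ψ'' x) / ψ' x ^ 2) x :=
    fun x hx => (hR'deriv x hx).div (hψ2 x hx) (hψ'pos x hx).ne'
  -- the h function
  obtain ⟨hf, hhf⟩ : ∃ hf : ℝ → ℝ, ∀ x, hf x = ψ' x / (C * p' x) := ⟨_, fun _ => rfl⟩
  have hWpos : ∀ x ∈ Ioi (0:ℝ), (0:ℝ) < φ x * ψ' x - φ' x * ψ x := by
    intro x hx
    rw [hWr x hx]; exact mul_pos hC (hp'pos x hx)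
  have hhfderiv : ∀ x ∈ Ioi (0:ℝ), HasDerivAt hf (r x * Ψ x) x := by
    intro x hx
    have hne : C * p' x ≠ 0 := (mul_pos hC (hp'pos x hx)).ne'
    have hd : HasDerivAt (fun y => ψ' y / (C * p' y))
        ((ψ'' x * (C * p' x) - ψ' x * (C * (p' x * (-2 * (b x / σ x ^ 2))))) / (C * p' x) ^ 2) x :=
      (hψ2 x hx).div ((hp'deriv x hx).const_mul C) hne
    have hval : (ψ'' x * (C * p' x) - ψ' x * (C * (p' x * (-2 * (b x / σ x ^ 2))))) / (C * p' x) ^ 2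
        = r x * Ψ x := by
      rw [hΨ x hx, hψ''eq x hx]
      have h1 : σ x ^ 2 ≠ 0 := (hσ2pos x hx).ne'
      have h2 : p' x ≠ 0 := (hp'pos x hx).ne'
      field_simp
      ring
    rw [hval] at hd
    apply hd.congr_of_eventuallyEq
    filter_upwards with y using hhf y
  have hhfpos : ∀ x ∈ Ioi (0:ℝ), (0:ℝ) < hf x := by
    intro x hx
    rw [hhf x]
    exact div_pos (hψ'pos x hx) (mul_pos hC (hp'pos x hx))
  have hhfc : ContinuousOn hf (Ioi 0) := fun x hx =>
    (hhfderiv x hx).continuousAt.continuousWithinAt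
  have hhf0 : Tendsto hf (𝓝[>] (0:ℝ)) (𝓝 0) := by
    have := hψ'p'0.div_const C
    rw [zero_div] at this
    apply this.congr
    intro x
    rw [hhf x]
    ring
  -- the key function H
  obtain ⟨H, hH⟩ : ∃ H : ℝ → ℝ, ∀ x, H x = A x - Θ x / r x * hf x := ⟨_, fun _ => rfl⟩
  have hKpos : ∀ x ∈ Ioi (0:ℝ), (0:ℝ) < 2 * r x * C * p' x / (σ x ^ 2 * ψ' x ^ 2) := by
    intro x hx
    apply div_pos
    · have := hrpos x hx; have := hp'pos x hx; positivity
    · have := hσ2pos x hx; have := hψ'pos x hx; positivity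
  have hKey : ∀ x ∈ Ioi (0:ℝ), deriv (fun y => R' y / ψ' y) x
      = (2 * r x * C * p' x / (σ x ^ 2 * ψ' x ^ 2)) * H x := by
    intro x hx
    have h1 : σ x ^ 2 ≠ 0 := (hσ2pos x hx).ne'
    have h3 : ψ' x ≠ 0 := (hψ'pos x hx).ne'
    have h4 : r x ≠ 0 := (hrpos x hx).ne'
    have h5 : C ≠ 0 := hC.ne'
    have h6 : p' x ≠ 0 := (hp'pos x hx).ne'
    have e1 : σ x ^ 2 * (φ'' x * ψ' x - φ' x * ψ'' x) = 2 * r x * (C * p' x) := by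
      rw [hφ''eq x hx, hψ''eq x hx, ← hWr x hx]
      have h1' : σ x ≠ 0 := (hσpos x hx).ne'
      field_simp
      ring
    have e2 : σ x ^ 2 * (φ' x * (Θ x * Ψ x) - ψ' x * (Θ x * Φ x)) = -(2 * Θ x) := by
      rw [hΨ x hx, hΦ x hx]
      have hw : φ' x * ψ x - ψ' x * φ x = -(C * p' x) := by linarith [hWr x hx]
      have expand : σ x ^ 2 * (φ' x * (Θ x * (2 * ψ x / (C * σ x ^ 2 * p' x)))
          - ψ' x * (Θ x * (2 * φ x / (C * σ x ^ 2 * p' x))))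
          = 2 * Θ x * (φ' x * ψ x - ψ' x * φ x) * σ x ^ 2 / (C * σ x ^ 2 * p' x) := by
        ring
      rw [expand, hw]
      have h1' : σ x ≠ 0 := (hσpos x hx).ne'
      field_simp
    have eN : ((φ'' x * A x + φ' x * (Θ x * Ψ x)) + (ψ'' x * Bf x + ψ' x * (-(Θ x * Φ x)))) * ψ' x
        - (φ' x * A x + ψ' x * Bf x) * ψ'' x
        = (A x * (2 * r x * (C * p' x)) - 2 * Θ x * ψ' x) / σ x ^ 2 := by
      rw [eq_div_iff h1]
      linear_combination A x * e1 + ψ' x * e2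
    rw [(hgderiv x hx).deriv, hR'eq x hx, eN, hH, hhf x]
    field_simp
  -- FTC for hf
  have hrΨc : ContinuousOn (fun s => r s * Ψ s) (Ioi 0) := hrc.mul hΨc
  have hfFTC : ∀ y ∈ Ioi (0:ℝ), ∀ x, y ≤ x →
      (∫ s in y..x, r s * Ψ s) = hf x - hf y := by
    intro y hy x hyx
    have hsub : uIcc y x ⊆ Ioi (0:ℝ) := huIcc y hy x (lt_of_lt_of_le hy hyx)
    exact intervalIntegral.integral_eq_sub_of_hasDerivAt
      (fun t ht => hhfderiv t (hsub ht))
      ((hrΨc.mono hsub).intervalIntegrable)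
  -- strict comparison lemmas
  have hlt : ∀ x0 x c, 0 < x0 → x0 < x → (∀ s, s ∈ Ioo x0 x → Θ s / r s < c) →
      (∫ s in x0..x, Θ s * Ψ s) < c * (hf x - hf x0) := by
    intro x0 x c hx0 hx0x hc
    have hxpos : (0:ℝ) < x := hx0.trans hx0x
    have hsub : uIcc x0 x ⊆ Ioi (0:ℝ) := huIcc x0 hx0 x hxpos
    have hint1 : IntervalIntegrable (fun s => Θ s * Ψ s) volume x0 x :=
      (hΘΨc.mono hsub).intervalIntegrable
    have hint2 : IntervalIntegrable (fun s => c * (r s * Ψ s) - Θ s * Ψ s) volume x0 x :=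
      ((continuousOn_const.mul (hrΨc.mono hsub)).sub (hΘΨc.mono hsub)).intervalIntegrable
    have hpos : 0 < ∫ s in x0..x, (c * (r s * Ψ s) - Θ s * Ψ s) := by
      apply intervalIntegral.intervalIntegral_pos_of_pos_on hint2 _ hx0x
      intro s hs
      have hs0 : s ∈ Ioi (0:ℝ) := hx0.trans hs.1
      have hr' : 0 < r s := hrpos s hs0
      have hΨ' : 0 < Ψ s := hΨpos s hs0
      have h1 : Θ s / r s < c := hc s hs
      have h2 : Θ s * Ψ s = (Θ s / r s) * (r s * Ψ s) := by field_simp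
      rw [h2]
      have h3 : 0 < r s * Ψ s := mul_pos hr' hΨ'
      nlinarith
    have heq : (∫ s in x0..x, (c * (r s * Ψ s) - Θ s * Ψ s))
        = c * (hf x - hf x0) - ∫ s in x0..x, Θ s * Ψ s := by
      rw [intervalIntegral.integral_sub (f := fun s => c * (r s * Ψ s)) (g := fun s => Θ s * Ψ s) ((continuousOn_const.mul (hrΨc.mono hsub)).intervalIntegrable) hint1,
        intervalIntegral.integral_const_mul, hfFTC x0 hx0 x hx0x.le]
    linarith [heq ▸ hpos]
  have hgt : ∀ x0 x c, 0 < x0 → x0 < x → (∀ s, s ∈ Ioo x0 x → c < Θ s / r s) →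
      c * (hf x - hf x0) < ∫ s in x0..x, Θ s * Ψ s := by
    intro x0 x c hx0 hx0x hc
    have hxpos : (0:ℝ) < x := hx0.trans hx0x
    have hsub : uIcc x0 x ⊆ Ioi (0:ℝ) := huIcc x0 hx0 x hxpos
    have hint1 : IntervalIntegrable (fun s => Θ s * Ψ s) volume x0 x :=
      (hΘΨc.mono hsub).intervalIntegrable
    have hint2 : IntervalIntegrable (fun s => Θ s * Ψ s - c * (r s * Ψ s)) volume x0 x :=
      ((hΘΨc.mono hsub).sub (continuousOn_const.mul (hrΨc.mono hsub))).intervalIntegrable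
    have hpos : 0 < ∫ s in x0..x, (Θ s * Ψ s - c * (r s * Ψ s)) := by
      apply intervalIntegral.intervalIntegral_pos_of_pos_on hint2 _ hx0x
      intro s hs
      have hs0 : s ∈ Ioi (0:ℝ) := hx0.trans hs.1
      have hr' : 0 < r s := hrpos s hs0
      have hΨ' : 0 < Ψ s := hΨpos s hs0
      have h1 : c < Θ s / r s := hc s hs
      have h2 : Θ s * Ψ s = (Θ s / r s) * (r s * Ψ s) := by field_simp
      rw [h2]
      have h3 : 0 < r s * Ψ s := mul_pos hr' hΨ'
      nlinarith
    have heq : (∫ s in x0..x, (Θ s * Ψ s - c * (r s * Ψ s)))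
        = (∫ s in x0..x, Θ s * Ψ s) - c * (hf x - hf x0) := by
      rw [intervalIntegral.integral_sub (f := fun s => Θ s * Ψ s) (g := fun s => c * (r s * Ψ s)) hint1 ((continuousOn_const.mul (hrΨc.mono hsub)).intervalIntegrable),
        intervalIntegral.integral_const_mul, hfFTC x0 hx0 x hx0x.le]
    linarith [heq ▸ hpos]
  -- monotonicity facts about Θ/r
  have hΘrc : ContinuousOn (fun s => Θ s / r s) (Ioi 0) :=
    hΘc.div hrc fun x hx => (hrpos x hx).ne'
  have hΘrCA : ∀ x ∈ Ioi (0:ℝ), ContinuousAt (fun s => Θ s / r s) x := fun x hx =>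
    hΘrc.continuousAt (hopen.mem_nhds hx)
  have hltξ : ∀ x, x ∈ Ioc 0 ξ → ∀ s, s ∈ Ioo 0 x → Θ s / r s < Θ x / r x := by
    intro x hx s hs
    rcases lt_or_eq_of_le hx.2 with hlt' | heq'
    · exact hΘinc ⟨hs.1, hs.2.trans hlt'⟩ ⟨hx.1, hlt'⟩ hs.2
    · subst heq'
      have hst : s < (s + x) / 2 := by linarith [hs.2]
      have htx : (s + x) / 2 < x := by linarith [hs.2]
      have ht0 : 0 < (s + x) / 2 := lt_trans hs.1 hst
      have h1 : Θ s / r s < Θ ((s + x) / 2) / r ((s + x) / 2) :=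
        hΘinc ⟨hs.1, hs.2⟩ ⟨ht0, htx⟩ hst
      have htend : Tendsto (fun u => Θ u / r u) (𝓝[<] x) (𝓝 (Θ x / r x)) :=
        (hΘrCA x hx.1).tendsto.mono_left nhdsWithin_le_nhds
      have h2 : Θ ((s + x) / 2) / r ((s + x) / 2) ≤ Θ x / r x := by
        apply ge_of_tendsto htend
        filter_upwards [Ioo_mem_nhdsLT_of_mem (Set.mem_Ioc.mpr ⟨htx, le_rfl⟩)] with u hu
        exact (hΘinc ⟨ht0, htx⟩ ⟨ht0.trans hu.1, hu.2⟩ hu.1).le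
      linarith
  have hleξ : ∀ x, ξ < x → Θ x / r x ≤ Θ ξ / r ξ := by
    intro x hx
    have htend : Tendsto (fun u => Θ u / r u) (𝓝[>] ξ) (𝓝 (Θ ξ / r ξ)) :=
      (hΘrCA ξ hξ).tendsto.mono_left nhdsWithin_le_nhds
    apply ge_of_tendsto htend
    filter_upwards [Ioo_mem_nhdsGT_of_mem (Set.mem_Ico.mpr ⟨le_rfl, hx⟩)] with u hu
    exact (hΘdec hu.1 hx hu.2).le
  have hHneg : ∀ x, x ∈ Ioc 0 ξ → H x < 0 := by
    intro x hx
    obtain ⟨hx0, hxξ⟩ := hx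
    have hx20 : (0:ℝ) < x / 2 := half_pos hx0
    have hx2x : x / 2 < x := half_lt_self hx0
    have hG : (∫ s in (x/2)..x, Θ s * Ψ s) < Θ x / r x * (hf x - hf (x/2)) :=
      hlt (x/2) x _ hx20 hx2x (fun s hs => hltξ x ⟨hx0, hxξ⟩ s ⟨hx20.trans hs.1, hs.2⟩)
    obtain ⟨L, hL⟩ : ∃ L : ℝ, L = (∫ s in (x/2)..x, Θ s * Ψ s) - Θ x / r x * (hf x - hf (x/2)) :=
      ⟨_, rfl⟩
    have hLneg : L < 0 := by rw [hL]; linarith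
    obtain ⟨ε, hεd⟩ : ∃ ε : ℕ → ℝ, ∀ n, ε n = (x/2) / ((n:ℝ) + 2) := ⟨_, fun _ => rfl⟩
    have hεpos : ∀ n, 0 < ε n := fun n => by rw [hεd n]; positivity
    have hεlt : ∀ n, ε n < x / 2 := by
      intro n
      rw [hεd n, div_lt_iff₀ (by positivity)]
      nlinarith [hx20, (Nat.cast_nonneg n : (0:ℝ) ≤ n)]
    have hεbound : ∀ n, H x ≤ A (ε n) - Θ x / r x * hf (ε n) + L := by
      intro n
      have h1 : A (x/2) = A (ε n) + ∫ s in (ε n)..(x/2), Θ s * Ψ s :=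
        hAsplit (ε n) (hεpos n) (x/2) (hεlt n).le
      have h2 : A x = A (x/2) + ∫ s in (x/2)..x, Θ s * Ψ s := hAsplit (x/2) hx20 x hx2x.le
      have h3 : (∫ s in (ε n)..(x/2), Θ s * Ψ s) < Θ x / r x * (hf (x/2) - hf (ε n)) :=
        hlt (ε n) (x/2) _ (hεpos n) (hεlt n)
          (fun s hs => hltξ x ⟨hx0, hxξ⟩ s ⟨(hεpos n).trans hs.1, hs.2.trans hx2x⟩)
      have h4 : H x = A x - Θ x / r x * hf x := hH x
      rw [hL]
      linarith
    have hεtend0 : Tendsto ε atTop (𝓝[>] (0:ℝ)) := by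
      apply tendsto_nhdsWithin_of_tendsto_nhds_of_eventually_within
      · have h2 : Tendsto (fun n : ℕ => ((n:ℝ) + 2)) atTop atTop :=
          tendsto_atTop_add_const_right _ 2 tendsto_natCast_atTop_atTop
        have h3 : Tendsto (fun n : ℕ => (((n:ℝ) + 2))⁻¹) atTop (𝓝 0) := h2.inv_tendsto_atTop
        have h4 := h3.const_mul (x/2)
        rw [mul_zero] at h4
        refine h4.congr fun n => ?_
        rw [hεd n]
        ring
      · exact Eventually.of_forall fun n => hεpos n
    have hftend : Tendsto (fun n => hf (ε n)) atTop (𝓝 0) := hhf0.comp hεtend0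
    have hAtend : Tendsto (fun n => A (ε n)) atTop (𝓝 0) := by
      have hmono : Monotone fun n : ℕ => Ioc (ε n) (x/2) := by
        intro n m hnm
        apply Ioc_subset_Ioc_left
        rw [hεd n, hεd m]
        have : ((n:ℝ) + 2) ≤ ((m:ℝ) + 2) := by
          have : (n:ℝ) ≤ m := Nat.cast_le.mpr hnm
          linarith
        gcongr
      have hunion : (⋃ n, Ioc (ε n) (x/2)) = Ioc 0 (x/2) := by
        apply Set.Subset.antisymm
        · refine iUnion_subset fun n => Ioc_subset_Ioc_left (hεpos n).le
        · intro t ht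
          obtain ⟨n, hn⟩ := exists_nat_gt ((x/2) / t)
          refine mem_iUnion.mpr ⟨n, ?_, ht.2⟩
          rw [hεd n, div_lt_iff₀ (by positivity)]
          rw [div_lt_iff₀ ht.1] at hn
          nlinarith [ht.1]
      have hti := tendsto_setIntegral_of_monotone
        (fun n => measurableSet_Ioc) hmono
        (by rw [hunion]; exact ((hΘIC (x/2) hx20).1 : IntegrableOn _ _ _))
      rw [hunion] at hti
      have heqn : ∀ n, A (ε n) = A (x/2) - ∫ s in Ioc (ε n) (x/2), Θ s * Ψ s := by
        intro n
        have h1 := hAsplit (ε n) (hεpos n) (x/2) (hεlt n).le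
        rw [intervalIntegral.integral_of_le (hεlt n).le] at h1
        linarith
      have := (tendsto_const_nhds (x := A (x/2)) (f := atTop (α := ℕ))).sub hti
      rw [← hA] at this
      simp only [sub_self] at this
      exact this.congr fun n => (heqn n).symm
    have hRHS : Tendsto (fun n => A (ε n) - Θ x / r x * hf (ε n) + L) atTop (𝓝 L) := by
      have h5 := hftend.const_mul (Θ x / r x)
      rw [mul_zero] at h5
      have h6 := (hAtend.sub h5).add_const L
      rw [sub_zero, zero_add] at h6
      exact h6
    exact lt_of_le_of_lt (ge_of_tendsto hRHS (Eventually.of_forall hεbound)) hLneg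
  have hHmono : ∀ y x, ξ ≤ y → y < x → H y < H x := by
    intro y x hξy hyx
    have hy0 : (0:ℝ) < y := hξ.trans_le hξy
    have hx0 : (0:ℝ) < x := hy0.trans hyx
    have hxξ : x ∈ Ioi ξ := lt_of_le_of_lt hξy hyx
    have h2 : A x = A y + ∫ s in y..x, Θ s * Ψ s := hAsplit y hy0 x hyx.le
    have h3 : Θ x / r x * (hf x - hf y) < ∫ s in y..x, Θ s * Ψ s := by
      apply hgt y x _ hy0 hyx
      intro s hs
      exact hΘdec (lt_of_le_of_lt hξy hs.1) hxξ hs.2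
    have h4 : Θ x / r x ≤ Θ y / r y := by
      rcases eq_or_lt_of_le hξy with heq | hlt'
      · rw [← heq]; exact hleξ x (heq ▸ hxξ)
      · exact (hΘdec hlt' hxξ hyx).le
    have h5 : (0:ℝ) < hf y := hhfpos y hy0
    have hHx : H x = A x - Θ x / r x * hf x := hH x
    have hHy : H y = A y - Θ y / r y * hf y := hH y
    nlinarith [mul_nonneg (sub_nonneg.mpr h4) h5.le]
  have hAc : ContinuousOn A (Ioi 0) := fun x hx => (hAderiv x hx).continuousAt.continuousWithinAt
  have hHc : ContinuousOn H (Ioi 0) :=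
    (hAc.sub (hΘrc.mul hhfc)).congr fun x _ => hH x
  have hdneg : ∀ x, 0 < x → H x < 0 → deriv (fun y => R' y / ψ' y) x < 0 := by
    intro x hx hneg
    rw [hKey x hx]
    exact mul_neg_of_pos_of_neg (hKpos x hx) hneg
  have hdpos : ∀ x, 0 < x → 0 < H x → 0 < deriv (fun y => R' y / ψ' y) x := by
    intro x hx hpos
    rw [hKey x hx]
    exact mul_pos (hKpos x hx) hpos

  -- bounds from R/ψ → 0
  have habove : ∀ c a, 0 < a → (∀ x, a ≤ x → c ≤ R' x / ψ' x) → c ≤ 0 := by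
    intro c a ha hc
    have hstep : ∀ x, a ≤ x → R a + c * (ψ x - ψ a) ≤ R x := by
      intro x hax
      have hsub : uIcc a x ⊆ Ioi (0:ℝ) := huIcc a ha x (lt_of_lt_of_le ha hax)
      have hR : (∫ t in a..x, R' t) = R x - R a :=
        intervalIntegral.integral_eq_sub_of_hasDerivAt (fun t ht => hRderiv t (hsub ht))
          ((hR'c.mono hsub).intervalIntegrable)
      have hψeq : (∫ t in a..x, ψ' t) = ψ x - ψ a :=
        intervalIntegral.integral_eq_sub_of_hasDerivAt (fun t ht => hψ1 t (hsub ht))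
          ((hψ'c.mono hsub).intervalIntegrable)
      have hmono : (∫ t in a..x, c * ψ' t) ≤ ∫ t in a..x, R' t := by
        apply intervalIntegral.integral_mono_on hax
          ((continuousOn_const.mul (hψ'c.mono hsub)).intervalIntegrable)
          ((hR'c.mono hsub).intervalIntegrable)
        intro t ht
        have ht0 : t ∈ Ioi (0:ℝ) := lt_of_lt_of_le ha ht.1
        have hψ't : 0 < ψ' t := hψ'pos t ht0
        have h := hc t ht.1
        rw [le_div_iff₀ hψ't] at h
        simp only [Pi.mul_apply]
        linarith
      rw [intervalIntegral.integral_const_mul, hψeq, hR] at hmono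
      linarith
    have hev : ∀ᶠ x in atTop, c + (R a - c * ψ a) / ψ x ≤ R x / ψ x := by
      filter_upwards [eventually_ge_atTop a, hψT.eventually_gt_atTop 0] with x hax hψx
      rw [← sub_nonneg]
      have heq2 : R x / ψ x - (c + (R a - c * ψ a) / ψ x)
          = (R x - (R a + c * (ψ x - ψ a))) / ψ x := by
        field_simp
        ring
      rw [heq2]
      exact div_nonneg (by linarith [hstep x hax]) hψx.le
    have hT : Tendsto (fun x => c + (R a - c * ψ a) / ψ x) atTop (𝓝 (c + 0)) :=
      tendsto_const_nhds.add (Tendsto.div_atTop tendsto_const_nhds hψT)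
    rw [add_zero] at hT
    exact le_of_tendsto_of_tendsto hT hRψT hev
  have hbelow : ∀ c a, 0 < a → (∀ x, a ≤ x → R' x / ψ' x ≤ c) → 0 ≤ c := by
    intro c a ha hc
    have hstep : ∀ x, a ≤ x → R x ≤ R a + c * (ψ x - ψ a) := by
      intro x hax
      have hsub : uIcc a x ⊆ Ioi (0:ℝ) := huIcc a ha x (lt_of_lt_of_le ha hax)
      have hR : (∫ t in a..x, R' t) = R x - R a :=
        intervalIntegral.integral_eq_sub_of_hasDerivAt (fun t ht => hRderiv t (hsub ht))
          ((hR'c.mono hsub).intervalIntegrable)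
      have hψeq : (∫ t in a..x, ψ' t) = ψ x - ψ a :=
        intervalIntegral.integral_eq_sub_of_hasDerivAt (fun t ht => hψ1 t (hsub ht))
          ((hψ'c.mono hsub).intervalIntegrable)
      have hmono : (∫ t in a..x, R' t) ≤ ∫ t in a..x, c * ψ' t := by
        apply intervalIntegral.integral_mono_on hax
          ((hR'c.mono hsub).intervalIntegrable)
          ((continuousOn_const.mul (hψ'c.mono hsub)).intervalIntegrable)
        intro t ht
        have ht0 : t ∈ Ioi (0:ℝ) := lt_of_lt_of_le ha ht.1
        have hψ't : 0 < ψ' t := hψ'pos t ht0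
        have h := hc t ht.1
        rw [div_le_iff₀ hψ't] at h
        simp only [Pi.mul_apply]
        linarith
      rw [intervalIntegral.integral_const_mul, hψeq, hR] at hmono
      linarith
    have hev : ∀ᶠ x in atTop, R x / ψ x ≤ c + (R a - c * ψ a) / ψ x := by
      filter_upwards [eventually_ge_atTop a, hψT.eventually_gt_atTop 0] with x hax hψx
      rw [← sub_nonneg]
      have heq2 : c + (R a - c * ψ a) / ψ x - R x / ψ x
          = ((R a + c * (ψ x - ψ a)) - R x) / ψ x := by
        field_simp
        ring
      rw [heq2]
      exact div_nonneg (by linarith [hstep x hax]) hψx.le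
    have hT : Tendsto (fun x => c + (R a - c * ψ a) / ψ x) atTop (𝓝 (c + 0)) :=
      tendsto_const_nhds.add (Tendsto.div_atTop tendsto_const_nhds hψT)
    rw [add_zero] at hT
    exact le_of_tendsto_of_tendsto hRψT hT hev
  -- main construction
  have main : (∃ w : EReal, (ξ : EReal) < w ∧
      (∀ x : ℝ, 0 < x → (x : EReal) < w → deriv (fun y => R' y / ψ' y) x < 0) ∧
      (∀ x : ℝ, w < (x : EReal) → 0 < deriv (fun y => R' y / ψ' y) x)) ∧
      Tendsto (fun x => R' x / ψ' x) atTop (𝓝 0) := by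
    by_cases hcase : ∃ x, ξ < x ∧ 0 ≤ H x
    · -- crossing exists
      obtain ⟨x1, hx1ξ, hx1H⟩ := hcase
      have hSne : {x : ℝ | ξ < x ∧ 0 ≤ H x}.Nonempty := ⟨x1, hx1ξ, hx1H⟩
      have hSbd : BddBelow {x : ℝ | ξ < x ∧ 0 ≤ H x} := ⟨ξ, fun y hy => hy.1.le⟩
      obtain ⟨xm, hxm⟩ : ∃ xm : ℝ, xm = sInf {x : ℝ | ξ < x ∧ 0 ≤ H x} := ⟨_, rfl⟩
      have hxmlb : ∀ s, ξ < s → 0 ≤ H s → xm ≤ s := fun s h1 h2 =>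
        hxm ▸ csInf_le hSbd ⟨h1, h2⟩
      have hξxm : ξ ≤ xm := hxm ▸ le_csInf hSne fun s hs => hs.1.le
      have hxm0 : (0:ℝ) < xm := hξ.trans_le hξxm
      have hHxm : 0 ≤ H xm := by
        by_contra hneg
        push_neg at hneg
        have hca : ContinuousAt H xm := hHc.continuousAt (hopen.mem_nhds hxm0)
        have hev : ∀ᶠ y in 𝓝 xm, H y < 0 := hca (Iio_mem_nhds hneg)
        obtain ⟨δ, hδ, hball⟩ := Metric.eventually_nhds_iff.mp hev
        have hlb : xm + δ/2 ≤ xm := by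
          rw [hxm]
          apply le_csInf hSne
          intro s hs
          by_contra hlt2
          push_neg at hlt2
          have hs_ge : xm ≤ s := hxmlb s hs.1 hs.2
          have hd : dist s xm < δ := by
            rw [Real.dist_eq, abs_lt]
            constructor <;> [linarith; linarith]
          exact absurd hs.2 (not_le.mpr (hball hd))
        linarith
      have hξltxm : ξ < xm := by
        rcases eq_or_lt_of_le hξxm with heq | hlt'
        · exfalso
          have := hHneg ξ ⟨hξ, le_rfl⟩
          rw [heq] at this
          linarith
        · exact hlt'
      have hP : (ξ : EReal) < (xm : EReal) ∧
          (∀ x : ℝ, 0 < x → (x : EReal) < (xm : EReal) → deriv (fun y => R' y / ψ' y) x < 0) ∧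
          (∀ x : ℝ, (xm : EReal) < (x : EReal) → 0 < deriv (fun y => R' y / ψ' y) x) := by
        refine ⟨by exact_mod_cast hξltxm, ?_, ?_⟩
        · intro x hx0 hxlt
          have hxlt' : x < xm := by exact_mod_cast hxlt
          apply hdneg x hx0
          rcases le_or_gt x ξ with hle | hgt
          · exact hHneg x ⟨hx0, hle⟩
          · by_contra hge
            push_neg at hge
            exact absurd (hxmlb x hgt hge) (not_le.mpr hxlt')
        · intro x hxlt
          have hxlt' : xm < x := by exact_mod_cast hxlt
          exact hdpos x (hxm0.trans hxlt') (lt_of_le_of_lt hHxm (hHmono xm x hξxm hxlt'))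
      refine ⟨⟨(xm : EReal), hP⟩, ?_⟩
      -- g strictly increasing on [xm, ∞), g ≤ 0 there, and sup = 0
      have hgmono : StrictMonoOn (fun y => R' y / ψ' y) (Ici xm) := by
        apply strictMonoOn_of_deriv_pos (convex_Ici xm)
        · intro y hy
          exact ((hgderiv y (lt_of_lt_of_le hxm0 hy)).continuousAt).continuousWithinAt
        · intro y hy
          rw [interior_Ici] at hy
          exact hP.2.2 y (by exact_mod_cast hy)
      have hle0 : ∀ t, xm ≤ t → R' t / ψ' t ≤ 0 := by
        intro t ht
        apply habove _ t (lt_of_lt_of_le hxm0 ht)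
        intro x hx
        rcases eq_or_lt_of_le hx with heq | hlt'
        · rw [← heq]
        · exact (hgmono ht (ht.trans hx) hlt').le
      rw [Metric.tendsto_atTop]
      intro e he
      have hex : ∃ t, xm ≤ t ∧ -e < R' t / ψ' t := by
        by_contra hno
        push_neg at hno
        have := hbelow (-e) xm hxm0 fun x hx => hno x hx
        linarith
      obtain ⟨t, hxt, hte⟩ := hex
      refine ⟨t, fun n hn => ?_⟩
      have h1 : R' t / ψ' t ≤ R' n / ψ' n := by
        rcases eq_or_lt_of_le hn with heq | hlt'
        · rw [heq]
        · exact (hgmono hxt (hxt.trans hn) hlt').le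
      have h2 : R' n / ψ' n ≤ 0 := hle0 n (hxt.trans hn)
      rw [Real.dist_eq, sub_zero, abs_lt]
      constructor <;> [linarith; linarith]
    · -- no crossing : H < 0 everywhere
      push_neg at hcase
      have hHall : ∀ x, 0 < x → H x < 0 := by
        intro x hx0
        rcases le_or_gt x ξ with hle | hgt
        · exact hHneg x ⟨hx0, hle⟩
        · exact hcase x hgt
      refine ⟨⟨(⊤ : EReal), EReal.coe_lt_top ξ, fun x hx0 _ => hdneg x hx0 (hHall x hx0),
        fun x hx => absurd hx not_top_lt⟩, ?_⟩
      have hganti : StrictAntiOn (fun y => R' y / ψ' y) (Ici (1:ℝ)) := by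
        apply strictAntiOn_of_deriv_neg (convex_Ici 1)
        · intro y hy
          exact ((hgderiv y (lt_of_lt_of_le (one_pos : (0:ℝ) < 1) hy : (0:ℝ) < y)).continuousAt).continuousWithinAt
        · intro y hy
          rw [interior_Ici] at hy
          have hy0 : (0:ℝ) < y := lt_trans one_pos hy
          exact hdneg y hy0 (hHall y hy0)
      have hge0 : ∀ t, 1 ≤ t → 0 ≤ R' t / ψ' t := by
        intro t ht
        apply hbelow _ t (lt_of_lt_of_le one_pos ht)
        intro x hx
        rcases eq_or_lt_of_le hx with heq | hlt'
        · rw [← heq]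
        · exact (hganti ht (ht.trans hx) hlt').le
      rw [Metric.tendsto_atTop]
      intro e he
      have hex : ∃ t, 1 ≤ t ∧ R' t / ψ' t < e := by
        by_contra hno
        push_neg at hno
        have := habove e 1 one_pos fun x hx => hno x hx
        linarith
      obtain ⟨t, hxt, hte⟩ := hex
      refine ⟨t, fun n hn => ?_⟩
      have h1 : R' n / ψ' n ≤ R' t / ψ' t := by
        rcases eq_or_lt_of_le hn with heq | hlt'
        · rw [heq]
        · exact (hganti hxt (hxt.trans hn) hlt').le
      have h2 : 0 ≤ R' n / ψ' n := hge0 n (hxt.trans hn)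
      rw [Real.dist_eq, sub_zero, abs_lt]
      constructor <;> [linarith; linarith]
  -- uniqueness
  have huniq : ∀ u v : EReal,
      ((ξ : EReal) < u ∧
        (∀ x : ℝ, 0 < x → (x : EReal) < u → deriv (fun y => R' y / ψ' y) x < 0) ∧
        (∀ x : ℝ, u < (x : EReal) → 0 < deriv (fun y => R' y / ψ' y) x)) →
      ((ξ : EReal) < v ∧
        (∀ x : ℝ, 0 < x → (x : EReal) < v → deriv (fun y => R' y / ψ' y) x < 0) ∧
        (∀ x : ℝ, v < (x : EReal) → 0 < deriv (fun y => R' y / ψ' y) x)) →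
      u = v := by
    have key : ∀ u v : EReal,
        ((ξ : EReal) < u ∧
          (∀ x : ℝ, 0 < x → (x : EReal) < u → deriv (fun y => R' y / ψ' y) x < 0) ∧
          (∀ x : ℝ, u < (x : EReal) → 0 < deriv (fun y => R' y / ψ' y) x)) →
        ((ξ : EReal) < v ∧
          (∀ x : ℝ, 0 < x → (x : EReal) < v → deriv (fun y => R' y / ψ' y) x < 0) ∧
          (∀ x : ℝ, v < (x : EReal) → 0 < deriv (fun y => R' y / ψ' y) x)) →
        ¬ u < v := by
      intro u v hu hv hlt
      obtain ⟨z, hz1, hz2⟩ := EReal.exists_between_coe_real hlt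
      have hz0 : (0:ℝ) < z := by
        have h1 : (ξ : EReal) < (z : EReal) := hu.1.trans hz1
        have h2 : ξ < z := by exact_mod_cast h1
        linarith
      have h3 := hu.2.2 z hz1
      have h4 := hv.2.1 z hz0 hz2
      linarith
    intro u v hu hv
    rcases lt_trichotomy u v with h | h | h
    · exact absurd h (key u v hu hv)
    · exact h
    · exact absurd h (key v u hv hu)
  obtain ⟨⟨w, hw⟩, hT⟩ := main
  exact ⟨⟨w, hw, fun y hy => huniq y w hy hw⟩, hT⟩
end

section
/- Assume lim_{x↓0} ψ'(x)/p'(x) = 0, lim_{x↑∞} ψ(x) = ∞, and lim_{x↑∞} R_Θ(x)/ψ(x) = 0, and let x̲ ∈ (ξ, ∞] be the unique point such that the derivative of R_Θ'/ψ' is strictly negative on (0, x̲) and strictly positive on (x̲, ∞). Then: (a) the limit lim_{x↑∞} Q_Θ(x) exists in the extended reals, and x̲ < ∞ if and only if lim_{x↑∞} Q_Θ(x) > 0; (b) if lim_{x↑∞} Θ(x)/r(x) = −∞, then x̲ < ∞; (c) if the (monotone) limits lim_{x↓0} Θ(x)/r(x) and lim_{x↑∞} Θ(x)/r(x) satisfy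 lim_{x↓0} Θ(x)/r(x) > lim_{x↑∞} Θ(x)/r(x), then x̲ < ∞. -/
open Filter Set MeasureTheory Topology

set_option maxHeartbeats 1000000 in
theorem stmt_11
    (b σ r : ℝ → ℝ) (r₀ r₁ : ℝ)
    (hbc : ContinuousOn b (Ioi 0))
    (hσc : ContinuousOn σ (Ioi 0))
    (hrc : ContinuousOn r (Ioi 0))
    (hσpos : ∀ x ∈ Ioi (0:ℝ), 0 < σ x)
    (hr₀ : 0 < r₀) (hr₀₁ : r₀ ≤ r₁)
    (hrbd : ∀ x ∈ Ioi (0:ℝ), r₀ ≤ r x ∧ r x ≤ r₁)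
    (p' : ℝ → ℝ)
    (hp' : ∀ x ∈ Ioi (0:ℝ), p' x = Real.exp (-(2:ℝ) * ∫ s in (1:ℝ)..x, b s / (σ s) ^ 2))
    (φ ψ φ' ψ' φ'' ψ'' : ℝ → ℝ)
    (hφ1 : ∀ x ∈ Ioi (0:ℝ), HasDerivAt φ (φ' x) x)
    (hφ2 : ∀ x ∈ Ioi (0:ℝ), HasDerivAt φ' (φ'' x) x)
    (hφ2c : ContinuousOn φ'' (Ioi 0))
    (hψ1 : ∀ x ∈ Ioi (0:ℝ), HasDerivAt ψ (ψ' x) x)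
    (hψ2 : ∀ x ∈ Ioi (0:ℝ), HasDerivAt ψ' (ψ'' x) x)
    (hψ2c : ContinuousOn ψ'' (Ioi 0))
    (hφpos : ∀ x ∈ Ioi (0:ℝ), 0 < φ x)
    (hφ'neg : ∀ x ∈ Ioi (0:ℝ), φ' x < 0)
    (hψpos : ∀ x ∈ Ioi (0:ℝ), 0 < ψ x)
    (hψ'pos : ∀ x ∈ Ioi (0:ℝ), 0 < ψ' x)
    (hφODE : ∀ x ∈ Ioi (0:ℝ), (1/2) * σ x ^ 2 * φ'' x + b x * φ' x - r x * φ x = 0)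
    (hψODE : ∀ x ∈ Ioi (0:ℝ), (1/2) * σ x ^ 2 * ψ'' x + b x * ψ' x - r x * ψ x = 0)
    (C : ℝ) (hC : 0 < C)
    (hWr : ∀ x ∈ Ioi (0:ℝ), φ x * ψ' x - φ' x * ψ x = C * p' x)
    (Ψ Φ : ℝ → ℝ)
    (hΨ : ∀ x ∈ Ioi (0:ℝ), Ψ x = 2 * ψ x / (C * σ x ^ 2 * p' x))
    (hΦ : ∀ x ∈ Ioi (0:ℝ), Φ x = 2 * φ x / (C * σ x ^ 2 * p' x))
    (Θ : ℝ → ℝ) (hΘc : ContinuousOn Θ (Ioi 0))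
    (hΘIC : ∀ x ∈ Ioi (0:ℝ),
      IntegrableOn (fun s => Θ s * Ψ s) (Ioc 0 x) ∧
      IntegrableOn (fun s => Θ s * Φ s) (Ioi x))
    (ξ : ℝ) (hξ : 0 < ξ)
    (hΘinc : StrictMonoOn (fun x => Θ x / r x) (Ioo 0 ξ))
    (hΘdec : StrictAntiOn (fun x => Θ x / r x) (Ioi ξ))
    (R R' : ℝ → ℝ)
    (hRdef : ∀ x ∈ Ioi (0:ℝ),
      R x = φ x * (∫ s in Ioc (0:ℝ) x, Θ s * Ψ s) + ψ x * (∫ s in Ioi x, Θ s * Φ s))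
    (hR'def : ∀ x ∈ Ioi (0:ℝ),
      R' x = φ' x * (∫ s in Ioc (0:ℝ) x, Θ s * Ψ s) + ψ' x * (∫ s in Ioi x, Θ s * Φ s))
    (hψ'p'0 : Tendsto (fun x => ψ' x / p' x) (𝓝[>] (0:ℝ)) (𝓝 0))
    (hψT : Tendsto ψ atTop atTop)
    (hRψT : Tendsto (fun x => R x / ψ x) atTop (𝓝 0))
    (xl : EReal) (hxlξ : (ξ : EReal) < xl)
    (hxl1 : ∀ x : ℝ, 0 < x → (x : EReal) < xl → deriv (fun y => R' y / ψ' y) x < 0)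
    (hxl2 : ∀ x : ℝ, xl < (x : EReal) → 0 < deriv (fun y => R' y / ψ' y) x)
    (Q : ℝ → ℝ)
    (hQdef : ∀ x ∈ Ioi (0:ℝ),
      Q x = (∫ s in Ioc (0:ℝ) x, Θ s * Ψ s) - Θ x / r x * (ψ' x / (C * p' x))) :
    (∃ L : EReal, Tendsto (fun x => ((Q x : ℝ) : EReal)) atTop (𝓝 L) ∧
      (xl ≠ ⊤ ↔ 0 < L)) ∧
    (Tendsto (fun x => Θ x / r x) atTop atBot → xl ≠ ⊤) ∧
    (∀ L0 Loo : EReal,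
      Tendsto (fun x => ((Θ x / r x : ℝ) : EReal)) (𝓝[>] (0:ℝ)) (𝓝 L0) →
      Tendsto (fun x => ((Θ x / r x : ℝ) : EReal)) atTop (𝓝 Loo) →
      Loo < L0 → xl ≠ ⊤) := by
  have hIoi : IsOpen (Ioi (0:ℝ)) := isOpen_Ioi
  have hp'pos : ∀ x ∈ Ioi (0:ℝ), 0 < p' x := fun x hx => by
    rw [hp' x hx]; exact Real.exp_pos _
  have hσ2pos : ∀ x ∈ Ioi (0:ℝ), 0 < σ x ^ 2 := fun x hx => pow_pos (hσpos x hx) 2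
  have hrpos : ∀ x ∈ Ioi (0:ℝ), 0 < r x := fun x hx => lt_of_lt_of_le hr₀ (hrbd x hx).1
  -- derivative of the scale density
  have hp'deriv : ∀ x ∈ Ioi (0:ℝ), HasDerivAt p' (-(2 * b x / σ x ^ 2) * p' x) x := by
    intro x hx
    have hbσc : ContinuousOn (fun s => b s / σ s ^ 2) (Ioi 0) :=
      hbc.div (hσc.pow 2) (fun s hs => (hσ2pos s hs).ne')
    have hbσca : ∀ y ∈ Ioi (0:ℝ), ContinuousAt (fun s => b s / σ s ^ 2) y := fun y hy =>
      hbσc.continuousAt (hIoi.mem_nhds hy)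
    have hP : HasDerivAt (fun y => ∫ s in (1:ℝ)..y, b s / σ s ^ 2) (b x / σ x ^ 2) x := by
      apply intervalIntegral.integral_hasDerivAt_right
      · apply (hbσc.mono _).intervalIntegrable
        intro s hs
        have h1 : min 1 x ≤ s := hs.1
        have h2 : (0:ℝ) < min 1 x := lt_min one_pos hx
        exact lt_of_lt_of_le h2 h1
      · exact ContinuousAt.stronglyMeasurableAtFilter hIoi hbσca x hx
      · exact hbσca x hx
    have h2 : HasDerivAt (fun y => Real.exp (-(2:ℝ) * ∫ s in (1:ℝ)..y, b s / σ s ^ 2))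
        (Real.exp (-(2:ℝ) * ∫ s in (1:ℝ)..x, b s / σ s ^ 2) * (-(2:ℝ) * (b x / σ x ^ 2))) x :=
      (hP.const_mul (-(2:ℝ))).exp
    have heq : p' =ᶠ[𝓝 x] fun y => Real.exp (-(2:ℝ) * ∫ s in (1:ℝ)..y, b s / σ s ^ 2) :=
      Filter.eventually_of_mem (hIoi.mem_nhds hx) (fun y hy => hp' y hy)
    have h3 := h2.congr_of_eventuallyEq heq
    rw [show -(2 * b x / σ x ^ 2) * p' x = Real.exp (-(2:ℝ) * ∫ s in (1:ℝ)..x, b s / σ s ^ 2) * (-(2:ℝ) * (b x / σ x ^ 2)) by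
      rw [hp' x hx]; ring]
    exact h3
  -- continuity facts
  have hφca : ∀ x ∈ Ioi (0:ℝ), ContinuousAt φ x := fun x hx => (hφ1 x hx).continuousAt
  have hψca : ∀ x ∈ Ioi (0:ℝ), ContinuousAt ψ x := fun x hx => (hψ1 x hx).continuousAt
  have hp'ca : ∀ x ∈ Ioi (0:ℝ), ContinuousAt p' x := fun x hx => (hp'deriv x hx).continuousAt
  have hψcon : ContinuousOn ψ (Ioi 0) := fun x hx => (hψca x hx).continuousWithinAt
  have hφcon : ContinuousOn φ (Ioi 0) := fun x hx => (hφca x hx).continuousWithinAt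
  have hp'con : ContinuousOn p' (Ioi 0) := fun x hx => (hp'ca x hx).continuousWithinAt
  have hdenomne : ∀ x ∈ Ioi (0:ℝ), C * σ x ^ 2 * p' x ≠ 0 := fun x hx =>
    (mul_pos (mul_pos hC (hσ2pos x hx)) (hp'pos x hx)).ne'
  have hΨc : ContinuousOn Ψ (Ioi 0) := by
    apply ContinuousOn.congr (f := fun x => 2 * ψ x / (C * σ x ^ 2 * p' x))
    · exact (continuousOn_const.mul hψcon).div
        ((continuousOn_const.mul (hσc.pow 2)).mul hp'con) hdenomne
    · intro x hx; exact hΨ x hx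
  have hΦc : ContinuousOn Φ (Ioi 0) := by
    apply ContinuousOn.congr (f := fun x => 2 * φ x / (C * σ x ^ 2 * p' x))
    · exact (continuousOn_const.mul hφcon).div
        ((continuousOn_const.mul (hσc.pow 2)).mul hp'con) hdenomne
    · intro x hx; exact hΦ x hx
  have hΨpos : ∀ x ∈ Ioi (0:ℝ), 0 < Ψ x := fun x hx => by
    rw [hΨ x hx]
    have h1 := hψpos x hx
    have h2 := mul_pos (mul_pos hC (hσ2pos x hx)) (hp'pos x hx)
    positivity
  have hfc : ContinuousOn (fun s => Θ s * Ψ s) (Ioi 0) := hΘc.mul hΨc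
  have hfBc : ContinuousOn (fun s => Θ s * Φ s) (Ioi 0) := hΘc.mul hΦc
  -- second derivatives via the ODEs
  have e1 : ∀ x ∈ Ioi (0:ℝ), φ'' x = (2 * r x * φ x - 2 * b x * φ' x) / σ x ^ 2 := by
    intro x hx
    have hode := hφODE x hx
    have hσ2 : σ x ^ 2 ≠ 0 := (hσ2pos x hx).ne'
    rw [eq_div_iff hσ2]
    linear_combination (2:ℝ) * hode
  have e2 : ∀ x ∈ Ioi (0:ℝ), ψ'' x = (2 * r x * ψ x - 2 * b x * ψ' x) / σ x ^ 2 := by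
    intro x hx
    have hode := hψODE x hx
    have hσ2 : σ x ^ 2 ≠ 0 := (hσ2pos x hx).ne'
    rw [eq_div_iff hσ2]
    linear_combination (2:ℝ) * hode
  -- the auxiliary functions
  set g : ℝ → ℝ := fun x => Θ x / r x with hgdef
  set h : ℝ → ℝ := fun x => ψ' x / (C * p' x) with hhdef
  set A : ℝ → ℝ := fun x => ∫ s in Ioc (0:ℝ) x, Θ s * Ψ s with hAdef
  set B : ℝ → ℝ := fun x => ∫ s in Ioi x, Θ s * Φ s with hBdef
  have hQeq : ∀ x ∈ Ioi (0:ℝ), Q x = A x - g x * h x := by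
    intro x hx
    simp only [hAdef, hgdef, hhdef]
    exact hQdef x hx
  have hhpos : ∀ x ∈ Ioi (0:ℝ), 0 < h x := fun x hx =>
    div_pos (hψ'pos x hx) (mul_pos hC (hp'pos x hx))
  -- derivative of h
  have hhderiv : ∀ x ∈ Ioi (0:ℝ), HasDerivAt h (r x * Ψ x) x := by
    intro x hx
    have hden : C * p' x ≠ 0 := (mul_pos hC (hp'pos x hx)).ne'
    have hd : HasDerivAt h
        ((ψ'' x * (C * p' x) - ψ' x * (C * (-(2 * b x / σ x ^ 2) * p' x))) / (C * p' x) ^ 2) x :=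
      (hψ2 x hx).div ((hp'deriv x hx).const_mul C) hden
    convert hd using 1
    rw [hΨ x hx, e2 x hx]
    have hσ2 : σ x ^ 2 ≠ 0 := (hσ2pos x hx).ne'
    have hp'ne : p' x ≠ 0 := (hp'pos x hx).ne'
    have hCne : C ≠ 0 := hC.ne'
    field_simp
    ring
  -- splitting lemmas for A and B
  have hIocInt : ∀ x y : ℝ, 0 < x → IntegrableOn (fun s => Θ s * Ψ s) (Ioc x y) := by
    intro x y hx
    rcases le_or_gt x y with hxy | hxy
    · exact ((hfc.mono (fun s hs => lt_of_lt_of_le hx hs.1 : Icc x y ⊆ Ioi 0)).integrableOn_Icc).mono_set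
        Ioc_subset_Icc_self
    · rw [Ioc_eq_empty (not_lt.2 hxy.le)]; exact integrableOn_empty
  have hIocIntB : ∀ x y : ℝ, 0 < x → IntegrableOn (fun s => Θ s * Φ s) (Ioc x y) := by
    intro x y hx
    rcases le_or_gt x y with hxy | hxy
    · exact ((hfBc.mono (fun s hs => lt_of_lt_of_le hx hs.1 : Icc x y ⊆ Ioi 0)).integrableOn_Icc).mono_set
        Ioc_subset_Icc_self
    · rw [Ioc_eq_empty (not_lt.2 hxy.le)]; exact integrableOn_empty
  have hAsplit : ∀ x y : ℝ, 0 < x → x ≤ y → A y = A x + ∫ s in x..y, Θ s * Ψ s := by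
    intro x y hx hxy
    simp only [hAdef]
    rw [intervalIntegral.integral_of_le hxy,
      ← setIntegral_union (Ioc_disjoint_Ioc_of_le le_rfl) measurableSet_Ioc
        (hΘIC x hx).1 (hIocInt x y hx),
      Ioc_union_Ioc_eq_Ioc hx.le hxy]
  have hBsplit : ∀ x y : ℝ, 0 < x → x ≤ y → B x = (∫ s in x..y, Θ s * Φ s) + B y := by
    intro x y hx hxy
    have hy : (0:ℝ) < y := lt_of_lt_of_le hx hxy
    simp only [hBdef]
    have hdisj : Disjoint (Ioc x y) (Ioi y) := by
      rw [Set.disjoint_left]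
      intro s hs hs'
      exact absurd (mem_Ioi.1 hs') (not_lt.2 hs.2)
    rw [intervalIntegral.integral_of_le hxy,
      ← setIntegral_union hdisj measurableSet_Ioi (hIocIntB x y hx) (hΘIC y hy).2,
      Ioc_union_Ioi_eq_Ioi hxy]
  -- derivative of A
  have hAderiv : ∀ x ∈ Ioi (0:ℝ), HasDerivAt A (Θ x * Ψ x) x := by
    intro x hx
    have hx0 : (0:ℝ) < x := hx
    have hx2 : (0:ℝ) < x / 2 := by linarith
    have hG : HasDerivAt (fun y => ∫ s in (x/2)..y, Θ s * Ψ s) (Θ x * Ψ x) x := by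
      apply intervalIntegral.integral_hasDerivAt_right
      · apply (hfc.mono _).intervalIntegrable
        intro s hs
        have h1 : min (x/2) x ≤ s := hs.1
        have h2 : (0:ℝ) < min (x/2) x := lt_min hx2 hx0
        exact lt_of_lt_of_le h2 h1
      · exact ContinuousAt.stronglyMeasurableAtFilter hIoi
          (fun y hy => hfc.continuousAt (hIoi.mem_nhds hy)) x hx
      · exact hfc.continuousAt (hIoi.mem_nhds hx)
    have heq : A =ᶠ[𝓝 x] fun y => A (x/2) + ∫ s in (x/2)..y, Θ s * Ψ s := by
      apply Filter.eventually_of_mem (isOpen_Ioi.mem_nhds (show x ∈ Ioi (x/2) by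
        simp only [mem_Ioi]; linarith))
      intro y hy
      exact hAsplit (x/2) y hx2 (le_of_lt hy)
    exact (hG.const_add (A (x/2))).congr_of_eventuallyEq heq
  -- derivative of B
  have hBderiv : ∀ x ∈ Ioi (0:ℝ), HasDerivAt B (-(Θ x * Φ x)) x := by
    intro x hx
    have hx0 : (0:ℝ) < x := hx
    have hx2 : (0:ℝ) < x / 2 := by linarith
    have hG : HasDerivAt (fun y => ∫ s in (x/2)..y, Θ s * Φ s) (Θ x * Φ x) x := by
      apply intervalIntegral.integral_hasDerivAt_right
      · apply (hfBc.mono _).intervalIntegrable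
        intro s hs
        have h1 : min (x/2) x ≤ s := hs.1
        have h2 : (0:ℝ) < min (x/2) x := lt_min hx2 hx0
        exact lt_of_lt_of_le h2 h1
      · exact ContinuousAt.stronglyMeasurableAtFilter hIoi
          (fun y hy => hfBc.continuousAt (hIoi.mem_nhds hy)) x hx
      · exact hfBc.continuousAt (hIoi.mem_nhds hx)
    have heq : B =ᶠ[𝓝 x] fun y => B (x/2) - ∫ s in (x/2)..y, Θ s * Φ s := by
      apply Filter.eventually_of_mem (isOpen_Ioi.mem_nhds (show x ∈ Ioi (x/2) by
        simp only [mem_Ioi]; linarith))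
      intro y hy
      have hsp := hBsplit (x/2) y hx2 (le_of_lt hy)
      linarith
    exact (hG.const_sub (B (x/2))).congr_of_eventuallyEq heq
  -- Wronskian-type scalar identities
  have w1 : ∀ x ∈ Ioi (0:ℝ),
      φ'' x * ψ' x - φ' x * ψ'' x = 2 * r x / σ x ^ 2 * (C * p' x) := by
    intro x hx
    rw [e1 x hx, e2 x hx]
    have hσ2 : σ x ^ 2 ≠ 0 := (hσ2pos x hx).ne'
    have hW := hWr x hx
    linear_combination (2 * r x / σ x ^ 2) * hW
  have w2 : ∀ x ∈ Ioi (0:ℝ),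
      φ' x * Ψ x - ψ' x * Φ x = -(2 / σ x ^ 2) := by
    intro x hx
    rw [hΨ x hx, hΦ x hx]
    have hσ2 : σ x ^ 2 ≠ 0 := (hσ2pos x hx).ne'
    have hp'ne : p' x ≠ 0 := (hp'pos x hx).ne'
    have hCne : C ≠ 0 := hC.ne'
    have hW := hWr x hx
    have hstep : φ' x * (2 * ψ x / (C * σ x ^ 2 * p' x)) - ψ' x * (2 * φ x / (C * σ x ^ 2 * p' x))
        = (2 * (φ' x * ψ x - ψ' x * φ x)) / (C * σ x ^ 2 * p' x) := by ring
    have h3 : φ' x * ψ x - ψ' x * φ x = -(C * p' x) := by linarith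
    rw [hstep, h3]
    field_simp
  -- the key derivative identity
  have hderivQ : ∀ x ∈ Ioi (0:ℝ), deriv (fun y => R' y / ψ' y) x
      = (2 * r x * C * p' x / (σ x ^ 2 * (ψ' x) ^ 2)) * Q x := by
    intro x hx
    have hψ'ne : ψ' x ≠ 0 := (hψ'pos x hx).ne'
    have hN : HasDerivAt (fun y => φ' y * A y + ψ' y * B y)
        (φ'' x * A x + φ' x * (Θ x * Ψ x) + (ψ'' x * B x + ψ' x * -(Θ x * Φ x))) x :=
      ((hφ2 x hx).mul (hAderiv x hx)).add ((hψ2 x hx).mul (hBderiv x hx))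
    have heqR' : R' =ᶠ[𝓝 x] fun y => φ' y * A y + ψ' y * B y := by
      apply Filter.eventually_of_mem (hIoi.mem_nhds hx)
      intro y hy
      rw [hR'def y hy]
    have hN' : HasDerivAt R'
        (φ'' x * A x + φ' x * (Θ x * Ψ x) + (ψ'' x * B x + ψ' x * -(Θ x * Φ x))) x :=
      hN.congr_of_eventuallyEq heqR'
    have hD : HasDerivAt (fun y => R' y / ψ' y)
        (((φ'' x * A x + φ' x * (Θ x * Ψ x) + (ψ'' x * B x + ψ' x * -(Θ x * Φ x))) * ψ' x
          - R' x * ψ'' x) / (ψ' x) ^ 2) x := hN'.div (hψ2 x hx) hψ'ne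
    have hR'x : R' x = φ' x * A x + ψ' x * B x := by
      rw [hR'def x hx]
    rw [hD.deriv, hR'x, hQeq x hx]
    have hnum : (φ'' x * A x + φ' x * (Θ x * Ψ x) + (ψ'' x * B x + ψ' x * -(Θ x * Φ x))) * ψ' x
        - (φ' x * A x + ψ' x * B x) * ψ'' x
        = (2 * r x / σ x ^ 2 * (C * p' x)) * A x - (2 / σ x ^ 2) * (Θ x * ψ' x) := by
      linear_combination A x * w1 x hx + (Θ x * ψ' x) * w2 x hx
    rw [hnum]
    have hσ2 : σ x ^ 2 ≠ 0 := (hσ2pos x hx).ne'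
    have hp'ne : p' x ≠ 0 := (hp'pos x hx).ne'
    have hCne : C ≠ 0 := hC.ne'
    have hrne : r x ≠ 0 := (hrpos x hx).ne'
    simp only [hgdef, hhdef]
    field_simp
  -- sign of Q from the sign of the derivative
  have hkpos : ∀ x ∈ Ioi (0:ℝ), 0 < 2 * r x * C * p' x / (σ x ^ 2 * (ψ' x) ^ 2) := by
    intro x hx
    have h1 := hrpos x hx
    have h2 := hp'pos x hx
    have h3 := hσ2pos x hx
    have h4 := hψ'pos x hx
    positivity
  have hQneg : ∀ x : ℝ, 0 < x → (x : EReal) < xl → Q x < 0 := by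
    intro x hx hlt
    have hd := hxl1 x hx hlt
    rw [hderivQ x hx] at hd
    have hk := hkpos x hx
    nlinarith
  have hQpos : ∀ x : ℝ, xl < (x : EReal) → 0 < Q x := by
    intro x hlt
    have hξx : ξ < x := by exact_mod_cast hxlξ.trans hlt
    have hx : (0:ℝ) < x := hξ.trans hξx
    have hd := hxl2 x hlt
    rw [hderivQ x hx] at hd
    have hk := hkpos x hx
    nlinarith
  -- the step inequality
  have hrΨcont : ContinuousOn (fun s => r s * Ψ s) (Ioi 0) := hrc.mul hΨc
  have hQstep : ∀ x y : ℝ, ξ < x → x ≤ y → Q x + (g x - g y) * h x ≤ Q y := by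
    intro x y hξx hxy
    have hx : (0:ℝ) < x := hξ.trans hξx
    have hy : (0:ℝ) < y := lt_of_lt_of_le hx hxy
    have hsubIoi : Icc x y ⊆ Ioi (0:ℝ) := fun s hs => lt_of_lt_of_le hx hs.1
    have huIcc : uIcc x y = Icc x y := uIcc_of_le hxy
    have hintf : IntervalIntegrable (fun s => Θ s * Ψ s) volume x y := by
      apply (hfc.mono _).intervalIntegrable; rw [huIcc]; exact hsubIoi
    have hintrΨ : IntervalIntegrable (fun s => r s * Ψ s) volume x y := by
      apply (hrΨcont.mono _).intervalIntegrable; rw [huIcc]; exact hsubIoi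
    have key2 : ∫ s in x..y, r s * Ψ s = h y - h x := by
      apply intervalIntegral.integral_eq_sub_of_hasDerivAt
      · intro s hs
        rw [huIcc] at hs
        exact hhderiv s (hsubIoi hs)
      · exact hintrΨ
    have key3 : ∫ s in x..y, g y * (r s * Ψ s) ≤ ∫ s in x..y, Θ s * Ψ s := by
      apply intervalIntegral.integral_mono_on hxy (hintrΨ.const_mul _) hintf
      intro s hs
      have hsIoi := hsubIoi hs
      have hrs := hrpos s hsIoi
      have hΨs := hΨpos s hsIoi
      have hgs : g y ≤ g s := by
        rcases eq_or_lt_of_le hs.2 with hsy | hsy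
        · rw [hsy]
        · exact le_of_lt (hΘdec (lt_of_lt_of_le hξx hs.1) (lt_of_lt_of_le hξx hxy) hsy)
      have hTheta : Θ s * Ψ s = g s * (r s * Ψ s) := by
        simp only [hgdef]
        field_simp
      rw [hTheta]
      exact mul_le_mul_of_nonneg_right hgs (by positivity)
    have key4 : (∫ s in x..y, g y * (r s * Ψ s)) = g y * (h y - h x) := by
      rw [intervalIntegral.integral_const_mul, key2]
    have hAyx := hAsplit x y hx hxy
    have hQx := hQeq x hx
    have hQy := hQeq y hy
    rw [key4] at key3
    nlinarith
  -- monotonicity of Q on (ξ, ∞)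
  have hQmono : ∀ x y : ℝ, ξ < x → x ≤ y → Q x ≤ Q y := by
    intro x y hξx hxy
    have hstep := hQstep x y hξx hxy
    have hgge : g y ≤ g x := by
      rcases eq_or_lt_of_le hxy with hxy' | hxy'
      · rw [hxy']
      · exact le_of_lt (hΘdec (mem_Ioi.2 hξx) (mem_Ioi.2 (lt_of_lt_of_le hξx hxy)) hxy')
    have hhx := hhpos x (mem_Ioi.2 (hξ.trans hξx))
    nlinarith
  -- limits at 0+
  have hh0 : Tendsto h (𝓝[>] (0:ℝ)) (𝓝 0) := by
    have heq : h = fun x => ψ' x / p' x / C := by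
      funext x; simp only [hhdef]; rw [div_div, mul_comm]
    rw [heq]
    simpa using hψ'p'0.div_const C
  have hA0 : Tendsto A (𝓝[>] (0:ℝ)) (𝓝 0) := by
    have hfm : AEStronglyMeasurable (fun s => Θ s * Ψ s) (volume.restrict (Ioc (0:ℝ) 1)) :=
      ((hΘIC 1 (mem_Ioi.2 one_pos)).1).aestronglyMeasurable
    have key : Tendsto
        (fun ε => ∫ s in Ioc (0:ℝ) 1, (Ioc (0:ℝ) ε).indicator (fun s => Θ s * Ψ s) s)
        (𝓝[>] (0:ℝ)) (𝓝 (∫ _ in Ioc (0:ℝ) 1, (0:ℝ))) := by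
      apply MeasureTheory.tendsto_integral_filter_of_dominated_convergence
        (bound := fun s => |Θ s * Ψ s|)
      · filter_upwards with ε
        exact hfm.indicator measurableSet_Ioc
      · filter_upwards with ε
        filter_upwards with s
        by_cases hsε : s ∈ Ioc (0:ℝ) ε
        · rw [indicator_of_mem hsε]; exact le_of_eq (Real.norm_eq_abs _)
        · rw [indicator_of_notMem hsε]; simp; positivity
      · exact (hΘIC 1 (mem_Ioi.2 one_pos)).1.abs
      · filter_upwards [ae_restrict_mem measurableSet_Ioc] with s hs
        have hs0 : (0:ℝ) < s := hs.1
        have hev : (fun ε => (Ioc (0:ℝ) ε).indicator (fun s => Θ s * Ψ s) s)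
            =ᶠ[𝓝[>] (0:ℝ)] (fun _ => (0:ℝ)) := by
          filter_upwards [Ioo_mem_nhdsGT_of_mem (⟨le_rfl, hs0⟩ : (0:ℝ) ∈ Ico 0 s)] with ε hε
          show (Ioc (0:ℝ) ε).indicator (fun s => Θ s * Ψ s) s = 0
          apply indicator_of_notMem
          intro hmem
          exact absurd hmem.2 (not_le.2 hε.2)
        exact Tendsto.congr' hev.symm tendsto_const_nhds
    rw [integral_zero] at key
    apply Filter.Tendsto.congr' _ key
    filter_upwards [Ioo_mem_nhdsGT_of_mem (⟨le_rfl, one_pos⟩ : (0:ℝ) ∈ Ico 0 1)] with ε hε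
    rw [setIntegral_indicator measurableSet_Ioc]
    simp only [hAdef]
    congr 1
    rw [Set.Ioc_inter_Ioc, max_self, min_eq_right hε.2.le]
  -- the monotone limit
  set QT : ℝ → EReal := fun x => ((Q (max x (ξ+1)) : ℝ) : EReal) with hQTdef
  have hQTmono : Monotone QT := by
    intro x y hxy
    have h1 : ξ < max x (ξ+1) := lt_of_lt_of_le (by linarith) (le_max_right _ _)
    exact EReal.coe_le_coe_iff.2 (hQmono _ _ h1 (max_le_max hxy le_rfl))
  have hQTtend : Tendsto QT atTop (𝓝 (⨆ x, QT x)) := tendsto_atTop_iSup hQTmono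
  set L : EReal := ⨆ x, QT x with hLdef
  have hQtend : Tendsto (fun x => ((Q x : ℝ) : EReal)) atTop (𝓝 L) := by
    apply hQTtend.congr'
    filter_upwards [eventually_ge_atTop (ξ+1)] with x hx
    simp only [hQTdef, max_eq_left hx]
  refine ⟨⟨L, hQtend, ?_, ?_⟩, ?_, ?_⟩
  · -- xl ≠ ⊤ → 0 < L
    intro hne
    obtain ⟨t, hxlt, -⟩ := EReal.exists_between_coe_real (lt_top_iff_ne_top.2 hne : xl < ⊤)
    have hQt : 0 < Q t := hQpos t hxlt
    have hξt : ξ < t := by exact_mod_cast hxlξ.trans hxlt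
    have h1 : Q t ≤ Q (max t (ξ+1)) := hQmono t _ hξt (le_max_left _ _)
    have h2 : QT t ≤ L := le_iSup QT t
    calc (0:EReal) < ((Q t : ℝ) : EReal) := by exact_mod_cast hQt
      _ ≤ QT t := by simp only [hQTdef]; exact_mod_cast h1
      _ ≤ L := h2
  · -- 0 < L → xl ≠ ⊤
    intro hL htop
    have hQallneg : ∀ z : ℝ, 0 < z → Q z < 0 := fun z hz =>
      hQneg z hz (by rw [htop]; exact EReal.coe_lt_top z)
    have hL0 : L ≤ 0 := by
      apply iSup_le
      intro x
      have hneg : Q (max x (ξ+1)) < 0 :=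
        hQallneg _ (lt_of_lt_of_le (by linarith) (le_max_right x (ξ+1)))
      simp only [hQTdef]
      exact_mod_cast hneg.le
    exact absurd (hL.trans_le hL0) (lt_irrefl 0)
  · -- part (b)
    intro hgb htop
    have hQallneg : ∀ z : ℝ, 0 < z → Q z < 0 := fun z hz =>
      hQneg z hz (by rw [htop]; exact EReal.coe_lt_top z)
    set x := ξ + 1 with hxdef
    have hξx : ξ < x := by rw [hxdef]; linarith
    have hx : (0:ℝ) < x := hξ.trans hξx
    have hhx := hhpos x (mem_Ioi.2 hx)
    obtain ⟨y, hy1, hy2⟩ := ((hgb.eventually (eventually_le_atBot (g x + Q x / h x - 1))).and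
      (eventually_ge_atTop x)).exists
    have hstep := hQstep x y hξx hy2
    have hQy := hQallneg y (lt_of_lt_of_le hx hy2)
    have hgy : g y ≤ g x + Q x / h x - 1 := hy1
    have hdiv : Q x / h x * h x = Q x := div_mul_cancel₀ _ hhx.ne'
    nlinarith
  · -- part (c)
    intro L0 Loo h0 hT hlt htop
    have hQallneg : ∀ z : ℝ, 0 < z → Q z < 0 := fun z hz =>
      hQneg z hz (by rw [htop]; exact EReal.coe_lt_top z)
    obtain ⟨c, hLooc, hcL0⟩ := EReal.exists_between_coe_real hlt
    have hgc : ContinuousOn g (Ioi 0) :=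
      hΘc.div hrc (fun s hs => (hrpos s hs).ne')
    have claim1 : ∀ s ∈ Ioo (0:ℝ) ξ, c < g s := by
      intro s hs
      have hL0le : L0 ≤ ((g s : ℝ) : EReal) := by
        apply le_of_tendsto h0
        filter_upwards [Ioo_mem_nhdsGT_of_mem (⟨le_rfl, hs.1⟩ : (0:ℝ) ∈ Ico 0 s)] with s' hs'
        have hs'2 : s' ∈ Ioo (0:ℝ) ξ := ⟨hs'.1, hs'.2.trans hs.2⟩
        have := (hΘinc hs'2 hs hs'.2).le
        exact_mod_cast this
      have hfin := lt_of_lt_of_le hcL0 hL0le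
      exact_mod_cast hfin
    have claim2 : c ≤ g ξ := by
      have hca : ContinuousAt g ξ := hgc.continuousAt (hIoi.mem_nhds (mem_Ioi.2 hξ))
      have htnd : Tendsto g (𝓝[<] ξ) (𝓝 (g ξ)) := hca.tendsto.mono_left nhdsWithin_le_nhds
      apply ge_of_tendsto htnd
      filter_upwards [Ioo_mem_nhdsLT_of_mem (⟨hξ, le_rfl⟩ : ξ ∈ Ioc (0:ℝ) ξ)] with s hs
      exact (claim1 s hs).le
    -- c * h ξ ≤ A ξ
    have claimAξ : c * h ξ ≤ A ξ := by
      have hbound : ∀ ε ∈ Ioo (0:ℝ) ξ, A ε + c * (h ξ - h ε) ≤ A ξ := by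
        intro ε hε
        have hε0 : (0:ℝ) < ε := hε.1
        have hεξ : ε ≤ ξ := hε.2.le
        have hsub : Icc ε ξ ⊆ Ioi (0:ℝ) := fun s hs => lt_of_lt_of_le hε0 hs.1
        have huIcc : uIcc ε ξ = Icc ε ξ := uIcc_of_le hεξ
        have hintf : IntervalIntegrable (fun s => Θ s * Ψ s) volume ε ξ := by
          apply (hfc.mono _).intervalIntegrable; rw [huIcc]; exact hsub
        have hintrΨ : IntervalIntegrable (fun s => r s * Ψ s) volume ε ξ := by
          apply (hrΨcont.mono _).intervalIntegrable; rw [huIcc]; exact hsub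
        have key2 : ∫ s in ε..ξ, r s * Ψ s = h ξ - h ε := by
          apply intervalIntegral.integral_eq_sub_of_hasDerivAt
          · intro s hs; rw [huIcc] at hs; exact hhderiv s (hsub hs)
          · exact hintrΨ
        have key3 : ∫ s in ε..ξ, c * (r s * Ψ s) ≤ ∫ s in ε..ξ, Θ s * Ψ s := by
          apply intervalIntegral.integral_mono_on hεξ (hintrΨ.const_mul _) hintf
          intro s hs
          have hsIoi := hsub hs
          have hrs := hrpos s hsIoi
          have hΨs := hΨpos s hsIoi
          have hgs : c ≤ g s := by
            rcases eq_or_lt_of_le hs.2 with h1 | h1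
            · rw [h1]; exact claim2
            · exact (claim1 s ⟨hsIoi, h1⟩).le
          have hTheta : Θ s * Ψ s = g s * (r s * Ψ s) := by
            simp only [hgdef]; field_simp
          rw [hTheta]
          exact mul_le_mul_of_nonneg_right hgs (by positivity)
        have hAsp := hAsplit ε ξ hε0 hεξ
        rw [intervalIntegral.integral_const_mul, key2] at key3
        linarith
      have htend : Tendsto (fun ε => A ε + c * (h ξ - h ε)) (𝓝[>] (0:ℝ))
          (𝓝 (0 + c * (h ξ - 0))) :=
        hA0.add (tendsto_const_nhds.mul (tendsto_const_nhds.sub hh0))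
      rw [zero_add, sub_zero] at htend
      exact le_of_tendsto htend
        (Filter.eventually_of_mem (Ioo_mem_nhdsGT_of_mem (⟨le_rfl, hξ⟩ : (0:ℝ) ∈ Ico 0 ξ))
          hbound)
    -- choose y far out with g y < c
    have hyev : ∀ᶠ y in atTop, ((Θ y / r y : ℝ) : EReal) < (c : EReal) :=
      hT.eventually_lt_const hLooc
    obtain ⟨y, hy1, hy2⟩ := (hyev.and (eventually_ge_atTop (ξ+1))).exists
    have hgyc : g y < c := by
      have : ((g y : ℝ) : EReal) < ((c : ℝ) : EReal) := hy1
      exact_mod_cast this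
    have hξy : ξ < y := lt_of_lt_of_le (by linarith) hy2
    have hy0 : (0:ℝ) < y := hξ.trans hξy
    have hsub : Icc ξ y ⊆ Ioi (0:ℝ) := fun s hs => lt_of_lt_of_le hξ hs.1
    have huIcc : uIcc ξ y = Icc ξ y := uIcc_of_le hξy.le
    have hintf : IntervalIntegrable (fun s => Θ s * Ψ s) volume ξ y := by
      apply (hfc.mono _).intervalIntegrable; rw [huIcc]; exact hsub
    have hintrΨ : IntervalIntegrable (fun s => r s * Ψ s) volume ξ y := by
      apply (hrΨcont.mono _).intervalIntegrable; rw [huIcc]; exact hsub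
    have key2 : ∫ s in ξ..y, r s * Ψ s = h y - h ξ := by
      apply intervalIntegral.integral_eq_sub_of_hasDerivAt
      · intro s hs; rw [huIcc] at hs; exact hhderiv s (hsub hs)
      · exact hintrΨ
    have claimg : ∀ s ∈ Icc ξ y, g y ≤ g s := by
      intro s hs
      rcases eq_or_lt_of_le hs.1 with h1 | h1
      · rw [← h1]
        have hca : ContinuousAt g ξ := hgc.continuousAt (hIoi.mem_nhds (mem_Ioi.2 hξ))
        have htnd : Tendsto g (𝓝[>] ξ) (𝓝 (g ξ)) := hca.tendsto.mono_left nhdsWithin_le_nhds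
        apply ge_of_tendsto htnd
        filter_upwards [Ioo_mem_nhdsGT_of_mem (⟨le_rfl, hξy⟩ : ξ ∈ Ico ξ y)] with s' hs'
        exact (hΘdec (mem_Ioi.2 hs'.1) (mem_Ioi.2 hξy) hs'.2).le
      · rcases eq_or_lt_of_le hs.2 with h2 | h2
        · rw [h2]
        · exact (hΘdec (mem_Ioi.2 h1) (mem_Ioi.2 hξy) h2).le
    have key3 : ∫ s in ξ..y, g y * (r s * Ψ s) ≤ ∫ s in ξ..y, Θ s * Ψ s := by
      apply intervalIntegral.integral_mono_on hξy.le (hintrΨ.const_mul _) hintf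
      intro s hs
      have hsIoi := hsub hs
      have hrs := hrpos s hsIoi
      have hΨs := hΨpos s hsIoi
      have hTheta : Θ s * Ψ s = g s * (r s * Ψ s) := by
        simp only [hgdef]; field_simp
      rw [hTheta]
      exact mul_le_mul_of_nonneg_right (claimg s hs) (by positivity)
    have hAsp := hAsplit ξ y hξ hξy.le
    have hQy := hQeq y hy0
    have hQyneg := hQallneg y hy0
    have hhξ := hhpos ξ (mem_Ioi.2 hξ)
    rw [intervalIntegral.integral_const_mul, key2] at key3
    nlinarith [mul_pos (sub_pos.2 hgyc) hhξ]
end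

section
/- Assume lim_{x↓0} ψ'(x)/p'(x) = 0, lim_{x↑∞} ψ(x) = ∞, lim_{x↑∞} R_Θ(x)/ψ(x) = 0, lim_{x↓0} φ(x) = ∞, and lim_{x↓0} R_Θ(x)/φ(x) = 0. Let x̲ ∈ (ξ, ∞] be the unique point such that the derivative of R_Θ'/ψ' is strictly negative on (0, x̲) and strictly positive on (x̲, ∞), and assume x̲ < ∞. Let L₀ := lim_{x↓0} R_Θ'(x)/ψ'(x) (which exists in (−∞, ∞] since R_Θ'/ψ' is strictly decreasing on (0, x̲)), and define x̄ := inf{ s > 0 : R_Θ'(s)/ψ'(s) > L₀ } with the convention inf ∅ = ∞. Then: (a) x̄ > x̲; (b) x̄ = ∞ if and only if L₀ ≥ 0; (c) if lim_{x↓0} Θ(x)/r(x) = −∞, then L₀ = ∞, and hence x̄ = ∞. -/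
open Filter Set MeasureTheory Topology

set_option maxHeartbeats 4000000 in
theorem stmt_12
    (b σ r : ℝ → ℝ) (r₀ r₁ : ℝ)
    (hbc : ContinuousOn b (Ioi 0))
    (hσc : ContinuousOn σ (Ioi 0))
    (hrc : ContinuousOn r (Ioi 0))
    (hσpos : ∀ x ∈ Ioi (0:ℝ), 0 < σ x)
    (hr₀ : 0 < r₀) (hr₀₁ : r₀ ≤ r₁)
    (hrbd : ∀ x ∈ Ioi (0:ℝ), r₀ ≤ r x ∧ r x ≤ r₁)
    (p' : ℝ → ℝ)
    (hp' : ∀ x ∈ Ioi (0:ℝ), p' x = Real.exp (-(2:ℝ) * ∫ s in (1:ℝ)..x, b s / (σ s) ^ 2))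
    (φ ψ φ' ψ' φ'' ψ'' : ℝ → ℝ)
    (hφ1 : ∀ x ∈ Ioi (0:ℝ), HasDerivAt φ (φ' x) x)
    (hφ2 : ∀ x ∈ Ioi (0:ℝ), HasDerivAt φ' (φ'' x) x)
    (hφ2c : ContinuousOn φ'' (Ioi 0))
    (hψ1 : ∀ x ∈ Ioi (0:ℝ), HasDerivAt ψ (ψ' x) x)
    (hψ2 : ∀ x ∈ Ioi (0:ℝ), HasDerivAt ψ' (ψ'' x) x)
    (hψ2c : ContinuousOn ψ'' (Ioi 0))
    (hφpos : ∀ x ∈ Ioi (0:ℝ), 0 < φ x)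
    (hφ'neg : ∀ x ∈ Ioi (0:ℝ), φ' x < 0)
    (hψpos : ∀ x ∈ Ioi (0:ℝ), 0 < ψ x)
    (hψ'pos : ∀ x ∈ Ioi (0:ℝ), 0 < ψ' x)
    (hφODE : ∀ x ∈ Ioi (0:ℝ), (1/2) * σ x ^ 2 * φ'' x + b x * φ' x - r x * φ x = 0)
    (hψODE : ∀ x ∈ Ioi (0:ℝ), (1/2) * σ x ^ 2 * ψ'' x + b x * ψ' x - r x * ψ x = 0)
    (C : ℝ) (hC : 0 < C)
    (hWr : ∀ x ∈ Ioi (0:ℝ), φ x * ψ' x - φ' x * ψ x = C * p' x)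
    (Ψ Φ : ℝ → ℝ)
    (hΨ : ∀ x ∈ Ioi (0:ℝ), Ψ x = 2 * ψ x / (C * σ x ^ 2 * p' x))
    (hΦ : ∀ x ∈ Ioi (0:ℝ), Φ x = 2 * φ x / (C * σ x ^ 2 * p' x))
    (Θ : ℝ → ℝ) (hΘc : ContinuousOn Θ (Ioi 0))
    (hΘIC : ∀ x ∈ Ioi (0:ℝ),
      IntegrableOn (fun s => Θ s * Ψ s) (Ioc 0 x) ∧
      IntegrableOn (fun s => Θ s * Φ s) (Ioi x))
    (ξ : ℝ) (hξ : 0 < ξ)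
    (hΘinc : StrictMonoOn (fun x => Θ x / r x) (Ioo 0 ξ))
    (hΘdec : StrictAntiOn (fun x => Θ x / r x) (Ioi ξ))
    (R R' : ℝ → ℝ)
    (hRdef : ∀ x ∈ Ioi (0:ℝ),
      R x = φ x * (∫ s in Ioc (0:ℝ) x, Θ s * Ψ s) + ψ x * (∫ s in Ioi x, Θ s * Φ s))
    (hR'def : ∀ x ∈ Ioi (0:ℝ),
      R' x = φ' x * (∫ s in Ioc (0:ℝ) x, Θ s * Ψ s) + ψ' x * (∫ s in Ioi x, Θ s * Φ s))
    (hψ'p'0 : Tendsto (fun x => ψ' x / p' x) (𝓝[>] (0:ℝ)) (𝓝 0))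
    (hψT : Tendsto ψ atTop atTop)
    (hRψT : Tendsto (fun x => R x / ψ x) atTop (𝓝 0))
    (hφ0 : Tendsto φ (𝓝[>] (0:ℝ)) atTop)
    (hRφ0 : Tendsto (fun x => R x / φ x) (𝓝[>] (0:ℝ)) (𝓝 0))
    (xl : ℝ) (hxlξ : ξ < xl)
    (hxl1 : ∀ x : ℝ, 0 < x → x < xl → deriv (fun y => R' y / ψ' y) x < 0)
    (hxl2 : ∀ x : ℝ, xl < x → 0 < deriv (fun y => R' y / ψ' y) x)
    (L0 : EReal)
    (hL0 : Tendsto (fun x => ((R' x / ψ' x : ℝ) : EReal)) (𝓝[>] (0:ℝ)) (𝓝 L0))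
    (xbar : EReal)
    (hxbar : xbar = sInf ((fun s : ℝ => (s : EReal)) ''
      {s : ℝ | 0 < s ∧ L0 < ((R' s / ψ' s : ℝ) : EReal)}))
    :
    (xl : EReal) < xbar ∧
    (xbar = ⊤ ↔ (0 : EReal) ≤ L0) ∧
    (Tendsto (fun x => Θ x / r x) (𝓝[>] (0:ℝ)) atBot → L0 = ⊤ ∧ xbar = ⊤) := by
  set H : ℝ → ℝ := fun y => R' y / ψ' y with hHdef
  -- positivity of p'
  have hp'pos : ∀ x ∈ Ioi (0:ℝ), 0 < p' x := by
    intro x hx; rw [hp' x hx]; exact Real.exp_pos _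
  have hσne : ∀ x ∈ Ioi (0:ℝ), σ x ^ 2 ≠ 0 := fun x hx => (pow_pos (hσpos x hx) 2).ne'
  have hgc : ContinuousOn (fun t => b t / σ t ^ 2) (Ioi 0) :=
    hbc.div (hσc.pow 2) (fun x hx => hσne x hx)
  have hp'd : ∀ x ∈ Ioi (0:ℝ), HasDerivAt p' (p' x * (-2 * (b x / σ x ^ 2))) x := by
    intro x hx
    have hx0 : (0:ℝ) < x := hx
    have hsub : uIcc (1:ℝ) x ⊆ Ioi 0 := by
      intro t ht
      have h1 : min (1:ℝ) x ≤ t := ht.1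
      have : (0:ℝ) < min 1 x := lt_min one_pos hx0
      exact lt_of_lt_of_le this h1
    have hint : IntervalIntegrable (fun t => b t / σ t ^ 2) volume 1 x :=
      (hgc.mono hsub).intervalIntegrable
    have hI : HasDerivAt (fun y => ∫ t in (1:ℝ)..y, b t / σ t ^ 2) (b x / σ x ^ 2) x :=
      intervalIntegral.integral_hasDerivAt_right hint
        (hgc.stronglyMeasurableAtFilter isOpen_Ioi x hx)
        (hgc.continuousAt (isOpen_Ioi.mem_nhds hx))
    have hE : HasDerivAt (fun y => Real.exp (-(2:ℝ) * ∫ t in (1:ℝ)..y, b t / σ t ^ 2))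
        (Real.exp (-(2:ℝ) * ∫ t in (1:ℝ)..x, b t / σ t ^ 2) * (-(2:ℝ) * (b x / σ x ^ 2))) x :=
      (hI.const_mul (-(2:ℝ))).exp
    have hev : p' =ᶠ[𝓝 x] (fun y => Real.exp (-(2:ℝ) * ∫ t in (1:ℝ)..y, b t / σ t ^ 2)) := by
      filter_upwards [isOpen_Ioi.mem_nhds hx] with y hy
      exact hp' y hy
    have := hE.congr_of_eventuallyEq hev
    rw [← hp' x hx] at this
    simpa using this
  have hp'c : ContinuousOn p' (Ioi 0) :=
    fun x hx => ((hp'd x hx).continuousAt).continuousWithinAt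
  have hφc : ContinuousOn φ (Ioi 0) := fun x hx => ((hφ1 x hx).continuousAt).continuousWithinAt
  have hφ'c : ContinuousOn φ' (Ioi 0) := fun x hx => ((hφ2 x hx).continuousAt).continuousWithinAt
  have hψcc : ContinuousOn ψ (Ioi 0) := fun x hx => ((hψ1 x hx).continuousAt).continuousWithinAt
  have hψ'c : ContinuousOn ψ' (Ioi 0) := fun x hx => ((hψ2 x hx).continuousAt).continuousWithinAt
  have hdenpos : ∀ x ∈ Ioi (0:ℝ), 0 < C * σ x ^ 2 * p' x := by
    intro x hx
    exact mul_pos (mul_pos hC (pow_pos (hσpos x hx) 2)) (hp'pos x hx)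
  have hΨpos : ∀ x ∈ Ioi (0:ℝ), 0 < Ψ x := by
    intro x hx; rw [hΨ x hx]
    exact div_pos (by linarith [hψpos x hx]) (hdenpos x hx)
  have hΦpos : ∀ x ∈ Ioi (0:ℝ), 0 < Φ x := by
    intro x hx; rw [hΦ x hx]
    exact div_pos (by linarith [hφpos x hx]) (hdenpos x hx)
  have hΨc : ContinuousOn Ψ (Ioi 0) := by
    refine ContinuousOn.congr (f := fun x => 2 * ψ x / (C * σ x ^ 2 * p' x)) ?_ ?_
    · exact (continuousOn_const.mul hψcc).div
        ((continuousOn_const.mul (hσc.pow 2)).mul hp'c) (fun x hx => (hdenpos x hx).ne')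
    · intro x hx; exact hΨ x hx
  have hΦc : ContinuousOn Φ (Ioi 0) := by
    refine ContinuousOn.congr (f := fun x => 2 * φ x / (C * σ x ^ 2 * p' x)) ?_ ?_
    · exact (continuousOn_const.mul hφc).div
        ((continuousOn_const.mul (hσc.pow 2)).mul hp'c) (fun x hx => (hdenpos x hx).ne')
    · intro x hx; exact hΦ x hx
  have hfΨc : ContinuousOn (fun s => Θ s * Ψ s) (Ioi 0) := hΘc.mul hΨc
  have hfΦc : ContinuousOn (fun s => Θ s * Φ s) (Ioi 0) := hΘc.mul hΦc
  -- derivative of A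
  have hA : ∀ x ∈ Ioi (0:ℝ), HasDerivAt (fun y => ∫ s in Ioc (0:ℝ) y, Θ s * Ψ s) (Θ x * Ψ x) x := by
    intro x hx
    have hx0 : (0:ℝ) < x := hx
    have hhalf : (0:ℝ) < x / 2 := by linarith
    have hsub : uIcc (x/2) x ⊆ Ioi 0 := by
      intro t ht
      have h1 : min (x/2) x ≤ t := ht.1
      have : (0:ℝ) < min (x/2) x := lt_min hhalf hx0
      exact lt_of_lt_of_le this h1
    have hint : IntervalIntegrable (fun s => Θ s * Ψ s) volume (x/2) x :=
      ((hfΨc.mono hsub).intervalIntegrable)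
    have hG : HasDerivAt (fun y => (∫ s in Ioc (0:ℝ) (x/2), Θ s * Ψ s)
        + ∫ t in (x/2)..y, Θ t * Ψ t) (Θ x * Ψ x) x :=
      (intervalIntegral.integral_hasDerivAt_right hint
        (hfΨc.stronglyMeasurableAtFilter isOpen_Ioi x hx)
        (hfΨc.continuousAt (isOpen_Ioi.mem_nhds hx))).const_add _
    refine HasDerivAt.congr_of_eventuallyEq hG ?_
    filter_upwards [isOpen_Ioi.mem_nhds (show x ∈ Ioi (x/2) by simpa using by linarith : x ∈ Ioi (x/2))] with y hy
    have hy' : x/2 < y := hy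
    have hy0 : (0:ℝ) < y := lt_trans hhalf hy'
    have hsplit : Ioc (0:ℝ) y = Ioc 0 (x/2) ∪ Ioc (x/2) y :=
      (Set.Ioc_union_Ioc_eq_Ioc hhalf.le hy'.le).symm
    rw [hsplit, setIntegral_union (Set.Ioc_disjoint_Ioc_of_le le_rfl) measurableSet_Ioc
      ((hΘIC (x/2) hhalf).1) (((hΘIC y hy0).1).mono_set (Set.Ioc_subset_Ioc_left hhalf.le)),
      intervalIntegral.integral_of_le hy'.le]
  -- derivative of B
  have hB : ∀ x ∈ Ioi (0:ℝ), HasDerivAt (fun y => ∫ s in Ioi y, Θ s * Φ s) (-(Θ x * Φ x)) x := by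
    intro x hx
    have hx0 : (0:ℝ) < x := hx
    have hc1 : x < x + 1 := by linarith
    have hsub : uIcc (x+1) x ⊆ Ioi 0 := by
      intro t ht
      have h1 : min (x+1) x ≤ t := ht.1
      have : (0:ℝ) < min (x+1) x := lt_min (by linarith) hx0
      exact lt_of_lt_of_le this h1
    have hint : IntervalIntegrable (fun s => Θ s * Φ s) volume (x+1) x :=
      ((hfΦc.mono hsub).intervalIntegrable)
    have hG : HasDerivAt (fun y => (∫ s in Ioi (x+1), Θ s * Φ s)
        - ∫ t in (x+1)..y, Θ t * Φ t) (-(Θ x * Φ x)) x :=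
      (intervalIntegral.integral_hasDerivAt_right hint
        (hfΦc.stronglyMeasurableAtFilter isOpen_Ioi x hx)
        (hfΦc.continuousAt (isOpen_Ioi.mem_nhds hx))).const_sub _
    refine HasDerivAt.congr_of_eventuallyEq hG ?_
    filter_upwards [isOpen_Ioo.mem_nhds (show x ∈ Ioo 0 (x+1) by constructor <;> linarith)] with y hy
    have hy0 : (0:ℝ) < y := hy.1
    have hy1 : y < x + 1 := hy.2
    have hsplit : Ioi y = Ioc y (x+1) ∪ Ioi (x+1) := (Set.Ioc_union_Ioi_eq_Ioi hy1.le).symm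
    rw [hsplit, setIntegral_union (Set.Ioc_disjoint_Ioi le_rfl) measurableSet_Ioi
      (((hΘIC y hy0).2).mono_set (fun t ht => ht.1))
      ((hΘIC (x+1) (mem_Ioi.mpr (by linarith))).2),
      intervalIntegral.integral_symm, intervalIntegral.integral_of_le hy1.le]
    ring
  -- derivative of R
  have hR : ∀ x ∈ Ioi (0:ℝ), HasDerivAt R (R' x) x := by
    intro x hx
    have h1 := ((hφ1 x hx).mul (hA x hx)).add ((hψ1 x hx).mul (hB x hx))
    have hev : R =ᶠ[𝓝 x] (fun y => φ y * (∫ s in Ioc (0:ℝ) y, Θ s * Ψ s)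
        + ψ y * (∫ s in Ioi y, Θ s * Φ s)) := by
      filter_upwards [isOpen_Ioi.mem_nhds hx] with y hy
      exact hRdef y hy
    have h2 := h1.congr_of_eventuallyEq hev
    have hcancel : φ x * Ψ x = ψ x * Φ x := by
      rw [hΨ x hx, hΦ x hx]; ring
    have hval : φ' x * (∫ s in Ioc (0:ℝ) x, Θ s * Ψ s) + φ x * (Θ x * Ψ x)
        + (ψ' x * (∫ s in Ioi x, Θ s * Φ s) + ψ x * -(Θ x * Φ x)) = R' x := by
      rw [hR'def x hx]
      linear_combination Θ x * hcancel
    rw [← hval]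
    exact h2
  have hR'c : ContinuousOn R' (Ioi 0) := by
    refine ContinuousOn.congr (f := fun y => φ' y * (∫ s in Ioc (0:ℝ) y, Θ s * Ψ s)
        + ψ' y * (∫ s in Ioi y, Θ s * Φ s)) ?_ ?_
    · refine (hφ'c.mul ?_).add (hψ'c.mul ?_)
      · exact fun x hx => ((hA x hx).continuousAt).continuousWithinAt
      · exact fun x hx => ((hB x hx).continuousAt).continuousWithinAt
    · intro x hx; exact hR'def x hx
  have hHc : ContinuousOn H (Ioi 0) :=
    hR'c.div hψ'c (fun x hx => (hψ'pos x hx).ne')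
  have hxl0 : (0:ℝ) < xl := lt_trans hξ hxlξ
  -- monotonicity of H
  have hanti : StrictAntiOn H (Ioc 0 xl) := by
    refine strictAntiOn_of_deriv_neg (convex_Ioc 0 xl) (hHc.mono ?_) ?_
    · intro t ht; exact ht.1
    · intro t ht
      rw [interior_Ioc] at ht
      exact hxl1 t ht.1 ht.2
  have hmono : StrictMonoOn H (Ici xl) := by
    refine strictMonoOn_of_deriv_pos (convex_Ici xl) (hHc.mono ?_) ?_
    · intro t ht; exact lt_of_lt_of_le hxl0 ht
    · intro t ht
      rw [interior_Ici] at ht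
      exact hxl2 t ht
  -- H t ≤ L0 for t in (0, xl)
  have hle : ∀ t ∈ Ioo (0:ℝ) xl, ((H t : ℝ) : EReal) ≤ L0 := by
    intro t ht
    refine ge_of_tendsto hL0 ?_
    filter_upwards [Ioo_mem_nhdsGT_of_mem (show (0:ℝ) ∈ Ico (0:ℝ) t from ⟨le_rfl, ht.1⟩)] with x hx
    have : H t < H x := hanti ⟨hx.1, le_of_lt (lt_trans hx.2 ht.2)⟩ ⟨ht.1, ht.2.le⟩ hx.2
    exact_mod_cast this.le
  have hltL0 : ∀ s ∈ Ioc (0:ℝ) xl, ((H s : ℝ) : EReal) < L0 := by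
    intro s hs
    have hs2 : s / 2 ∈ Ioo (0:ℝ) xl := ⟨by linarith [hs.1], by linarith [hs.1, hs.2]⟩
    have h1 : H s < H (s/2) := hanti ⟨hs2.1, hs2.2.le⟩ hs ((by linarith [hs.1]) : s/2 < s)
    exact lt_of_lt_of_le (by exact_mod_cast h1) (hle _ hs2)
  have hbot : (⊥ : EReal) < L0 :=
    lt_of_lt_of_le (by simp) (hle (xl/2) ⟨by linarith, by linarith⟩)
  -- FTC comparison machinery
  have hkey : ∀ c x₀ y : ℝ, 0 < x₀ → x₀ ≤ y →
      ((∀ t, x₀ ≤ t → t ≤ y → c * ψ' t ≤ R' t) → c * (ψ y - ψ x₀) ≤ R y - R x₀) ∧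
      ((∀ t, x₀ ≤ t → t ≤ y → R' t ≤ c * ψ' t) → R y - R x₀ ≤ c * (ψ y - ψ x₀)) := by
    intro c x₀ y hx₀ hy
    have hsub : uIcc x₀ y ⊆ Ioi 0 := by
      rw [uIcc_of_le hy]; intro t ht; exact lt_of_lt_of_le hx₀ ht.1
    have hRint : IntervalIntegrable R' volume x₀ y := (hR'c.mono hsub).intervalIntegrable
    have hψint : IntervalIntegrable ψ' volume x₀ y := (hψ'c.mono hsub).intervalIntegrable
    have hcψint : IntervalIntegrable (fun t => c * ψ' t) volume x₀ y := hψint.const_mul c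
    have hReq : ∫ t in x₀..y, R' t = R y - R x₀ :=
      intervalIntegral.integral_eq_sub_of_hasDerivAt (fun t ht => hR t (hsub ht)) hRint
    have hψeq : ∫ t in x₀..y, ψ' t = ψ y - ψ x₀ :=
      intervalIntegral.integral_eq_sub_of_hasDerivAt (fun t ht => hψ1 t (hsub ht)) hψint
    have hceq : ∫ t in x₀..y, c * ψ' t = c * (ψ y - ψ x₀) := by
      rw [intervalIntegral.integral_const_mul, hψeq]
    constructor
    · intro hpt
      have h := intervalIntegral.integral_mono_on hy hcψint hRint (fun t ht => hpt t ht.1 ht.2)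
      rw [hceq, hReq] at h; exact h
    · intro hpt
      have h := intervalIntegral.integral_mono_on hy hRint hcψint (fun t ht => hpt t ht.1 ht.2)
      rw [hceq, hReq] at h; exact h
  have hcmp1 : ∀ c x₀ : ℝ, 0 < x₀ → (∀ t, x₀ ≤ t → c ≤ H t) → c ≤ 0 := by
    intro c x₀ hx₀ hc
    have hev : ∀ᶠ y in atTop, c + (R x₀ - c * ψ x₀) / ψ y ≤ R y / ψ y := by
      filter_upwards [eventually_ge_atTop (max x₀ 1)] with y hy
      have hyx : x₀ ≤ y := le_trans (le_max_left _ _) hy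
      have hy0 : (0:ℝ) < y := lt_of_lt_of_le one_pos (le_trans (le_max_right _ _) hy)
      have hψy : 0 < ψ y := hψpos y hy0
      have hpt : ∀ t, x₀ ≤ t → t ≤ y → c * ψ' t ≤ R' t := by
        intro t ht _
        have ht0 : (0:ℝ) < t := lt_of_lt_of_le hx₀ ht
        have hψ't : 0 < ψ' t := hψ'pos t ht0
        have h1 := hc t ht
        calc c * ψ' t ≤ (R' t / ψ' t) * ψ' t := mul_le_mul_of_nonneg_right h1 hψ't.le
          _ = R' t := div_mul_cancel₀ _ hψ't.ne'
      have hk := (hkey c x₀ y hx₀ hyx).1 hpt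
      have heq : c + (R x₀ - c * ψ x₀) / ψ y = (c * (ψ y - ψ x₀) + R x₀) / ψ y := by
        field_simp; ring
      rw [heq]
      exact (div_le_div_iff_of_pos_right hψy).mpr (by linarith)
    have hlim : Tendsto (fun y => c + (R x₀ - c * ψ x₀) / ψ y) atTop (𝓝 (c + 0)) :=
      tendsto_const_nhds.add (Tendsto.div_atTop tendsto_const_nhds hψT)
    have hfin := le_of_tendsto_of_tendsto hlim hRψT hev
    linarith
  have hcmp2 : ∀ c x₀ : ℝ, 0 < x₀ → (∀ t, x₀ ≤ t → H t ≤ c) → 0 ≤ c := by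
    intro c x₀ hx₀ hc
    have hev : ∀ᶠ y in atTop, R y / ψ y ≤ c + (R x₀ - c * ψ x₀) / ψ y := by
      filter_upwards [eventually_ge_atTop (max x₀ 1)] with y hy
      have hyx : x₀ ≤ y := le_trans (le_max_left _ _) hy
      have hy0 : (0:ℝ) < y := lt_of_lt_of_le one_pos (le_trans (le_max_right _ _) hy)
      have hψy : 0 < ψ y := hψpos y hy0
      have hpt : ∀ t, x₀ ≤ t → t ≤ y → R' t ≤ c * ψ' t := by
        intro t ht _
        have ht0 : (0:ℝ) < t := lt_of_lt_of_le hx₀ ht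
        have hψ't : 0 < ψ' t := hψ'pos t ht0
        have h1 := hc t ht
        calc R' t = (R' t / ψ' t) * ψ' t := (div_mul_cancel₀ _ hψ't.ne').symm
          _ ≤ c * ψ' t := mul_le_mul_of_nonneg_right h1 hψ't.le
      have hk := (hkey c x₀ y hx₀ hyx).2 hpt
      have heq : c + (R x₀ - c * ψ x₀) / ψ y = (c * (ψ y - ψ x₀) + R x₀) / ψ y := by
        field_simp; ring
      rw [heq]
      exact (div_le_div_iff_of_pos_right hψy).mpr (by linarith)
    have hlim : Tendsto (fun y => c + (R x₀ - c * ψ x₀) / ψ y) atTop (𝓝 (c + 0)) :=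
      tendsto_const_nhds.add (Tendsto.div_atTop tendsto_const_nhds hψT)
    have hfin := le_of_tendsto_of_tendsto hRψT hlim hev
    linarith
  have hFneg : ∀ s, xl < s → H s < 0 := by
    intro s hs
    by_contra hcon
    push_neg at hcon
    have h1 : H s < H (s+1) :=
      hmono (mem_Ici.mpr hs.le) (mem_Ici.mpr (by linarith)) (by linarith)
    have hc : ∀ t, s + 1 ≤ t → H (s+1) ≤ H t := by
      intro t ht
      rcases eq_or_lt_of_le ht with h|h
      · rw [← h]
      · exact (hmono (mem_Ici.mpr (by linarith)) (mem_Ici.mpr (by linarith)) h).le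
    have := hcmp1 (H (s+1)) (s+1) (by linarith [hxl0]) hc
    linarith
  have hSgt : ∀ s : ℝ, 0 < s → L0 < ((R' s / ψ' s : ℝ) : EReal) → xl < s := by
    intro s hs hL
    by_contra hcon
    push_neg at hcon
    exact absurd hL (not_lt.mpr (hltL0 s ⟨hs, hcon⟩).le)
  -- part (a)
  have hparta : (xl : EReal) < xbar := by
    by_cases hLt : L0 = ⊤
    · have hSempty : {s : ℝ | 0 < s ∧ L0 < ((R' s / ψ' s : ℝ) : EReal)} = ∅ := by
        ext s
        simp only [mem_setOf_eq, mem_empty_iff_false, iff_false, not_and]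
        intro _ hlt
        rw [hLt] at hlt
        exact absurd hlt (not_lt.mpr le_top)
      rw [hxbar, hSempty, image_empty, sInf_empty]
      exact EReal.coe_lt_top xl
    · obtain ⟨ℓ, hℓ⟩ : ∃ ℓ : ℝ, L0 = (ℓ : EReal) :=
        ⟨L0.toReal, (EReal.coe_toReal hLt (ne_of_gt hbot)).symm⟩
      have hHxl : H xl < ℓ := by
        have := hltL0 xl ⟨hxl0, le_rfl⟩
        rw [hℓ] at this
        exact_mod_cast this
      have hcont : ContinuousAt H xl := hHc.continuousAt (isOpen_Ioi.mem_nhds hxl0)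
      have hev : ∀ᶠ y in 𝓝 xl, H y < ℓ := hcont.eventually_lt continuousAt_const hHxl
      obtain ⟨δ, hδpos, hδ⟩ := Metric.eventually_nhds_iff.mp hev
      rw [hxbar]
      refine lt_of_lt_of_le
        (show (xl:EReal) < ((xl + δ/2 : ℝ):EReal) by exact_mod_cast (by linarith : xl < xl + δ/2))
        (le_sInf ?_)
      rintro a ⟨s, ⟨hs0, hsL⟩, rfl⟩
      have hsxl : xl < s := hSgt s hs0 hsL
      by_contra hcon
      push_neg at hcon
      have hslt : s < xl + δ/2 := by exact_mod_cast hcon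
      have hdist : dist s xl < δ := by
        rw [Real.dist_eq, abs_lt]; constructor <;> linarith
      have := hδ hdist
      rw [hℓ] at hsL
      have : ((R' s / ψ' s : ℝ) : EReal) < (ℓ : EReal) := by exact_mod_cast this
      exact absurd (lt_trans hsL this) (lt_irrefl _)
  -- part (b)
  have hpartb : xbar = ⊤ ↔ (0 : EReal) ≤ L0 := by
    constructor
    · intro htop
      by_contra hcon
      push_neg at hcon
      obtain ⟨ℓ, hℓ⟩ : ∃ ℓ : ℝ, L0 = (ℓ : EReal) :=
        ⟨L0.toReal, (EReal.coe_toReal (ne_top_of_lt hcon) (ne_of_gt hbot)).symm⟩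
      have hℓneg : ℓ < 0 := by
        rw [hℓ] at hcon; exact_mod_cast hcon
      have hex : ∃ s, xl ≤ s ∧ ℓ < H s := by
        by_contra hcon2
        push_neg at hcon2
        have := hcmp2 ℓ xl hxl0 (fun t ht => hcon2 t ht)
        linarith
      obtain ⟨s, hs1, hs2⟩ := hex
      have hmem : s ∈ {s : ℝ | 0 < s ∧ L0 < ((R' s / ψ' s : ℝ) : EReal)} :=
        ⟨lt_of_lt_of_le hxl0 hs1, by rw [hℓ]; exact_mod_cast hs2⟩
      have hle' : xbar ≤ (s : EReal) := hxbar ▸ sInf_le ⟨s, hmem, rfl⟩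
      rw [htop] at hle'
      exact absurd (top_le_iff.mp hle') (EReal.coe_ne_top s)
    · intro hL
      have hSempty : {s : ℝ | 0 < s ∧ L0 < ((R' s / ψ' s : ℝ) : EReal)} = ∅ := by
        ext s
        simp only [mem_setOf_eq, mem_empty_iff_false, iff_false, not_and]
        intro hs0 hsL
        have hsxl := hSgt s hs0 hsL
        have h2 : ((R' s / ψ' s : ℝ) : EReal) < ((0:ℝ) : EReal) := by
          exact_mod_cast hFneg s hsxl
        have h3 : L0 < ((0:ℝ):EReal) := lt_trans hsL h2
        rw [show ((0:ℝ):EReal) = (0:EReal) from rfl] at h3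
        exact absurd h3 (not_lt.mpr hL)
      rw [hxbar, hSempty, image_empty, sInf_empty]
  -- part (c)
  have hrpos : ∀ s ∈ Ioi (0:ℝ), 0 < r s := fun s hs => lt_of_lt_of_le hr₀ (hrbd s hs).1
  have hψm : StrictMonoOn ψ (Ioi 0) := by
    refine strictMonoOn_of_deriv_pos (convex_Ioi 0) hψcc ?_
    intro t ht
    rw [interior_Ioi] at ht
    rw [(hψ1 t ht).deriv]
    exact hψ'pos t ht
  have hu : ∀ x ∈ Ioi (0:ℝ), HasDerivAt (fun t => ψ' t / (C * p' t)) (r x * Ψ x) x := by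
    intro x hx
    have hCp' : C * p' x ≠ 0 := (mul_pos hC (hp'pos x hx)).ne'
    have hd := (hψ2 x hx).div ((hp'd x hx).const_mul C) hCp'
    have hψ'' : ψ'' x = (2 * r x * ψ x - 2 * b x * ψ' x) / σ x ^ 2 := by
      have hODE := hψODE x hx
      have h1 : σ x ^ 2 ≠ 0 := hσne x hx
      rw [eq_div_iff h1]
      linarith [hODE]
    refine hd.congr_deriv ?_
    rw [hΨ x hx, hψ'']
    have h1 : σ x ^ 2 ≠ 0 := hσne x hx
    have h2 : p' x ≠ 0 := (hp'pos x hx).ne'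
    field_simp
    ring
  have hA0 : Tendsto (fun ε => ∫ s in Ioc (0:ℝ) ε, Θ s * Ψ s) (𝓝[>] (0:ℝ)) (𝓝 0) := by
    have hint1 : IntegrableOn (fun s => |Θ s * Ψ s|) (Ioc (0:ℝ) 1) :=
      ((hΘIC 1 (mem_Ioi.mpr one_pos)).1).abs
    have hsm : ∀ n : ℕ, MeasurableSet (Ioc ((1:ℝ)/(n+1)) 1) := fun n => measurableSet_Ioc
    have hmon : Monotone (fun n : ℕ => Ioc ((1:ℝ)/(n+1)) 1) := by
      intro m n hmn
      apply Ioc_subset_Ioc_left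
      apply one_div_le_one_div_of_le
      · positivity
      · have : (m:ℝ) ≤ (n:ℝ) := Nat.cast_le.mpr hmn
        linarith
    have hunion : (⋃ n : ℕ, Ioc ((1:ℝ)/(n+1)) 1) = Ioc (0:ℝ) 1 := by
      ext t
      simp only [mem_iUnion, mem_Ioc]
      constructor
      · rintro ⟨n, h1, h2⟩
        exact ⟨lt_trans (by positivity) h1, h2⟩
      · rintro ⟨h1, h2⟩
        obtain ⟨n, hn⟩ := exists_nat_one_div_lt h1
        exact ⟨n, by exact_mod_cast hn, h2⟩
    have htend := MeasureTheory.tendsto_setIntegral_of_monotone hsm hmon (hunion ▸ hint1)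
    rw [hunion] at htend
    rw [Metric.tendsto_nhdsWithin_nhds]
    intro ε hε
    -- find n with ∫ over Ioc 0 (1/(n+1)) of |f| < ε
    have htend2 : Tendsto (fun n : ℕ => ∫ s in Ioc (0:ℝ) ((1:ℝ)/(n+1)), |Θ s * Ψ s|)
        atTop (𝓝 0) := by
      have heq : ∀ n : ℕ, ∫ s in Ioc (0:ℝ) ((1:ℝ)/(n+1)), |Θ s * Ψ s|
          = (∫ s in Ioc (0:ℝ) 1, |Θ s * Ψ s|) - ∫ s in Ioc ((1:ℝ)/(n+1)) 1, |Θ s * Ψ s| := by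
        intro n
        have hn0 : (0:ℝ) < 1/(n+1) := by positivity
        have hn1 : (1:ℝ)/(n+1) ≤ 1 := by
          rw [div_le_one (by positivity)]
          linarith [Nat.cast_nonneg (α := ℝ) n]
        have hsplit : Ioc (0:ℝ) 1 = Ioc 0 ((1:ℝ)/(n+1)) ∪ Ioc ((1:ℝ)/(n+1)) 1 :=
          (Set.Ioc_union_Ioc_eq_Ioc hn0.le hn1).symm
        have h2 := setIntegral_union (Set.Ioc_disjoint_Ioc_of_le le_rfl) measurableSet_Ioc
          (hint1.mono_set (Ioc_subset_Ioc_right hn1)) (hint1.mono_set (Ioc_subset_Ioc_left hn0.le))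
          (f := fun s => |Θ s * Ψ s|) (μ := volume)
        rw [hsplit, h2]
        ring
      simp_rw [heq]
      have := htend.const_sub (∫ s in Ioc (0:ℝ) 1, |Θ s * Ψ s|)
      simpa using this
    obtain ⟨N, hN⟩ := Metric.tendsto_atTop.mp htend2 ε hε
    refine ⟨1/(N+1), by positivity, ?_⟩
    intro x hx hdist
    have hx0 : (0:ℝ) < x := hx
    have hxδ : x ≤ 1/((N:ℝ)+1) := by
      rw [Real.dist_eq, sub_zero, abs_of_pos hx0] at hdist
      exact hdist.le
    have hb1 : |∫ s in Ioc (0:ℝ) x, Θ s * Ψ s| ≤ ∫ s in Ioc (0:ℝ) x, |Θ s * Ψ s| := by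
      have := norm_integral_le_integral_norm (μ := volume.restrict (Ioc (0:ℝ) x))
        (fun s => Θ s * Ψ s)
      simp only [Real.norm_eq_abs] at this
      exact this
    have hb2 : (∫ s in Ioc (0:ℝ) x, |Θ s * Ψ s|)
        ≤ ∫ s in Ioc (0:ℝ) ((1:ℝ)/(N+1)), |Θ s * Ψ s| := by
      refine setIntegral_mono_set (hint1.mono_set (Ioc_subset_Ioc_right ?_))
        (ae_of_all _ (fun s => abs_nonneg _))
        ((Ioc_subset_Ioc_right hxδ).eventuallyLE)
      rw [div_le_one (by positivity)]
      linarith [Nat.cast_nonneg (α := ℝ) N]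
    have hn' : (∫ s in Ioc (0:ℝ) ((1:ℝ)/(N+1)), |Θ s * Ψ s|) < ε := by
      have := hN N le_rfl
      rw [Real.dist_eq, sub_zero] at this
      exact lt_of_le_of_lt (le_abs_self _) this
    rw [Real.dist_eq, sub_zero]
    exact lt_of_le_of_lt (le_trans hb1 hb2) hn'
  have hu0 : Tendsto (fun ε => ψ' ε / (C * p' ε)) (𝓝[>] (0:ℝ)) (𝓝 0) := by
    have heq : (fun ε => ψ' ε / (C * p' ε)) = fun ε => (ψ' ε / p' ε) / C := by
      funext ε
      rw [div_div, mul_comm]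
    rw [heq]
    simpa using hψ'p'0.div_const C
  have hpartc : Tendsto (fun x => Θ x / r x) (𝓝[>] (0:ℝ)) atBot → L0 = ⊤ ∧ xbar = ⊤ := by
    intro hTend
    have hLtop : L0 = ⊤ := by
      by_contra hLt
      obtain ⟨ℓ, hℓ⟩ : ∃ ℓ : ℝ, L0 = (ℓ : EReal) :=
        ⟨L0.toReal, (EReal.coe_toReal hLt (ne_of_gt hbot)).symm⟩
      set y₀ : ℝ := xl / 2 with hy₀def
      have hy₀pos : 0 < y₀ := by simp [hy₀def]; linarith
      have hy₀lt : y₀ < xl := by simp [hy₀def]; linarith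
      have hHle : ∀ t ∈ Ioo (0:ℝ) xl, H t ≤ ℓ := by
        intro t ht
        have := hle t ht
        rw [hℓ] at this
        exact_mod_cast this
      -- lower bound for R near 0
      have hDanti : AntitoneOn (fun t => R t - ℓ * ψ t) (Ioc 0 y₀) := by
        refine antitoneOn_of_deriv_nonpos (convex_Ioc 0 y₀) ?_ ?_ ?_
        · intro t ht
          exact (((hR t ht.1).continuousAt).sub (((hψ1 t ht.1).continuousAt).const_mul ℓ)).continuousWithinAt
        · intro t ht
          rw [interior_Ioc] at ht
          exact (((hR t ht.1).sub ((hψ1 t ht.1).const_mul ℓ)).differentiableAt).differentiableWithinAt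
        · intro t ht
          rw [interior_Ioc] at ht
          have hd : HasDerivAt (fun t => R t - ℓ * ψ t) (R' t - ℓ * ψ' t) t :=
            (hR t ht.1).sub ((hψ1 t ht.1).const_mul ℓ)
          rw [hd.deriv]
          have hHt : H t ≤ ℓ := hHle t ⟨ht.1, lt_trans ht.2 hy₀lt⟩
          have hψ't := hψ'pos t ht.1
          have : R' t ≤ ℓ * ψ' t := by
            rw [hHdef] at hHt
            exact (div_le_iff₀ hψ't).mp hHt
          linarith
      have hRlb : ∀ x ∈ Ioc (0:ℝ) y₀, (R y₀ - ℓ * ψ y₀) - |ℓ| * ψ y₀ ≤ R x := by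
        intro x hx
        have h1 := hDanti hx ⟨hy₀pos, le_rfl⟩ hx.2
        have h2 : 0 < ψ x := hψpos x hx.1
        have h3 : ψ x ≤ ψ y₀ := (hψm.monotoneOn) hx.1 hy₀pos hx.2
        have hψy₀ : 0 < ψ y₀ := hψpos y₀ hy₀pos
        have h4 : -(|ℓ| * ψ y₀) ≤ ℓ * ψ x := by
          rcases le_or_gt 0 ℓ with h|h
          · rw [abs_of_nonneg h]; nlinarith
          · rw [abs_of_neg h]; nlinarith
        simp only at h1
        linarith
      set K₁ : ℝ := (R y₀ - ℓ * ψ y₀) - |ℓ| * ψ y₀ with hK₁def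
      set M : ℝ := max ℓ 0 * ψ y₀ - K₁ + 1 with hMdef
      -- obtain δ with Θ ≤ -M r on (0, δ)
      have hev : ∀ᶠ s in 𝓝[>] (0:ℝ), Θ s / r s ≤ -M := hTend.eventually (eventually_le_atBot (-M))
      obtain ⟨δ, hδmem, hδsub⟩ := mem_nhdsGT_iff_exists_Ioo_subset.mp hev
      have hδ0 : (0:ℝ) < δ := hδmem
      set δ' : ℝ := min δ y₀ with hδ'def
      have hδ'0 : 0 < δ' := lt_min hδ0 hy₀pos
      have hδθ : ∀ s ∈ Ioo (0:ℝ) δ', Θ s ≤ -M * r s := by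
        intro s hs
        have hs' : s ∈ Ioo (0:ℝ) δ := ⟨hs.1, lt_of_lt_of_le hs.2 (min_le_left _ _)⟩
        have hrs : 0 < r s := hrpos s hs.1
        have := hδsub hs'
        calc Θ s = (Θ s / r s) * r s := (div_mul_cancel₀ _ hrs.ne').symm
          _ ≤ -M * r s := mul_le_mul_of_nonneg_right this hrs.le
      set x : ℝ := δ' / 2 with hxdef
      have hx0 : 0 < x := by simp [hxdef]; linarith
      have hxδ' : x < δ' := by simp [hxdef]; linarith
      have hxy₀ : x ≤ y₀ := le_trans hxδ'.le (min_le_right _ _)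
      have hxxl : x < xl := lt_of_le_of_lt hxy₀ hy₀lt
      have hxmem : x ∈ Ioi (0:ℝ) := hx0
      -- A bound at x
      have hAbound : (∫ s in Ioc (0:ℝ) x, Θ s * Ψ s) ≤ -M * (ψ' x / (C * p' x)) := by
        have hkey2 : ∀ ε ∈ Ioo (0:ℝ) x,
            (∫ s in Ioc (0:ℝ) x, Θ s * Ψ s) - (∫ s in Ioc (0:ℝ) ε, Θ s * Ψ s)
            ≤ -M * (ψ' x / (C * p' x) - ψ' ε / (C * p' ε)) := by
          intro ε hε
          have hεx : ε ≤ x := hε.2.le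
          have hsub : uIcc ε x ⊆ Ioi 0 := by
            rw [uIcc_of_le hεx]; intro t ht; exact lt_of_lt_of_le hε.1 ht.1
          have hsub2 : Icc ε x ⊆ Ioo 0 δ' := by
            intro t ht
            exact ⟨lt_of_lt_of_le hε.1 ht.1, lt_of_le_of_lt ht.2 hxδ'⟩
          have hsplit : Ioc (0:ℝ) x = Ioc 0 ε ∪ Ioc ε x :=
            (Set.Ioc_union_Ioc_eq_Ioc hε.1.le hεx).symm
          have haddeq : (∫ s in Ioc (0:ℝ) x, Θ s * Ψ s)
              = (∫ s in Ioc (0:ℝ) ε, Θ s * Ψ s) + ∫ s in Ioc ε x, Θ s * Ψ s := by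
            rw [hsplit]
            exact setIntegral_union (Set.Ioc_disjoint_Ioc_of_le le_rfl) measurableSet_Ioc
              ((hΘIC ε hε.1).1)
              (((hΘIC x hx0).1).mono_set (Set.Ioc_subset_Ioc_left hε.1.le))
          have hint1 : IntervalIntegrable (fun s => Θ s * Ψ s) volume ε x :=
            ((hfΨc.mono hsub).intervalIntegrable)
          have hint2 : IntervalIntegrable (fun s => -M * (r s * Ψ s)) volume ε x :=
            (((hrc.mul hΨc).mono hsub).intervalIntegrable).const_mul _
          have h1 : (∫ s in ε..x, Θ s * Ψ s) ≤ ∫ s in ε..x, -M * (r s * Ψ s) := by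
            refine intervalIntegral.integral_mono_on hεx hint1 hint2 ?_
            intro t ht
            have htδ := hsub2 ht
            have hΨt := (hΨpos t htδ.1).le
            have h := mul_le_mul_of_nonneg_right (hδθ t htδ) hΨt
            calc Θ t * Ψ t ≤ (-M * r t) * Ψ t := h
              _ = -M * (r t * Ψ t) := by ring
          have h2 : (∫ s in ε..x, -M * (r s * Ψ s))
              = -M * (ψ' x / (C * p' x) - ψ' ε / (C * p' ε)) := by
            rw [intervalIntegral.integral_const_mul]
            congr 1
            exact intervalIntegral.integral_eq_sub_of_hasDerivAt
              (fun t ht => hu t (hsub ht)) (((hrc.mul hΨc).mono hsub).intervalIntegrable)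
          have h3 : (∫ s in Ioc ε x, Θ s * Ψ s)
              ≤ -M * (ψ' x / (C * p' x) - ψ' ε / (C * p' ε)) := by
            rw [← intervalIntegral.integral_of_le hεx]
            rw [h2] at h1
            exact h1
          rw [haddeq]
          linarith [h3]
        have hl1 : Tendsto (fun ε => (∫ s in Ioc (0:ℝ) x, Θ s * Ψ s)
            - (∫ s in Ioc (0:ℝ) ε, Θ s * Ψ s)) (𝓝[>] (0:ℝ))
            (𝓝 ((∫ s in Ioc (0:ℝ) x, Θ s * Ψ s) - 0)) := tendsto_const_nhds.sub hA0
        have hl2 : Tendsto (fun ε => -M * (ψ' x / (C * p' x) - ψ' ε / (C * p' ε)))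
            (𝓝[>] (0:ℝ)) (𝓝 (-M * (ψ' x / (C * p' x) - 0))) :=
          tendsto_const_nhds.mul (tendsto_const_nhds.sub hu0)
        have hfin := le_of_tendsto_of_tendsto hl1 hl2 ?_
        · simpa using hfin
        · filter_upwards [Ioo_mem_nhdsGT_of_mem (show (0:ℝ) ∈ Ico (0:ℝ) x from ⟨le_rfl, hx0⟩)]
            with ε hε
          exact hkey2 ε hε
      -- identity and conclusion
      have hid : R' x * ψ x - R x * ψ' x
          = -(∫ s in Ioc (0:ℝ) x, Θ s * Ψ s) * (C * p' x) := by
        rw [hRdef x hxmem, hR'def x hxmem]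
        linear_combination (-(∫ s in Ioc (0:ℝ) x, Θ s * Ψ s)) * hWr x hxmem
      have hCp'x : 0 < C * p' x := mul_pos hC (hp'pos x hxmem)
      have hψx : 0 < ψ x := hψpos x hxmem
      have hψ'x : 0 < ψ' x := hψ'pos x hxmem
      have h5 : M * ψ' x ≤ R' x * ψ x - R x * ψ' x := by
        have h6 := mul_le_mul_of_nonneg_right hAbound hCp'x.le
        have h7 : -M * (ψ' x / (C * p' x)) * (C * p' x) = -M * ψ' x := by
          rw [mul_assoc, div_mul_cancel₀ _ hCp'x.ne']
        rw [h7] at h6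
        rw [hid]
        linarith
      have h8 : R x + M ≤ H x * ψ x := by
        rw [hHdef]
        rw [div_mul_eq_mul_div, le_div_iff₀ hψ'x]
        nlinarith [h5]
      have h9 : H x ≤ ℓ := hHle x ⟨hx0, hxxl⟩
      have h10 : H x * ψ x ≤ ℓ * ψ x := mul_le_mul_of_nonneg_right h9 hψx.le
      have h11 : ℓ * ψ x ≤ max ℓ 0 * ψ y₀ := by
        have h3 : ψ x ≤ ψ y₀ := (hψm.monotoneOn) hx0 hy₀pos hxy₀
        rcases le_or_gt 0 ℓ with h|h
        · rw [max_eq_left h]; nlinarith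
        · rw [max_eq_right h.le]; nlinarith
      have h12 := hRlb x ⟨hx0, hxy₀⟩
      have : K₁ + M ≤ max ℓ 0 * ψ y₀ := by linarith
      rw [hMdef] at this
      linarith
    refine ⟨hLtop, ?_⟩
    rw [hpartb]
    rw [hLtop]
    exact le_top
  exact ⟨hparta, hpartb, hpartc⟩
end

section
/- Assume lim_{x↓0} ψ'(x)/p'(x) = 0, lim_{x↑∞} ψ(x) = ∞, lim_{x↑∞} R_Θ(x)/ψ(x) = 0, lim_{x↓0} φ(x) = ∞, and lim_{x↓0} R_Θ(x)/φ(x) = 0. Let x̲ ∈ (ξ, ∞] be the unique point such that the derivative of R_Θ'/ψ' is strictly negative on (0, x̲) and strictly positive on (x̲, ∞), assume x̲ < ∞, set L₀ := lim_{x↓0} R_Θ'(x)/ψ'(x) and x̄ := inf{ s > 0 : R_Θ'(s)/ψ'(s) > L₀ } (inf ∅ = ∞), and define F(γ, β) := ∫_γ^β ( R_Θ'(s)/ψ'(s) − R_Θ'(β)/ψ'(β) ) ψ'(s) ds for 0 < γ < β. Then there exist c★ ∈ (0, ∞], a unique strictly decreasing function γ★ : (0, c★) → (0, x̲), and a unique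 strictly increasing function β★ : (0, c★) → (x̲, x̄) such that for every c ∈ (0, c★): R_Θ'(x)/ψ'(x) − R_Θ'(β★(c))/ψ'(β★(c)) is strictly positive for x ∈ (0, γ★(c)), zero at x = γ★(c), and strictly negative for x ∈ (γ★(c), β★(c)); and F(γ★(c), β★(c)) = −c. No other points 0 < γ < β < ∞ satisfy the system R_Θ'(γ)/ψ'(γ) = R_Θ'(β)/ψ'(β) and F(γ, β) = −c. Moreover lim_{c↓0} β★(c) = lim_{c↓0} γ★(c) = x̲ and lim_{c↑c★} β★(c) = x̄. -/
open Filter Set MeasureTheory Topology intervalIntegral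

lemma aux_primitive_contAt {f : ℝ → ℝ} (hf : ContinuousOn f (Ioi 0)) {a x : ℝ}
    (ha : 0 < a) (hx : 0 < x) : ContinuousAt (fun y => ∫ t in a..y, f t) x := by
  have huIcc : uIcc a x ⊆ Ioi 0 := fun t ht => lt_of_lt_of_le (lt_min ha hx) ht.1
  have hint : IntervalIntegrable f volume a x := (hf.mono huIcc).intervalIntegrable
  have hmeas : StronglyMeasurableAtFilter f (𝓝 x) volume :=
    hf.stronglyMeasurableAtFilter isOpen_Ioi _ hx
  exact (integral_hasDerivAt_right hint hmeas (hf.continuousAt (isOpen_Ioi.mem_nhds hx))).continuousAt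

set_option maxHeartbeats 2000000 in
theorem stmt_13
    (b σ r : ℝ → ℝ) (r₀ r₁ : ℝ)
    (hbc : ContinuousOn b (Ioi 0))
    (hσc : ContinuousOn σ (Ioi 0))
    (hrc : ContinuousOn r (Ioi 0))
    (hσpos : ∀ x ∈ Ioi (0:ℝ), 0 < σ x)
    (hr₀ : 0 < r₀) (hr₀₁ : r₀ ≤ r₁)
    (hrbd : ∀ x ∈ Ioi (0:ℝ), r₀ ≤ r x ∧ r x ≤ r₁)
    (p' : ℝ → ℝ)
    (hp' : ∀ x ∈ Ioi (0:ℝ), p' x = Real.exp (-(2:ℝ) * ∫ s in (1:ℝ)..x, b s / (σ s) ^ 2))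
    (φ ψ φ' ψ' φ'' ψ'' : ℝ → ℝ)
    (hφ1 : ∀ x ∈ Ioi (0:ℝ), HasDerivAt φ (φ' x) x)
    (hφ2 : ∀ x ∈ Ioi (0:ℝ), HasDerivAt φ' (φ'' x) x)
    (hφ2c : ContinuousOn φ'' (Ioi 0))
    (hψ1 : ∀ x ∈ Ioi (0:ℝ), HasDerivAt ψ (ψ' x) x)
    (hψ2 : ∀ x ∈ Ioi (0:ℝ), HasDerivAt ψ' (ψ'' x) x)
    (hψ2c : ContinuousOn ψ'' (Ioi 0))
    (hφpos : ∀ x ∈ Ioi (0:ℝ), 0 < φ x)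
    (hφ'neg : ∀ x ∈ Ioi (0:ℝ), φ' x < 0)
    (hψpos : ∀ x ∈ Ioi (0:ℝ), 0 < ψ x)
    (hψ'pos : ∀ x ∈ Ioi (0:ℝ), 0 < ψ' x)
    (hφODE : ∀ x ∈ Ioi (0:ℝ), (1/2) * σ x ^ 2 * φ'' x + b x * φ' x - r x * φ x = 0)
    (hψODE : ∀ x ∈ Ioi (0:ℝ), (1/2) * σ x ^ 2 * ψ'' x + b x * ψ' x - r x * ψ x = 0)
    (C : ℝ) (hC : 0 < C)
    (hWr : ∀ x ∈ Ioi (0:ℝ), φ x * ψ' x - φ' x * ψ x = C * p' x)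
    (Ψ Φ : ℝ → ℝ)
    (hΨ : ∀ x ∈ Ioi (0:ℝ), Ψ x = 2 * ψ x / (C * σ x ^ 2 * p' x))
    (hΦ : ∀ x ∈ Ioi (0:ℝ), Φ x = 2 * φ x / (C * σ x ^ 2 * p' x))
    (Θ : ℝ → ℝ) (hΘc : ContinuousOn Θ (Ioi 0))
    (hΘIC : ∀ x ∈ Ioi (0:ℝ),
      IntegrableOn (fun s => Θ s * Ψ s) (Ioc 0 x) ∧
      IntegrableOn (fun s => Θ s * Φ s) (Ioi x))
    (ξ : ℝ) (hξ : 0 < ξ)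
    (hΘinc : StrictMonoOn (fun x => Θ x / r x) (Ioo 0 ξ))
    (hΘdec : StrictAntiOn (fun x => Θ x / r x) (Ioi ξ))
    (R R' : ℝ → ℝ)
    (hRdef : ∀ x ∈ Ioi (0:ℝ),
      R x = φ x * (∫ s in Ioc (0:ℝ) x, Θ s * Ψ s) + ψ x * (∫ s in Ioi x, Θ s * Φ s))
    (hR'def : ∀ x ∈ Ioi (0:ℝ),
      R' x = φ' x * (∫ s in Ioc (0:ℝ) x, Θ s * Ψ s) + ψ' x * (∫ s in Ioi x, Θ s * Φ s))
    (hψ'p'0 : Tendsto (fun x => ψ' x / p' x) (𝓝[>] (0:ℝ)) (𝓝 0))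
    (hψT : Tendsto ψ atTop atTop)
    (hRψT : Tendsto (fun x => R x / ψ x) atTop (𝓝 0))
    (hφ0 : Tendsto φ (𝓝[>] (0:ℝ)) atTop)
    (hRφ0 : Tendsto (fun x => R x / φ x) (𝓝[>] (0:ℝ)) (𝓝 0))
    (xl : ℝ) (hxlξ : ξ < xl)
    (hxl1 : ∀ x : ℝ, 0 < x → x < xl → deriv (fun y => R' y / ψ' y) x < 0)
    (hxl2 : ∀ x : ℝ, xl < x → 0 < deriv (fun y => R' y / ψ' y) x)
    (L0 : EReal)
    (hL0 : Tendsto (fun x => ((R' x / ψ' x : ℝ) : EReal)) (𝓝[>] (0:ℝ)) (𝓝 L0))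
    (xbar : EReal)
    (hxbar : xbar = sInf ((fun s : ℝ => (s : EReal)) ''
      {s : ℝ | 0 < s ∧ L0 < ((R' s / ψ' s : ℝ) : EReal)}))
    (Fb : ℝ → ℝ → ℝ)
    (hFbdef : ∀ γ β : ℝ, Fb γ β = ∫ s in γ..β, (R' s / ψ' s - R' β / ψ' β) * ψ' s) :
    ∃ cstar : EReal, 0 < cstar ∧ ∃ γs βs : ℝ → ℝ,
      StrictAntiOn γs {c : ℝ | 0 < c ∧ (c : EReal) < cstar} ∧
      StrictMonoOn βs {c : ℝ | 0 < c ∧ (c : EReal) < cstar} ∧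
      (∀ c : ℝ, 0 < c → (c : EReal) < cstar →
        0 < γs c ∧ γs c < xl ∧ xl < βs c ∧ (βs c : EReal) < xbar ∧
        (∀ x : ℝ, 0 < x → x < γs c → 0 < R' x / ψ' x - R' (βs c) / ψ' (βs c)) ∧
        R' (γs c) / ψ' (γs c) = R' (βs c) / ψ' (βs c) ∧
        (∀ x : ℝ, γs c < x → x < βs c → R' x / ψ' x - R' (βs c) / ψ' (βs c) < 0) ∧
        Fb (γs c) (βs c) = -c) ∧
      (∀ c : ℝ, 0 < c → (c : EReal) < cstar → ∀ γ β : ℝ, 0 < γ → γ < β →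
        R' γ / ψ' γ = R' β / ψ' β → Fb γ β = -c → γ = γs c ∧ β = βs c) ∧
      Tendsto βs (𝓝[>] (0:ℝ)) (𝓝 xl) ∧ Tendsto γs (𝓝[>] (0:ℝ)) (𝓝 xl) ∧
      Tendsto (fun c : ℝ => ((βs c : ℝ) : EReal))
        (Filter.comap (fun c : ℝ => (c : EReal)) (𝓝[<] cstar)) (𝓝 xbar) := by
  classical
  
  -- basic continuity facts
  have hψc : ContinuousOn ψ (Ioi 0) := fun x hx => ((hψ1 x hx).continuousAt).continuousWithinAt
  have hψ'c : ContinuousOn ψ' (Ioi 0) := fun x hx => ((hψ2 x hx).continuousAt).continuousWithinAt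
  have hφ'c : ContinuousOn φ' (Ioi 0) := fun x hx => ((hφ2 x hx).continuousAt).continuousWithinAt
  have hp'pos : ∀ x ∈ Ioi (0:ℝ), 0 < p' x := by
    intro x hx; rw [hp' x hx]; exact Real.exp_pos _
  have hp'c : ContinuousOn p' (Ioi 0) := by
    have hbσ : ContinuousOn (fun s => b s / (σ s)^2) (Ioi 0) :=
      hbc.div (hσc.pow 2) (fun x hx => pow_ne_zero 2 (hσpos x hx).ne')
    have : ContinuousOn (fun x => Real.exp (-(2:ℝ) * ∫ s in (1:ℝ)..x, b s / (σ s)^2)) (Ioi 0) := by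
      apply Real.continuous_exp.comp_continuousOn
      apply (continuousOn_const.mul ?_)
      intro x hx
      exact (aux_primitive_contAt hbσ one_pos hx).continuousWithinAt
    exact this.congr hp'
  have hΨc : ContinuousOn Ψ (Ioi 0) := by
    have : ContinuousOn (fun x => 2 * ψ x / (C * σ x ^ 2 * p' x)) (Ioi 0) := by
      apply ContinuousOn.div (continuousOn_const.mul hψc)
        ((continuousOn_const.mul (hσc.pow 2)).mul hp'c)
      intro x hx
      have := hσpos x hx; have := hp'pos x hx
      exact mul_ne_zero (mul_ne_zero hC.ne' (pow_ne_zero 2 (hσpos x hx).ne')) (hp'pos x hx).ne'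
    exact this.congr hΨ
  have hΦc : ContinuousOn Φ (Ioi 0) := by
    have hφc : ContinuousOn φ (Ioi 0) := fun x hx => ((hφ1 x hx).continuousAt).continuousWithinAt
    have : ContinuousOn (fun x => 2 * φ x / (C * σ x ^ 2 * p' x)) (Ioi 0) := by
      apply ContinuousOn.div (continuousOn_const.mul hφc)
        ((continuousOn_const.mul (hσc.pow 2)).mul hp'c)
      intro x hx
      have := hσpos x hx; have := hp'pos x hx
      exact mul_ne_zero (mul_ne_zero hC.ne' (pow_ne_zero 2 (hσpos x hx).ne')) (hp'pos x hx).ne'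
    exact this.congr hΦ
  have hΘΨc : ContinuousOn (fun s => Θ s * Ψ s) (Ioi 0) := hΘc.mul hΨc
  have hΘΦc : ContinuousOn (fun s => Θ s * Φ s) (Ioi 0) := hΘc.mul hΦc
  -- continuity of the integral terms
  have hAc : ∀ x ∈ Ioi (0:ℝ), ContinuousAt (fun x => ∫ s in Ioc (0:ℝ) x, Θ s * Ψ s) x := by
    intro x0 hx0
    simp only [mem_Ioi] at hx0
    set a := x0/2 with ha_def
    have ha : 0 < a := by positivity
    have hax0 : a < x0 := by simp only [ha_def]; linarith
    have heq : ∀ x ∈ Ioi a, (∫ s in Ioc (0:ℝ) x, Θ s * Ψ s)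
        = (∫ s in Ioc (0:ℝ) a, Θ s * Ψ s) + ∫ t in a..x, Θ t * Ψ t := by
      intro x hx
      simp only [mem_Ioi] at hx
      rw [intervalIntegral.integral_of_le hx.le]
      rw [← MeasureTheory.setIntegral_union (Set.Ioc_disjoint_Ioc_of_le le_rfl) measurableSet_Ioc
        (((hΘIC x (by simp only [mem_Ioi]; linarith)).1).mono_set (Set.Ioc_subset_Ioc_right hx.le))
        (((hΘIC x (by simp only [mem_Ioi]; linarith)).1).mono_set (Set.Ioc_subset_Ioc_left ha.le))]
      rw [Set.Ioc_union_Ioc_eq_Ioc ha.le hx.le]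
    have hca : ContinuousAt (fun x => (∫ s in Ioc (0:ℝ) a, Θ s * Ψ s) + ∫ t in a..x, Θ t * Ψ t) x0 :=
      (continuousAt_const.add (aux_primitive_contAt hΘΨc ha (by linarith)))
    apply hca.congr
    filter_upwards [isOpen_Ioi.mem_nhds (show x0 ∈ Ioi a from hax0)] with x hx
    exact (heq x hx).symm
  have hBc : ∀ x ∈ Ioi (0:ℝ), ContinuousAt (fun x => ∫ s in Ioi x, Θ s * Φ s) x := by
    intro x0 hx0
    simp only [mem_Ioi] at hx0
    set a := x0/2 with ha_def
    have ha : 0 < a := by positivity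
    have hax0 : a < x0 := by simp only [ha_def]; linarith
    have heq : ∀ x ∈ Ioi a, (∫ s in Ioi x, Θ s * Φ s)
        = (∫ s in Ioi a, Θ s * Φ s) - ∫ t in a..x, Θ t * Φ t := by
      intro x hx
      simp only [mem_Ioi] at hx
      rw [intervalIntegral.integral_of_le hx.le]
      have hsplit : (∫ s in Ioi a, Θ s * Φ s)
          = (∫ s in Ioc a x, Θ s * Φ s) + ∫ s in Ioi x, Θ s * Φ s := by
        rw [← MeasureTheory.setIntegral_union (Set.Ioc_disjoint_Ioi le_rfl) measurableSet_Ioi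
          (((hΘIC a (by simpa using ha)).2).mono_set (Set.Ioc_subset_Ioi_self))
          (((hΘIC a (by simpa using ha)).2).mono_set (Set.Ioi_subset_Ioi hx.le))]
        rw [Set.Ioc_union_Ioi_eq_Ioi hx.le]
      rw [hsplit]; ring
    have hca : ContinuousAt (fun x => (∫ s in Ioi a, Θ s * Φ s) - ∫ t in a..x, Θ t * Φ t) x0 :=
      (continuousAt_const.sub (aux_primitive_contAt hΘΦc ha (by linarith)))
    apply hca.congr
    filter_upwards [isOpen_Ioi.mem_nhds (show x0 ∈ Ioi a from hax0)] with x hx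
    exact (heq x hx).symm
  have hR'c : ContinuousOn R' (Ioi 0) := by
    have : ContinuousOn (fun x => φ' x * (∫ s in Ioc (0:ℝ) x, Θ s * Ψ s)
        + ψ' x * (∫ s in Ioi x, Θ s * Φ s)) (Ioi 0) := by
      apply ContinuousOn.add
      · exact hφ'c.mul (fun x hx => (hAc x hx).continuousWithinAt)
      · exact hψ'c.mul (fun x hx => (hBc x hx).continuousWithinAt)
    exact this.congr hR'def
  
  set H : ℝ → ℝ := fun x => R' x / ψ' x with hHdef
  have hHc : ContinuousOn H (Ioi 0) := hR'c.div hψ'c (fun x hx => (hψ'pos x hx).ne')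
  have hxl0 : (0:ℝ) < xl := lt_trans hξ hxlξ
  have hIocsub : Ioc (0:ℝ) xl ⊆ Ioi 0 := fun t ht => ht.1
  have hIcisub : Ici xl ⊆ Ioi (0:ℝ) := fun t ht => lt_of_lt_of_le hxl0 ht
  have hHanti : StrictAntiOn H (Ioc 0 xl) := by
    apply strictAntiOn_of_deriv_neg (convex_Ioc 0 xl) (hHc.mono hIocsub)
    intro x hx
    rw [interior_Ioc] at hx
    exact hxl1 x hx.1 hx.2
  have hHmono : StrictMonoOn H (Ici xl) := by
    apply strictMonoOn_of_deriv_pos (convex_Ici xl) (hHc.mono hIcisub)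
    intro x hx
    rw [interior_Ici] at hx
    exact hxl2 x hx
  have hHmin : ∀ s ∈ Ioi (0:ℝ), H xl ≤ H s := by
    intro s hs
    rcases le_or_gt s xl with h | h
    · rcases eq_or_lt_of_le h with rfl | h'
      · exact le_rfl
      · exact (hHanti ⟨hs, h⟩ ⟨hxl0, le_rfl⟩ h').le
    · exact (hHmono self_mem_Ici (mem_Ici.2 (le_of_lt h)) h).le
  -- H x < L0 on (0, xl]
  have hL0lt : ∀ x ∈ Ioc (0:ℝ) xl, ((H x : ℝ) : EReal) < L0 := by
    intro x hx
    have hx2 : x/2 ∈ Ioc (0:ℝ) xl := ⟨by linarith [hx.1], by linarith [hx.1, hx.2]⟩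
    have h1 : H x < H (x/2) := hHanti hx2 hx (by linarith [hx.1])
    have h2 : ((H (x/2) : ℝ) : EReal) ≤ L0 := by
      apply ge_of_tendsto hL0
      filter_upwards [Ioo_mem_nhdsGT_of_mem (show (0:ℝ) ∈ Ico 0 (x/2) from ⟨le_rfl, by linarith [hx.1]⟩)] with y hy
      have : H (x/2) ≤ H y := (hHanti ⟨hy.1, by linarith [hx.2, hy.2.le]⟩ hx2 hy.2).le
      exact_mod_cast this
    exact lt_of_lt_of_le (by exact_mod_cast h1) h2
  -- key: points with H β < L0 are below xbar
  have hlt_xbar : ∀ β : ℝ, xl ≤ β → ((H β : ℝ) : EReal) < L0 → (β : EReal) < xbar := by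
    intro β hβ hHβ
    have hβ0 : (0:ℝ) < β := lt_of_lt_of_le hxl0 hβ
    have hcont : ContinuousAt (fun s => ((H s : ℝ) : EReal)) β :=
      continuous_coe_real_ereal.continuousAt.comp (hHc.continuousAt (isOpen_Ioi.mem_nhds hβ0))
    have hev : ∀ᶠ s in 𝓝 β, ((H s : ℝ) : EReal) < L0 := hcont.eventually_lt continuousAt_const hHβ
    rcases Metric.eventually_nhds_iff.1 hev with ⟨δ, hδ, hball⟩
    have hlow : ∀ e ∈ ((fun s : ℝ => (s : EReal)) '' {s : ℝ | 0 < s ∧ L0 < ((R' s / ψ' s : ℝ) : EReal)}), ((β + δ/2 : ℝ) : EReal) ≤ e := by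
      rintro e ⟨s, hs, rfl⟩
      have hsnotin : ¬ (L0 < ((H s : ℝ) : EReal)) → False := fun h => h hs.2
      by_contra hcon
      push_neg at hcon
      rw [EReal.coe_lt_coe_iff] at hcon
      -- s < β + δ/2 ; show H s < L0 or ≤, contradiction with hs.2
      have : ((H s : ℝ) : EReal) < L0 ∨ ((H s : ℝ) : EReal) ≤ L0 := by
        rcases le_or_gt s xl with h | h
        · exact Or.inl (hL0lt s ⟨hs.1, h⟩)
        · rcases le_or_gt s β with h2 | h2
          · right
            rcases eq_or_lt_of_le h2 with rfl | h3
            · exact hHβ.le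
            · have := hHmono (le_of_lt h) hβ h3
              exact le_trans (by exact_mod_cast this.le) hHβ.le
          · left
            apply hball
            rw [Real.dist_eq, abs_of_pos (by linarith)]
            linarith
      rcases this with h | h
      · exact absurd hs.2 (not_lt.2 h.le)
      · exact absurd hs.2 (not_lt.2 h)
    have : ((β + δ/2 : ℝ) : EReal) ≤ xbar := by
      rw [hxbar]; exact le_sInf hlow
    refine lt_of_lt_of_le ?_ this
    exact_mod_cast (by linarith : β < β + δ/2)
  have hxl_lt_xbar : (xl : EReal) < xbar := hlt_xbar xl le_rfl (hL0lt xl ⟨hxl0, le_rfl⟩)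
  
  -- the open interval I = (xl, xbar)
  set I : Set ℝ := Ioi xl ∩ ((fun s : ℝ => (s : EReal)) ⁻¹' Iio xbar) with hIdef
  have hIopen : IsOpen I := isOpen_Ioi.inter (isOpen_Iio.preimage continuous_coe_real_ereal)
  have hIsub : I ⊆ Ioi (0:ℝ) := fun t ht => lt_trans hxl0 ht.1
  have hβL0 : ∀ β ∈ I, ((H β : ℝ) : EReal) < L0 := by
    rintro β ⟨hβ1, hβ2⟩
    by_contra hcon
    push_neg at hcon
    rcases eq_or_lt_of_le hcon with heq | hlt
    · -- H β = L0 : then every t > β is in S, so xbar ≤ β, contradiction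
      have : ∀ t : ℝ, β < t → xbar ≤ (t : EReal) := by
        intro t ht
        rw [hxbar]
        apply sInf_le
        refine ⟨t, ⟨lt_trans (hIsub ⟨hβ1, hβ2⟩) ht, ?_⟩, rfl⟩
        have : H β < H t := hHmono (mem_Ici.2 (le_of_lt hβ1)) (mem_Ici.2 (le_of_lt (lt_trans hβ1 ht))) ht
        calc L0 = ((H β : ℝ) : EReal) := heq
        _ < ((H t : ℝ) : EReal) := by exact_mod_cast this
      rcases exists_between (show (β:EReal) < xbar from hβ2) with ⟨u, hu1, hu2⟩
      have hune : u ≠ ⊤ := fun h => absurd (h ▸ hu2) (not_lt.2 le_top)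
      have hune' : u ≠ ⊥ := fun h => absurd (h ▸ hu1) (not_lt.2 bot_le)
      lift u to ℝ using ⟨hune, hune'⟩
      exact absurd (this u (by exact_mod_cast hu1)) (not_le.2 hu2)
    · -- β ∈ S so xbar ≤ β
      have : xbar ≤ (β : EReal) := by
        rw [hxbar]
        exact sInf_le ⟨β, ⟨hIsub ⟨hβ1, hβ2⟩, hlt⟩, rfl⟩
      exact absurd hβ2 (not_lt.2 this)
  have hβex : ∃ β : ℝ, β ∈ I := by
    rcases exists_between hxl_lt_xbar with ⟨u, hu1, hu2⟩
    have hune : u ≠ ⊤ := fun h => absurd (h ▸ hu2) (not_lt.2 le_top)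
    have hune' : u ≠ ⊥ := fun h => absurd (h ▸ hu1) (not_lt.2 bot_le)
    lift u to ℝ using ⟨hune, hune'⟩
    exact ⟨u, by exact_mod_cast hu1, hu2⟩
  -- unique point on the left branch with the same H-value
  have hγex : ∀ β ∈ I, ∃ γ, γ ∈ Ioo (0:ℝ) xl ∧ H γ = H β := by
    intro β hβ
    have hHβlt : ((H β : ℝ) : EReal) < L0 := hβL0 β hβ
    have hev : ∀ᶠ y in 𝓝[>] (0:ℝ), ((H β : ℝ) : EReal) < ((H y : ℝ) : EReal) :=
      hL0.eventually (eventually_gt_nhds hHβlt)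
    rcases (hev.and (Ioo_mem_nhdsGT_of_mem (show (0:ℝ) ∈ Ico 0 xl from ⟨le_rfl, hxl0⟩))).exists
      with ⟨y0, hy1, hy2⟩
    have hy1' : H β < H y0 := by exact_mod_cast hy1
    have hxlβ : H xl < H β := hHmono self_mem_Ici (mem_Ici.2 (le_of_lt hβ.1)) hβ.1
    have hsub : Icc y0 xl ⊆ Ioi (0:ℝ) := fun t ht => lt_of_lt_of_le hy2.1 ht.1
    have := intermediate_value_Ioo' (le_of_lt hy2.2) (hHc.mono hsub)
      (show H β ∈ Ioo (H xl) (H y0) from ⟨hxlβ, hy1'⟩)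
    rcases this with ⟨γ, hγ1, hγ2⟩
    exact ⟨γ, ⟨lt_trans hy2.1 hγ1.1, hγ1.2⟩, hγ2⟩
  have hγuniq : ∀ β ∈ I, ∀ g₁ g₂, g₁ ∈ Ioo (0:ℝ) xl → g₂ ∈ Ioo (0:ℝ) xl →
      H g₁ = H β → H g₂ = H β → g₁ = g₂ := by
    intro β _ g₁ g₂ h1 h2 e1 e2
    exact hHanti.injOn ⟨h1.1, h1.2.le⟩ ⟨h2.1, h2.2.le⟩ (e1.trans e2.symm)
  set Γ : ℝ → ℝ := fun β => if h : ∃ γ, γ ∈ Ioo (0:ℝ) xl ∧ H γ = H β then h.choose else 1 with hΓdef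
  have hΓ : ∀ β ∈ I, Γ β ∈ Ioo (0:ℝ) xl ∧ H (Γ β) = H β := by
    intro β hβ
    have h := hγex β hβ
    simp only [hΓdef, dif_pos h]
    exact h.choose_spec
  
  -- integration toolkit
  have hII : ∀ (f : ℝ → ℝ), ContinuousOn f (Ioi 0) → ∀ u v : ℝ, 0 < u → 0 < v →
      IntervalIntegrable f volume u v := fun f hf u v hu hv =>
    (hf.mono (fun t ht => lt_of_lt_of_le (lt_min hu hv) ht.1)).intervalIntegrable
  have hHψ'c : ContinuousOn (fun s => H s * ψ' s) (Ioi 0) := hHc.mul hψ'c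
  have hFTCψ : ∀ u v : ℝ, 0 < u → 0 < v → (∫ s in u..v, ψ' s) = ψ v - ψ u := by
    intro u v hu hv
    apply intervalIntegral.integral_eq_sub_of_hasDerivAt
    · intro x hx
      exact hψ1 x (lt_of_lt_of_le (lt_min hu hv) hx.1)
    · exact hII ψ' hψ'c u v hu hv
  have hFbrw : ∀ u v : ℝ, 0 < u → 0 < v →
      Fb u v = (∫ s in u..v, H s * ψ' s) - H v * (ψ v - ψ u) := by
    intro u v hu hv
    rw [hFbdef u v]
    have : ∀ s, (R' s / ψ' s - R' v / ψ' v) * ψ' s = H s * ψ' s - H v * ψ' s := by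
      intro s; rw [sub_mul]
    simp only [this]
    rw [intervalIntegral.integral_sub (hII _ hHψ'c u v hu hv)
      ((hII _ hψ'c u v hu hv).const_mul (H v)),
      intervalIntegral.integral_const_mul, hFTCψ u v hu hv]
  have hψmono : StrictMonoOn ψ (Ioi 0) := by
    apply strictMonoOn_of_deriv_pos (convex_Ioi 0) hψc
    intro x hx
    rw [interior_Ioi] at hx
    rw [(hψ1 x hx).deriv]
    exact hψ'pos x hx
  set G : ℝ → ℝ := fun β => Fb (Γ β) β with hGdef
  -- sign facts
  have hsign1 : ∀ β ∈ I, ∀ x, 0 < x → x < Γ β → H β < H x := by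
    intro β hβ x hx1 hx2
    obtain ⟨hmem, heq⟩ := hΓ β hβ
    rw [← heq]
    exact hHanti ⟨hx1, le_of_lt (lt_trans hx2 hmem.2)⟩ ⟨hmem.1, hmem.2.le⟩ hx2
  have hsign2 : ∀ β ∈ I, ∀ x, Γ β < x → x < β → H x < H β := by
    intro β hβ x hx1 hx2
    obtain ⟨hmem, heq⟩ := hΓ β hβ
    rcases le_or_gt x xl with h | h
    · rw [← heq]
      exact hHanti ⟨hmem.1, hmem.2.le⟩ ⟨lt_trans hmem.1 hx1, h⟩ hx1
    · exact hHmono (mem_Ici.2 (le_of_lt h)) (mem_Ici.2 (le_of_lt hβ.1)) hx2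
  have hGneg : ∀ β ∈ I, G β < 0 := by
    intro β hβ
    obtain ⟨hmem, heq⟩ := hΓ β hβ
    have hβ0 : (0:ℝ) < β := hIsub hβ
    have hΓβ : Γ β < β := lt_trans hmem.2 hβ.1
    have hpos : (0:ℝ) < ∫ s in (Γ β)..β, (H β - H s) * ψ' s := by
      apply intervalIntegral.intervalIntegral_pos_of_pos_on
      · exact hII _ ((continuousOn_const.sub hHc).mul hψ'c) _ _ hmem.1 hβ0
      · intro x hx
        have hx0 : (0:ℝ) < x := lt_trans hmem.1 hx.1
        have := hsign2 β hβ x hx.1 hx.2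
        have := hψ'pos x hx0
        nlinarith
      · exact hΓβ
    have : G β = - ∫ s in (Γ β)..β, (H β - H s) * ψ' s := by
      rw [hGdef]
      simp only [hFbdef]
      rw [← intervalIntegral.integral_neg]
      congr 1 with s
      simp only [hHdef]; ring
    rw [this]; linarith
  
  have hGalt : ∀ β : ℝ, G β = ∫ s in (Γ β)..β, (H s - H β) * ψ' s := fun β => hFbdef (Γ β) β
  have hf2c : ∀ c : ℝ, ContinuousOn (fun s => (H s - c) * ψ' s) (Ioi 0) :=
    fun c => (hHc.sub continuousOn_const).mul hψ'c
  have hGanti : StrictAntiOn G I := by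
    intro β1 hβ1 β2 hβ2 h12
    obtain ⟨hm1, he1⟩ := hΓ β1 hβ1
    obtain ⟨hm2, he2⟩ := hΓ β2 hβ2
    have hHβ12 : H β1 < H β2 := hHmono (mem_Ici.2 (le_of_lt hβ1.1)) (mem_Ici.2 (le_of_lt hβ2.1)) h12
    have hγ21 : Γ β2 < Γ β1 := by
      rw [← (hHanti.lt_iff_gt ⟨hm1.1, hm1.2.le⟩ ⟨hm2.1, hm2.2.le⟩)]
      rw [he1, he2]; exact hHβ12
    have hβ10 : (0:ℝ) < β1 := hIsub hβ1
    have hβ20 : (0:ℝ) < β2 := hIsub hβ2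
    set f2 : ℝ → ℝ := fun s => (H s - H β2) * ψ' s with hf2
    have hint : ∀ u v : ℝ, 0 < u → 0 < v → IntervalIntegrable f2 volume u v :=
      fun u v hu hv => hII f2 (hf2c (H β2)) u v hu hv
    have hsplit : G β2 = (∫ s in (Γ β2)..(Γ β1), f2 s) + (∫ s in (Γ β1)..β1, f2 s)
        + (∫ s in β1..β2, f2 s) := by
      rw [hGalt β2]
      rw [intervalIntegral.integral_add_adjacent_intervals
        (hint _ _ hm2.1 hm1.1) (hint _ _ hm1.1 hβ10),
        intervalIntegral.integral_add_adjacent_intervals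
        (hint _ _ hm2.1 hβ10) (hint _ _ hβ10 hβ20)]
    have hT1 : (∫ s in (Γ β2)..(Γ β1), f2 s) ≤ 0 := by
      have : (∫ s in (Γ β2)..(Γ β1), f2 s) ≤ ∫ s in (Γ β2)..(Γ β1), (0:ℝ) := by
        apply intervalIntegral.integral_mono_on hγ21.le (hint _ _ hm2.1 hm1.1)
          intervalIntegrable_const
        intro x hx
        have hx0 : (0:ℝ) < x := lt_of_lt_of_le hm2.1 hx.1
        have hHx : H x ≤ H β2 := by
          rw [← he2]
          rcases eq_or_lt_of_le hx.1 with rfl | h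
          · exact le_rfl
          · exact (hHanti ⟨hm2.1, hm2.2.le⟩ ⟨hx0, le_of_lt (lt_of_le_of_lt hx.2 hm1.2)⟩ h).le
        have := (hψ'pos x hx0).le
        simp only [hf2]
        nlinarith
      simpa using this
    have hT3 : (∫ s in β1..β2, f2 s) ≤ 0 := by
      have : (∫ s in β1..β2, f2 s) ≤ ∫ s in β1..β2, (0:ℝ) := by
        apply intervalIntegral.integral_mono_on h12.le (hint _ _ hβ10 hβ20)
          intervalIntegrable_const
        intro x hx
        have hx0 : (0:ℝ) < x := lt_of_lt_of_le hβ10 hx.1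
        have hHx : H x ≤ H β2 := by
          rcases eq_or_lt_of_le hx.2 with rfl | h
          · exact le_rfl
          · exact (hHmono (mem_Ici.2 (le_trans hβ1.1.le hx.1)) (mem_Ici.2 (le_of_lt hβ2.1)) h).le
        have := (hψ'pos x hx0).le
        simp only [hf2]
        nlinarith
      simpa using this
    have hT2 : (∫ s in (Γ β1)..β1, f2 s) < G β1 := by
      have heq : (∫ s in (Γ β1)..β1, f2 s)
          = G β1 + (H β1 - H β2) * (ψ β1 - ψ (Γ β1)) := by
        rw [hGalt β1]
        have : ∀ s, f2 s = (H s - H β1) * ψ' s + (H β1 - H β2) * ψ' s := by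
          intro s; simp only [hf2]; ring
        simp only [this]
        rw [intervalIntegral.integral_add (hII _ (hf2c (H β1)) _ _ hm1.1 hβ10)
          ((hII ψ' hψ'c _ _ hm1.1 hβ10).const_mul _),
          intervalIntegral.integral_const_mul, hFTCψ _ _ hm1.1 hβ10]
      rw [heq]
      have hψlt : ψ (Γ β1) < ψ β1 := hψmono hm1.1 (hIsub hβ1) (lt_trans hm1.2 hβ1.1)
      nlinarith
    linarith
  
  -- continuity of Γ on I
  have hΓcont : ∀ β0 ∈ I, ContinuousAt Γ β0 := by
    intro β0 hβ0
    obtain ⟨hm0, he0⟩ := hΓ β0 hβ0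
    rw [ContinuousAt, Metric.tendsto_nhds]
    intro ε hε
    set a : ℝ := max (Γ β0 - ε/2) (Γ β0 / 2) with hadef
    set bb : ℝ := min (Γ β0 + ε/2) ((Γ β0 + xl) / 2) with hbdef
    have ha0 : 0 < a := lt_of_lt_of_le (by linarith [hm0.1]) (le_max_right _ _)
    have haγ : a < Γ β0 := max_lt (by linarith) (by linarith [hm0.1])
    have hγb : Γ β0 < bb := lt_min (by linarith) (by linarith [hm0.2])
    have hbxl : bb < xl := lt_of_le_of_lt (min_le_right _ _) (by linarith [hm0.2])
    have hamem : a ∈ Ioc (0:ℝ) xl := ⟨ha0, by linarith⟩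
    have hbmem : bb ∈ Ioc (0:ℝ) xl := ⟨lt_trans ha0 (lt_trans haγ hγb), hbxl.le⟩
    have hHab : H bb < H (Γ β0) ∧ H (Γ β0) < H a :=
      ⟨hHanti ⟨hm0.1, hm0.2.le⟩ hbmem hγb, hHanti hamem ⟨hm0.1, hm0.2.le⟩ haγ⟩
    have hHco : ContinuousAt H β0 := hHc.continuousAt (isOpen_Ioi.mem_nhds (hIsub hβ0))
    have hev1 : ∀ᶠ β in 𝓝 β0, H β < H a := by
      apply hHco.eventually_lt continuousAt_const
      rw [← he0]; exact hHab.2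
    have hev2 : ∀ᶠ β in 𝓝 β0, H bb < H β := by
      apply ContinuousAt.eventually_lt continuousAt_const hHco
      rw [← he0]; exact hHab.1
    filter_upwards [hev1, hev2, hIopen.mem_nhds hβ0] with β h1 h2 hβI
    obtain ⟨hmβ, heβ⟩ := hΓ β hβI
    have hga : a < Γ β := by
      rw [← (hHanti.lt_iff_gt ⟨hmβ.1, hmβ.2.le⟩ hamem)]
      rw [heβ]; exact h1
    have hgb : Γ β < bb := by
      rw [← (hHanti.lt_iff_gt hbmem ⟨hmβ.1, hmβ.2.le⟩)]
      rw [heβ]; exact h2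
    rw [Real.dist_eq, abs_lt]
    constructor
    · have : Γ β0 - ε/2 ≤ a := le_max_left _ _
      linarith
    · have : bb ≤ Γ β0 + ε/2 := min_le_left _ _
      linarith
  -- continuity of G on I
  have hGcont : ∀ β0 ∈ I, ContinuousAt G β0 := by
    intro β0 hβ0
    obtain ⟨hm0, he0⟩ := hΓ β0 hβ0
    set a0 : ℝ := Γ β0 / 2 with ha0def
    have ha0 : 0 < a0 := by have := hm0.1; simp only [ha0def]; linarith
    have hrep : ∀ β ∈ I, a0 < Γ β → G β = (∫ s in a0..β, H s * ψ' s)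
        - (∫ s in a0..(Γ β), H s * ψ' s) - H β * (ψ β - ψ (Γ β)) := by
      intro β hβI haΓ
      obtain ⟨hmβ, heβ⟩ := hΓ β hβI
      have hβpos : (0:ℝ) < β := hIsub hβI
      show Fb (Γ β) β = _
      rw [hFbrw _ _ hmβ.1 hβpos]
      have : (∫ s in a0..(Γ β), H s * ψ' s) + (∫ s in (Γ β)..β, H s * ψ' s)
          = ∫ s in a0..β, H s * ψ' s :=
        intervalIntegral.integral_add_adjacent_intervals
          (hII _ hHψ'c _ _ ha0 hmβ.1) (hII _ hHψ'c _ _ hmβ.1 hβpos)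
      rw [← this]; ring
    have hΓc : ContinuousAt Γ β0 := hΓcont β0 hβ0
    have hcont2 : ContinuousAt (fun β => (∫ s in a0..β, H s * ψ' s)
        - (∫ s in a0..(Γ β), H s * ψ' s) - H β * (ψ β - ψ (Γ β))) β0 := by
      have hβ0pos : (0:ℝ) < β0 := hIsub hβ0
      have c1 : ContinuousAt (fun β => ∫ s in a0..β, H s * ψ' s) β0 :=
        aux_primitive_contAt hHψ'c ha0 hβ0pos
      have c2 : ContinuousAt (fun β => ∫ s in a0..(Γ β), H s * ψ' s) β0 :=
        (aux_primitive_contAt hHψ'c ha0 hm0.1).comp hΓc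
      have c3 : ContinuousAt H β0 := hHc.continuousAt (isOpen_Ioi.mem_nhds hβ0pos)
      have c4 : ContinuousAt ψ β0 := (hψ1 β0 hβ0pos).continuousAt
      have c5 : ContinuousAt (fun β => ψ (Γ β)) β0 :=
        ((hψ1 (Γ β0) hm0.1).continuousAt).comp hΓc
      exact (c1.sub c2).sub (c3.mul (c4.sub c5))
    apply hcont2.congr
    have hevΓ : ∀ᶠ β in 𝓝 β0, a0 < Γ β := by
      have : ∀ᶠ y in 𝓝 (Γ β0), a0 < y := eventually_gt_nhds (by simp only [ha0def]; linarith [hm0.1])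
      exact hΓc.eventually this
    filter_upwards [hIopen.mem_nhds hβ0, hevΓ] with β hβI haΓ
    exact (hrep β hβI haΓ).symm
  
  have hnegG : ∀ β ∈ I, -G β = ∫ s in (Γ β)..β, (H β - H s) * ψ' s := by
    intro β hβ
    rw [hGalt β, ← intervalIntegral.integral_neg]
    congr 1 with s
    ring
  -- G is small just to the right of xl
  have hGsmall : ∀ c : ℝ, 0 < c → ∀ d : ℝ, xl < d → ∃ β ∈ I, β < d ∧ -G β < c := by
    intro c hc d hd
    set ψb : ℝ := ψ (xl + 1) with hψbdef
    have hψb : 0 < ψb := hψpos _ (by simp only [mem_Ioi]; linarith)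
    have hHxlc : ContinuousAt H xl := hHc.continuousAt (isOpen_Ioi.mem_nhds hxl0)
    have hevH : ∀ᶠ β in 𝓝 xl, H β - H xl < c / ψb := by
      apply ContinuousAt.eventually_lt (hHxlc.sub continuousAt_const) continuousAt_const
      show H xl - H xl < c / ψb
      simp only [sub_self]
      positivity
    rcases Metric.eventually_nhds_iff.1 hevH with ⟨δ, hδ, hball⟩
    obtain ⟨β1, hβ1⟩ := hβex
    set u : ℝ := min d (xl + 1) with hudef
    have hu : xl < u := lt_min hd (by linarith)
    set β : ℝ := min β1 (min (xl + δ/2) ((xl + u)/2)) with hβdef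
    have hβxl : xl < β := lt_min hβ1.1 (lt_min (by linarith) (by linarith))
    have hβI : β ∈ I := by
      refine ⟨hβxl, ?_⟩
      have : (β : EReal) ≤ (β1 : EReal) := by exact_mod_cast min_le_left _ _
      exact lt_of_le_of_lt this hβ1.2
    have hβd : β < d := by
      have h1 : β ≤ (xl + u)/2 := le_trans (min_le_right _ _) (min_le_right _ _)
      have h2 : u ≤ d := min_le_left _ _
      linarith
    have hβxl1 : β ≤ xl + 1 := by
      have h1 : β ≤ (xl + u)/2 := le_trans (min_le_right _ _) (min_le_right _ _)
      have h2 : u ≤ xl + 1 := min_le_right _ _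
      linarith
    have hβδ : H β - H xl < c / ψb := by
      apply hball
      rw [Real.dist_eq, abs_of_pos (by linarith)]
      have : β ≤ xl + δ/2 := le_trans (min_le_right _ _) (min_le_left _ _)
      linarith
    obtain ⟨hmβ, heβ⟩ := hΓ β hβI
    have hβ0 : (0:ℝ) < β := hIsub hβI
    refine ⟨β, hβI, hβd, ?_⟩
    rw [hnegG β hβI]
    have hb1 : (∫ s in (Γ β)..β, (H β - H s) * ψ' s)
        ≤ ∫ s in (Γ β)..β, (H β - H xl) * ψ' s := by
      apply intervalIntegral.integral_mono_on (lt_trans hmβ.2 hβxl).le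
        (hII _ ((continuousOn_const.sub hHc).mul hψ'c) _ _ hmβ.1 hβ0)
        ((hII ψ' hψ'c _ _ hmβ.1 hβ0).const_mul _)
      intro x hx
      have hx0 : (0:ℝ) < x := lt_of_lt_of_le hmβ.1 hx.1
      have h1 : H xl ≤ H x := hHmin x hx0
      have h2 : (0:ℝ) ≤ ψ' x := (hψ'pos x hx0).le
      show (H β - H x) * ψ' x ≤ (H β - H xl) * ψ' x
      nlinarith
    have hb2 : (∫ s in (Γ β)..β, (H β - H xl) * ψ' s)
        = (H β - H xl) * (ψ β - ψ (Γ β)) := by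
      rw [intervalIntegral.integral_const_mul, hFTCψ _ _ hmβ.1 hβ0]
    have h3 : (0:ℝ) ≤ H β - H xl := by linarith [hHmin β hβ0]
    have h4 : 0 < ψ (Γ β) := hψpos _ hmβ.1
    have h5 : ψ β ≤ ψb := by
      rcases eq_or_lt_of_le hβxl1 with h | h
      · rw [hψbdef, ← h]
      · exact (hψmono (mem_Ioi.2 hβ0) (mem_Ioi.2 (by linarith)) h).le
    have h6 : (H β - H xl) * (ψ β - ψ (Γ β)) ≤ (H β - H xl) * ψb := by nlinarith
    have h7 : (H β - H xl) * ψb < c := (lt_div_iff₀ hψb).1 hβδ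
    linarith
  
  -- comparison helper
  have hGlt : ∀ β ∈ I, ∀ β' ∈ I, G β' < G β → β < β' := by
    intro β hβ β' hβ' h
    by_contra hcon
    push_neg at hcon
    rcases eq_or_lt_of_le hcon with rfl | hlt
    · exact lt_irrefl _ h
    · exact absurd (hGanti hβ' hβ hlt) (not_lt.2 h.le)
  set cstar : EReal := sSup ((fun β => ((-G β : ℝ) : EReal)) '' I) with hcstardef
  have hcstar_pos : (0:EReal) < cstar := by
    obtain ⟨β1, hβ1⟩ := hβex
    have h1 : ((-G β1 : ℝ) : EReal) ≤ cstar := le_sSup ⟨β1, hβ1, rfl⟩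
    have h2 : (0:EReal) < ((-G β1:ℝ):EReal) := by
      exact_mod_cast (by linarith [hGneg β1 hβ1] : (0:ℝ) < -G β1)
    exact lt_of_lt_of_le h2 h1
  have hexu : ∀ c : ℝ, 0 < c → (c:EReal) < cstar → ∃ β ∈ I, G β = -c := by
    intro c hc hcs
    rw [hcstardef, lt_sSup_iff] at hcs
    obtain ⟨e, ⟨β1, hβ1I, rfl⟩, hce⟩ := hcs
    have hce' : c < -G β1 := by
      have h' : ((c:ℝ):EReal) < ((-G β1:ℝ):EReal) := hce
      exact_mod_cast h'
    obtain ⟨β0, hβ0I, hβ01, hG0⟩ := hGsmall c hc β1 hβ1I.1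
    have hsub : Icc β0 β1 ⊆ I := by
      intro t ht
      refine ⟨lt_of_lt_of_le hβ0I.1 ht.1, ?_⟩
      have h1 : ((t:ℝ):EReal) ≤ (β1:EReal) := by exact_mod_cast ht.2
      exact lt_of_le_of_lt h1 hβ1I.2
    have hGc : ContinuousOn G (Icc β0 β1) := fun t ht => (hGcont t (hsub ht)).continuousWithinAt
    have := intermediate_value_Ioo' (le_of_lt hβ01) hGc
      (show -c ∈ Ioo (G β1) (G β0) from ⟨by linarith, by linarith⟩)
    obtain ⟨β, hβm, hβe⟩ := this
    exact ⟨β, hsub ⟨hβm.1.le, hβm.2.le⟩, hβe⟩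
  set βs : ℝ → ℝ := fun c => if h : ∃ β ∈ I, G β = -c then h.choose else 1 with hβsdef
  have hβs : ∀ c : ℝ, 0 < c → (c:EReal) < cstar → βs c ∈ I ∧ G (βs c) = -c := by
    intro c hc hcs
    have h := hexu c hc hcs
    simp only [hβsdef, dif_pos h]
    exact h.choose_spec
  set γs : ℝ → ℝ := fun c => Γ (βs c) with hγsdef
  have hβslt : ∀ c1 c2 : ℝ, 0 < c1 → (c1:EReal) < cstar → 0 < c2 → (c2:EReal) < cstar →
      c1 < c2 → βs c1 < βs c2 := by
    intro c1 c2 h1 h1' h2 h2' h12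
    obtain ⟨hI1, hG1⟩ := hβs c1 h1 h1'
    obtain ⟨hI2, hG2⟩ := hβs c2 h2 h2'
    apply hGlt _ hI1 _ hI2
    rw [hG1, hG2]; linarith
  -- the good-range eventual facts
  obtain ⟨m, hm0, hmcs⟩ : ∃ m : ℝ, 0 < m ∧ (m:EReal) < cstar := by
    rcases exists_between hcstar_pos with ⟨u, hu1, hu2⟩
    have hune : u ≠ ⊤ := fun h => absurd (h ▸ hu2) (not_lt.2 le_top)
    have hune' : u ≠ ⊥ := fun h => absurd (h ▸ hu1) (not_lt.2 bot_le)
    lift u to ℝ using ⟨hune, hune'⟩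
    exact ⟨u, by exact_mod_cast hu1, hu2⟩
  have hgood : ∀ c : ℝ, c ∈ Ioo (0:ℝ) m → 0 < c ∧ (c:EReal) < cstar := by
    intro c hc
    refine ⟨hc.1, lt_trans ?_ hmcs⟩
    exact_mod_cast hc.2
  have hβsT : Tendsto βs (𝓝[>] (0:ℝ)) (𝓝 xl) := by
    rw [tendsto_order]
    constructor
    · intro a ha
      filter_upwards [Ioo_mem_nhdsGT_of_mem (show (0:ℝ) ∈ Ico 0 m from ⟨le_rfl, hm0⟩)] with c hc
      obtain ⟨hcI, _⟩ := hβs c (hgood c hc).1 (hgood c hc).2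
      exact lt_trans ha hcI.1
    · intro a ha
      obtain ⟨β', hβ'I, hβ'a, _⟩ := hGsmall 1 one_pos a ha
      set c' : ℝ := -G β' with hc'def
      have hc' : 0 < c' := by have := hGneg β' hβ'I; simp only [hc'def]; linarith
      filter_upwards [Ioo_mem_nhdsGT_of_mem
        (show (0:ℝ) ∈ Ico 0 (min m c') from ⟨le_rfl, lt_min hm0 hc'⟩)] with c hc
      have hcg := hgood c ⟨hc.1, lt_of_lt_of_le hc.2 (min_le_left _ _)⟩
      obtain ⟨hcI, hGc⟩ := hβs c hcg.1 hcg.2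
      have hcc' : c < c' := lt_of_lt_of_le hc.2 (min_le_right _ _)
      have : βs c < β' := by
        apply hGlt _ hcI _ hβ'I
        rw [hGc]; simp only [hc'def] at hcc' ⊢; linarith
      linarith
  have hγsT : Tendsto γs (𝓝[>] (0:ℝ)) (𝓝 xl) := by
    rw [tendsto_order]
    constructor
    · intro a ha
      rcases le_or_gt a 0 with ha0 | ha0
      · filter_upwards [Ioo_mem_nhdsGT_of_mem (show (0:ℝ) ∈ Ico 0 m from ⟨le_rfl, hm0⟩)] with c hc
        obtain ⟨hcI, _⟩ := hβs c (hgood c hc).1 (hgood c hc).2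
        have := (hΓ (βs c) hcI).1.1
        exact lt_of_le_of_lt ha0 this
      · have hHa : H xl < H a := hHanti ⟨ha0, ha.le⟩ ⟨hxl0, le_rfl⟩ ha
        have hHcomp : Tendsto (fun c => H (βs c)) (𝓝[>] (0:ℝ)) (𝓝 (H xl)) :=
          (hHc.continuousAt (isOpen_Ioi.mem_nhds hxl0)).tendsto.comp hβsT
        filter_upwards [hHcomp.eventually (eventually_lt_nhds hHa),
          Ioo_mem_nhdsGT_of_mem (show (0:ℝ) ∈ Ico 0 m from ⟨le_rfl, hm0⟩)] with c hHlt hc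
        obtain ⟨hcI, _⟩ := hβs c (hgood c hc).1 (hgood c hc).2
        obtain ⟨hmem, heq⟩ := hΓ (βs c) hcI
        have : H (Γ (βs c)) < H a := by rw [heq]; exact hHlt
        have := (hHanti.lt_iff_gt ⟨hmem.1, hmem.2.le⟩ ⟨ha0, ha.le⟩).1 this
        exact this
    · intro a ha
      filter_upwards [Ioo_mem_nhdsGT_of_mem (show (0:ℝ) ∈ Ico 0 m from ⟨le_rfl, hm0⟩)] with c hc
      obtain ⟨hcI, _⟩ := hβs c (hgood c hc).1 (hgood c hc).2
      exact lt_trans (hΓ (βs c) hcI).1.2 ha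
  
  -- the EReal limit at cstar
  have hβsTop : Tendsto (fun c : ℝ => ((βs c : ℝ) : EReal))
      (Filter.comap (fun c : ℝ => (c : EReal)) (𝓝[<] cstar)) (𝓝 xbar) := by
    rw [tendsto_order]
    have hevgood : ∀ᶠ c : ℝ in Filter.comap (fun c : ℝ => (c : EReal)) (𝓝[<] cstar),
        0 < c ∧ (c:EReal) < cstar := by
      have h1 : ∀ᶠ x : EReal in 𝓝[<] cstar, 0 < x ∧ x < cstar := by
        have : ∀ᶠ x : EReal in 𝓝[<] cstar, 0 < x :=
          eventually_nhdsWithin_of_eventually_nhds (eventually_gt_nhds hcstar_pos)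
        exact this.and self_mem_nhdsWithin
      filter_upwards [tendsto_comap.eventually h1] with c hc
      exact ⟨by exact_mod_cast hc.1, hc.2⟩
    constructor
    · intro a ha
      -- find a real y ∈ I with a < y
      obtain ⟨y, hyI, hay⟩ : ∃ y : ℝ, y ∈ I ∧ a < (y:EReal) := by
        have hmax : max a (xl:EReal) < xbar := max_lt ha hxl_lt_xbar
        rcases exists_between hmax with ⟨u, hu1, hu2⟩
        have hune : u ≠ ⊤ := fun h => absurd (h ▸ hu2) (not_lt.2 le_top)
        have hune' : u ≠ ⊥ := fun h => absurd (h ▸ hu1) (not_lt.2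
          (le_trans bot_le (le_max_right a (xl:EReal))))
        lift u to ℝ using ⟨hune, hune'⟩
        have hxlu : (xl:EReal) < (u:EReal) := lt_of_le_of_lt (le_max_right _ _) hu1
        exact ⟨u, ⟨by exact_mod_cast hxlu, hu2⟩, lt_of_le_of_lt (le_max_left _ _) hu1⟩
      -- -G y is an admissible level strictly below cstar
      obtain ⟨y2, hy2I, hyy2⟩ : ∃ y2 : ℝ, y2 ∈ I ∧ y < y2 := by
        rcases exists_between (show (y:EReal) < xbar from hyI.2) with ⟨u, hu1, hu2⟩
        have hune : u ≠ ⊤ := fun h => absurd (h ▸ hu2) (not_lt.2 le_top)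
        have hune' : u ≠ ⊥ := fun h => absurd (h ▸ hu1) (not_lt.2 bot_le)
        lift u to ℝ using ⟨hune, hune'⟩
        have : y < u := by exact_mod_cast hu1
        exact ⟨u, ⟨lt_trans hyI.1 this, hu2⟩, this⟩
      set c0 : ℝ := -G y with hc0def
      have hc0pos : 0 < c0 := by have := hGneg y hyI; simp only [hc0def]; linarith
      have hc0cs : (c0:EReal) < cstar := by
        have h1 : ((-G y2:ℝ):EReal) ≤ cstar := le_sSup ⟨y2, hy2I, rfl⟩
        have h2 : G y2 < G y := hGanti hyI hy2I hyy2
        refine lt_of_lt_of_le ?_ h1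
        exact_mod_cast (by simp only [hc0def]; linarith : c0 < -G y2)
      have hev2 : ∀ᶠ c : ℝ in Filter.comap (fun c : ℝ => (c : EReal)) (𝓝[<] cstar),
          (c0:EReal) < (c:EReal) := by
        have : ∀ᶠ x : EReal in 𝓝[<] cstar, (c0:EReal) < x :=
          eventually_nhdsWithin_of_eventually_nhds (eventually_gt_nhds hc0cs)
        exact tendsto_comap.eventually this
      filter_upwards [hevgood, hev2] with c hcg hcc0
      have hcc0' : c0 < c := by exact_mod_cast hcc0
      obtain ⟨hcI, hGc⟩ := hβs c hcg.1 hcg.2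
      have : y < βs c := by
        apply hGlt _ hyI _ hcI
        rw [hGc]; simp only [hc0def] at hcc0' ⊢; linarith
      exact lt_trans hay (by exact_mod_cast this)
    · intro a ha
      filter_upwards [hevgood] with c hcg
      obtain ⟨hcI, _⟩ := hβs c hcg.1 hcg.2
      exact lt_trans hcI.2 ha
  -- assemble everything
  refine ⟨cstar, hcstar_pos, γs, βs, ?_, ?_, ?_, ?_, hβsT, hγsT, hβsTop⟩
  · -- γs strictly decreasing
    intro c1 hc1 c2 hc2 h12
    obtain ⟨hI1, hG1⟩ := hβs c1 hc1.1 hc1.2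
    obtain ⟨hI2, hG2⟩ := hβs c2 hc2.1 hc2.2
    obtain ⟨hm1, he1⟩ := hΓ (βs c1) hI1
    obtain ⟨hm2, he2⟩ := hΓ (βs c2) hI2
    have hb12 : βs c1 < βs c2 := hβslt c1 c2 hc1.1 hc1.2 hc2.1 hc2.2 h12
    have hH12 : H (βs c1) < H (βs c2) := hHmono (mem_Ici.2 (le_of_lt hI1.1)) (mem_Ici.2 (le_of_lt hI2.1)) hb12
    show Γ (βs c2) < Γ (βs c1)
    rw [← (hHanti.lt_iff_gt ⟨hm1.1, hm1.2.le⟩ ⟨hm2.1, hm2.2.le⟩)]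
    rw [he1, he2]; exact hH12
  · -- βs strictly increasing
    intro c1 hc1 c2 hc2 h12
    exact hβslt c1 c2 hc1.1 hc1.2 hc2.1 hc2.2 h12
  · -- the main properties for each c
    intro c hc hcs
    obtain ⟨hcI, hGc⟩ := hβs c hc hcs
    obtain ⟨hmem, heq⟩ := hΓ (βs c) hcI
    refine ⟨hmem.1, hmem.2, hcI.1, hcI.2, ?_, ?_, ?_, hGc⟩
    · intro x hx1 hx2
      have := hsign1 (βs c) hcI x hx1 hx2
      simp only [hHdef] at this
      simpa using sub_pos.2 this
    · exact heq
    · intro x hx1 hx2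
      have := hsign2 (βs c) hcI x hx1 hx2
      simp only [hHdef] at this
      simpa using sub_neg.2 this
  · -- uniqueness
    intro c hc hcs γ β hγ0 hγβ he hFb
    obtain ⟨hcI, hGc⟩ := hβs c hc hcs
    have he' : H γ = H β := he
    have hγxl : γ < xl := by
      by_contra hcon
      push_neg at hcon
      have := hHmono.injOn (mem_Ici.2 hcon) (mem_Ici.2 (le_trans hcon hγβ.le)) he'
      exact absurd this (ne_of_lt hγβ)
    have hβxl : xl < β := by
      by_contra hcon
      push_neg at hcon
      have := hHanti.injOn ⟨hγ0, by linarith⟩ ⟨lt_trans hγ0 hγβ, hcon⟩ he'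
      exact absurd this (ne_of_lt hγβ)
    have hβI : β ∈ I := by
      refine ⟨hβxl, ?_⟩
      have h1 : ((H β : ℝ):EReal) < L0 := by
        rw [← he']
        exact hL0lt γ ⟨hγ0, hγxl.le⟩
      exact hlt_xbar β hβxl.le h1
    have hΓβ : γ = Γ β :=
      hγuniq β hβI γ (Γ β) ⟨hγ0, hγxl⟩ (hΓ β hβI).1 he' (hΓ β hβI).2
    have hGβ : G β = -c := by
      show Fb (Γ β) β = -c
      rw [← hΓβ]; exact hFb
    have hββs : β = βs c := hGanti.injOn hβI hcI (by rw [hGβ, hGc])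
    constructor
    · rw [hΓβ, hββs]
    · exact hββs
end

section
/- Assume lim_{x↓0} ψ'(x)/p'(x) = 0, lim_{x↑∞} ψ(x) = ∞, and lim_{x↑∞} R_Θ(x)/ψ(x) = 0, let x̲ ∈ (ξ, ∞] be the unique point such that the derivative of R_Θ'/ψ' is strictly negative on (0, x̲) and strictly positive on (x̲, ∞), and assume x̲ < ∞. Then for all β and x with x̲ < β < x one has Θ(x) < r(x)·G_Θ(β), where G_Θ(β) = (C p'(β)/ψ'(β)) ∫₀^β Θ(s) Ψ(s) ds. -/
open Filter Set MeasureTheory Topology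

theorem stmt_15
    (b σ r : ℝ → ℝ) (r₀ r₁ : ℝ)
    (hbc : ContinuousOn b (Ioi 0))
    (hσc : ContinuousOn σ (Ioi 0))
    (hrc : ContinuousOn r (Ioi 0))
    (hσpos : ∀ x ∈ Ioi (0:ℝ), 0 < σ x)
    (hr₀ : 0 < r₀) (hr₀₁ : r₀ ≤ r₁)
    (hrbd : ∀ x ∈ Ioi (0:ℝ), r₀ ≤ r x ∧ r x ≤ r₁)
    (p' : ℝ → ℝ)
    (hp' : ∀ x ∈ Ioi (0:ℝ), p' x = Real.exp (-(2:ℝ) * ∫ s in (1:ℝ)..x, b s / (σ s) ^ 2))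
    (φ ψ φ' ψ' φ'' ψ'' : ℝ → ℝ)
    (hφ1 : ∀ x ∈ Ioi (0:ℝ), HasDerivAt φ (φ' x) x)
    (hφ2 : ∀ x ∈ Ioi (0:ℝ), HasDerivAt φ' (φ'' x) x)
    (hφ2c : ContinuousOn φ'' (Ioi 0))
    (hψ1 : ∀ x ∈ Ioi (0:ℝ), HasDerivAt ψ (ψ' x) x)
    (hψ2 : ∀ x ∈ Ioi (0:ℝ), HasDerivAt ψ' (ψ'' x) x)
    (hψ2c : ContinuousOn ψ'' (Ioi 0))
    (hφpos : ∀ x ∈ Ioi (0:ℝ), 0 < φ x)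
    (hφ'neg : ∀ x ∈ Ioi (0:ℝ), φ' x < 0)
    (hψpos : ∀ x ∈ Ioi (0:ℝ), 0 < ψ x)
    (hψ'pos : ∀ x ∈ Ioi (0:ℝ), 0 < ψ' x)
    (hφODE : ∀ x ∈ Ioi (0:ℝ), (1/2) * σ x ^ 2 * φ'' x + b x * φ' x - r x * φ x = 0)
    (hψODE : ∀ x ∈ Ioi (0:ℝ), (1/2) * σ x ^ 2 * ψ'' x + b x * ψ' x - r x * ψ x = 0)
    (C : ℝ) (hC : 0 < C)
    (hWr : ∀ x ∈ Ioi (0:ℝ), φ x * ψ' x - φ' x * ψ x = C * p' x)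
    (Ψ Φ : ℝ → ℝ)
    (hΨ : ∀ x ∈ Ioi (0:ℝ), Ψ x = 2 * ψ x / (C * σ x ^ 2 * p' x))
    (hΦ : ∀ x ∈ Ioi (0:ℝ), Φ x = 2 * φ x / (C * σ x ^ 2 * p' x))
    (Θ : ℝ → ℝ) (hΘc : ContinuousOn Θ (Ioi 0))
    (hΘIC : ∀ x ∈ Ioi (0:ℝ),
      IntegrableOn (fun s => Θ s * Ψ s) (Ioc 0 x) ∧
      IntegrableOn (fun s => Θ s * Φ s) (Ioi x))
    (ξ : ℝ) (hξ : 0 < ξ)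
    (hΘinc : StrictMonoOn (fun x => Θ x / r x) (Ioo 0 ξ))
    (hΘdec : StrictAntiOn (fun x => Θ x / r x) (Ioi ξ))
    (R R' : ℝ → ℝ)
    (hRdef : ∀ x ∈ Ioi (0:ℝ),
      R x = φ x * (∫ s in Ioc (0:ℝ) x, Θ s * Ψ s) + ψ x * (∫ s in Ioi x, Θ s * Φ s))
    (hR'def : ∀ x ∈ Ioi (0:ℝ),
      R' x = φ' x * (∫ s in Ioc (0:ℝ) x, Θ s * Ψ s) + ψ' x * (∫ s in Ioi x, Θ s * Φ s))
    (hψ'p'0 : Tendsto (fun x => ψ' x / p' x) (𝓝[>] (0:ℝ)) (𝓝 0))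
    (hψT : Tendsto ψ atTop atTop)
    (hRψT : Tendsto (fun x => R x / ψ x) atTop (𝓝 0))
    (xl : ℝ) (hxlξ : ξ < xl)
    (hxl1 : ∀ x : ℝ, 0 < x → x < xl → deriv (fun y => R' y / ψ' y) x < 0)
    (hxl2 : ∀ x : ℝ, xl < x → 0 < deriv (fun y => R' y / ψ' y) x)
    (G : ℝ → ℝ)
    (hGdef : ∀ x ∈ Ioi (0:ℝ), G x = C * p' x / ψ' x * ∫ s in Ioc (0:ℝ) x, Θ s * Ψ s) :
    ∀ β x : ℝ, xl < β → β < x → Θ x < r x * G β := by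

  -- basic positivity facts
  have hxl0 : (0:ℝ) < xl := hξ.trans hxlξ
  have hp'pos : ∀ y ∈ Ioi (0:ℝ), 0 < p' y := by
    intro y hy; rw [hp' y hy]; exact Real.exp_pos _
  have hσ2pos : ∀ y ∈ Ioi (0:ℝ), 0 < σ y ^ 2 := fun y hy => pow_pos (hσpos y hy) 2
  -- continuity of the scale density
  have hfrac : ContinuousOn (fun s => b s / σ s ^ 2) (Ioi 0) :=
    hbc.div (hσc.pow 2) (fun y hy => ne_of_gt (hσ2pos y hy))
  have hIc : ContinuousOn (fun t => ∫ s in (1:ℝ)..t, b s / σ s ^ 2) (Ioi 0) := by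
    intro y hy
    have h : HasDerivAt (fun t => ∫ s in (1:ℝ)..t, b s / σ s ^ 2) (b y / σ y ^ 2) y := by
      apply intervalIntegral.integral_hasDerivAt_right
      · apply (hfrac.mono ?_).intervalIntegrable
        intro t ht
        rcases Set.mem_uIcc.mp ht with ⟨h1, _⟩ | ⟨h1, _⟩
        · exact lt_of_lt_of_le one_pos h1
        · exact lt_of_lt_of_le hy h1
      · exact hfrac.stronglyMeasurableAtFilter isOpen_Ioi y hy
      · exact hfrac.continuousAt (isOpen_Ioi.mem_nhds hy)
    exact h.continuousAt.continuousWithinAt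
  have hp'c : ContinuousOn p' (Ioi 0) :=
    (Real.continuous_exp.comp_continuousOn (continuousOn_const.mul hIc)).congr hp'
  have hψc : ContinuousOn ψ (Ioi 0) :=
    fun y hy => (hψ1 y hy).continuousAt.continuousWithinAt
  have hφc : ContinuousOn φ (Ioi 0) :=
    fun y hy => (hφ1 y hy).continuousAt.continuousWithinAt
  have hden : ∀ y ∈ Ioi (0:ℝ), C * σ y ^ 2 * p' y ≠ 0 := by
    intro y hy
    exact ne_of_gt (mul_pos (mul_pos hC (hσ2pos y hy)) (hp'pos y hy))
  have hΨc : ContinuousOn Ψ (Ioi 0) :=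
    (((continuousOn_const.mul hψc).div
      ((continuousOn_const.mul (hσc.pow 2)).mul hp'c) hden)).congr hΨ
  have hΦc : ContinuousOn Φ (Ioi 0) :=
    (((continuousOn_const.mul hφc).div
      ((continuousOn_const.mul (hσc.pow 2)).mul hp'c) hden)).congr hΦ
  have hΘΨc : ContinuousOn (fun s => Θ s * Ψ s) (Ioi 0) := hΘc.mul hΨc
  have hΘΦc : ContinuousOn (fun s => Θ s * Φ s) (Ioi 0) := hΘc.mul hΦc
  -- the two integral functions
  set A : ℝ → ℝ := fun y => ∫ s in Ioc (0:ℝ) y, Θ s * Ψ s with hA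
  set B : ℝ → ℝ := fun y => ∫ s in Ioi y, Θ s * Φ s with hB
  -- FTC for A
  have hAderiv : ∀ y ∈ Ioi (0:ℝ), HasDerivAt A (Θ y * Ψ y) y := by
    intro y hy
    have hy0 : (0:ℝ) < y := hy
    set c := y / 2 with hc
    have hc0 : 0 < c := by positivity
    have hcy : c < y := by linarith
    have hft : HasDerivAt (fun t => ∫ s in c..t, Θ s * Ψ s) (Θ y * Ψ y) y := by
      apply intervalIntegral.integral_hasDerivAt_right
      · apply (hΘΨc.mono ?_).intervalIntegrable
        intro t ht
        rcases Set.mem_uIcc.mp ht with ⟨h1, _⟩ | ⟨h1, _⟩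
        · exact lt_of_lt_of_le hc0 h1
        · exact lt_of_lt_of_le hy0 h1
      · exact hΘΨc.stronglyMeasurableAtFilter isOpen_Ioi y hy
      · exact hΘΨc.continuousAt (isOpen_Ioi.mem_nhds hy)
    have heq : ∀ t ∈ Ioi c, A t = A c + ∫ s in c..t, Θ s * Ψ s := by
      intro t ht
      have hct : c ≤ t := le_of_lt ht
      have ht0 : (0:ℝ) < t := hc0.trans ht
      have hint : IntegrableOn (fun s => Θ s * Ψ s) (Ioc 0 t) := (hΘIC t ht0).1
      have hsplit : Ioc (0:ℝ) c ∪ Ioc c t = Ioc 0 t := Set.Ioc_union_Ioc_eq_Ioc (le_of_lt hc0) hct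
      have hdisj : Disjoint (Ioc (0:ℝ) c) (Ioc c t) := by
        rw [Set.disjoint_left]
        rintro s ⟨_, h1⟩ ⟨h2, _⟩
        exact absurd h1 (not_le.mpr h2)
      have : A t = (∫ s in Ioc (0:ℝ) c, Θ s * Ψ s) + ∫ s in Ioc c t, Θ s * Ψ s := by
        rw [hA]; simp only
        rw [← hsplit, MeasureTheory.setIntegral_union hdisj measurableSet_Ioc
          (hint.mono_set (by rw [← hsplit]; exact Set.subset_union_left))
          (hint.mono_set (by rw [← hsplit]; exact Set.subset_union_right))]
      rw [this, intervalIntegral.integral_of_le hct]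
    have := (hft.const_add (A c)).congr_of_eventuallyEq
      (Filter.eventuallyEq_of_mem (isOpen_Ioi.mem_nhds (show y ∈ Ioi c from hcy)) heq)
    exact this
  -- FTC for B
  have hBderiv : ∀ y ∈ Ioi (0:ℝ), HasDerivAt B (-(Θ y * Φ y)) y := by
    intro y hy
    have hy0 : (0:ℝ) < y := hy
    set c := y / 2 with hc
    have hc0 : 0 < c := by positivity
    have hcy : c < y := by linarith
    have hft : HasDerivAt (fun t => ∫ s in c..t, Θ s * Φ s) (Θ y * Φ y) y := by
      apply intervalIntegral.integral_hasDerivAt_right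
      · apply (hΘΦc.mono ?_).intervalIntegrable
        intro t ht
        rcases Set.mem_uIcc.mp ht with ⟨h1, _⟩ | ⟨h1, _⟩
        · exact lt_of_lt_of_le hc0 h1
        · exact lt_of_lt_of_le hy0 h1
      · exact hΘΦc.stronglyMeasurableAtFilter isOpen_Ioi y hy
      · exact hΘΦc.continuousAt (isOpen_Ioi.mem_nhds hy)
    have heq : ∀ t ∈ Ioi c, B t = B c - ∫ s in c..t, Θ s * Φ s := by
      intro t ht
      have hct : c ≤ t := le_of_lt ht
      have ht0 : (0:ℝ) < t := hc0.trans ht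
      have hint : IntegrableOn (fun s => Θ s * Φ s) (Ioi c) := (hΘIC c hc0).2
      have hsplit : Ioc c t ∪ Ioi t = Ioi c := Set.Ioc_union_Ioi_eq_Ioi hct
      have hdisj : Disjoint (Ioc c t) (Ioi t) := by
        rw [Set.disjoint_left]
        rintro s ⟨_, h1⟩ h2
        exact absurd h1 (not_le.mpr h2)
      have hBc : B c = (∫ s in Ioc c t, Θ s * Φ s) + ∫ s in Ioi t, Θ s * Φ s := by
        rw [hB]; simp only
        rw [← hsplit, MeasureTheory.setIntegral_union hdisj measurableSet_Ioi
          (hint.mono_set (by rw [← hsplit]; exact Set.subset_union_left))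
          (hint.mono_set (by rw [← hsplit]; exact Set.subset_union_right))]
      rw [intervalIntegral.integral_of_le hct]
      rw [hBc]; ring
    have := ((hft.const_sub (B c)).congr_of_eventuallyEq
      (Filter.eventuallyEq_of_mem (isOpen_Ioi.mem_nhds (show y ∈ Ioi c from hcy)) heq))
    simpa using this
  -- second derivative of R
  set D : ℝ → ℝ := fun y => φ'' y * A y + (φ' y * (Θ y * Ψ y)) +
      (ψ'' y * B y + ψ' y * (-(Θ y * Φ y))) with hD
  have hR'deriv : ∀ y ∈ Ioi (0:ℝ), HasDerivAt R' (D y) y := by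
    intro y hy
    have h : HasDerivAt (fun t => φ' t * A t + ψ' t * B t) (D y) y :=
      ((hφ2 y hy).mul (hAderiv y hy)).add ((hψ2 y hy).mul (hBderiv y hy))
    apply h.congr_of_eventuallyEq
    exact Filter.eventuallyEq_of_mem (isOpen_Ioi.mem_nhds hy) hR'def
  have hRderiv : ∀ y ∈ Ioi (0:ℝ), HasDerivAt R (R' y) y := by
    intro y hy
    have h : HasDerivAt (fun t => φ t * A t + ψ t * B t)
        (φ' y * A y + (φ y * (Θ y * Ψ y)) + (ψ' y * B y + ψ y * (-(Θ y * Φ y)))) y :=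
      ((hφ1 y hy).mul (hAderiv y hy)).add ((hψ1 y hy).mul (hBderiv y hy))
    have hkey : φ' y * A y + (φ y * (Θ y * Ψ y)) + (ψ' y * B y + ψ y * (-(Θ y * Φ y))) = R' y := by
      have hΨΦ : φ y * Ψ y = ψ y * Φ y := by rw [hΨ y hy, hΦ y hy]; ring
      rw [hR'def y hy]
      have h0 : φ y * (Θ y * Ψ y) - ψ y * (Θ y * Φ y) = 0 := by
        linear_combination Θ y * hΨΦ
      linarith [h0]
    rw [hkey] at h
    apply h.congr_of_eventuallyEq
    exact Filter.eventuallyEq_of_mem (isOpen_Ioi.mem_nhds hy) hRdef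
  -- derivative of the quotient R'/ψ'
  have hqderiv : ∀ y ∈ Ioi (0:ℝ), HasDerivAt (fun t => R' t / ψ' t)
      ((D y * ψ' y - R' y * ψ'' y) / ψ' y ^ 2) y := by
    intro y hy
    exact (hR'deriv y hy).div (hψ2 y hy) (ne_of_gt (hψ'pos y hy))
  -- numerator identity
  have hkeyN : ∀ y ∈ Ioi (0:ℝ), D y * ψ' y - R' y * ψ'' y =
      2 / σ y ^ 2 * (r y * (C * p' y * A y) - Θ y * ψ' y) := by
    intro y hy
    have hσne : σ y ^ 2 ≠ 0 := ne_of_gt (hσ2pos y hy)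
    have hCne : C ≠ 0 := ne_of_gt hC
    have hpne : p' y ≠ 0 := ne_of_gt (hp'pos y hy)
    have hφ'' : φ'' y = 2 * (r y * φ y - b y * φ' y) / σ y ^ 2 := by
      have h := hφODE y hy; rw [eq_div_iff hσne]; linear_combination 2 * h
    have hψ'' : ψ'' y = 2 * (r y * ψ y - b y * ψ' y) / σ y ^ 2 := by
      have h := hψODE y hy; rw [eq_div_iff hσne]; linear_combination 2 * h
    have hW := hWr y hy
    rw [hD]; simp only
    rw [hR'def y hy, hΨ y hy, hΦ y hy, hφ'', hψ'']
    field_simp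
    rw [div_left_inj' hσne]
    linear_combination (r y * A y * C * p' y - Θ y * ψ' y) * hW
  -- main pointwise inequality for y > xl
  have hmain : ∀ y : ℝ, xl < y → Θ y < r y * G y := by
    intro y hy
    have hy0 : y ∈ Ioi (0:ℝ) := hxl0.trans hy
    have hd : deriv (fun t => R' t / ψ' t) y = (D y * ψ' y - R' y * ψ'' y) / ψ' y ^ 2 :=
      (hqderiv y hy0).deriv
    have hpos := hxl2 y hy
    rw [hd, hkeyN y hy0] at hpos
    have hψ'2 : 0 < ψ' y ^ 2 := pow_pos (hψ'pos y hy0) 2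
    have h2σ : 0 < 2 / σ y ^ 2 := div_pos two_pos (hσ2pos y hy0)
    have hE : 0 < r y * (C * p' y * A y) - Θ y * ψ' y := by
      rcases div_pos_iff.mp hpos with ⟨h1, _⟩ | ⟨_, h2⟩
      · rcases mul_pos_iff.mp h1 with ⟨_, hE⟩ | ⟨hneg, _⟩
        · exact hE
        · linarith
      · linarith
    have hG : r y * G y = r y * (C * p' y * A y) / ψ' y := by
      rw [hGdef y hy0]; field_simp; rfl
    rw [hG, lt_div_iff₀ (hψ'pos y hy0)]
    linarith
  intro β x hβ hβx
  have hβ0 : β ∈ Ioi (0:ℝ) := hxl0.trans hβ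
  have hx0 : x ∈ Ioi (0:ℝ) := lt_trans hβ0 hβx
  -- G equals R - (R'/ψ')·ψ on (0,∞)
  have hGalt : ∀ y ∈ Ioi (0:ℝ), G y = R y - R' y / ψ' y * ψ y := by
    intro y hy
    have hψ'ne : ψ' y ≠ 0 := ne_of_gt (hψ'pos y hy)
    rw [hGdef y hy, hRdef y hy, hR'def y hy]
    field_simp
    linear_combination (-(∫ (s : ℝ) in Set.Ioc 0 y, Θ s * Ψ s)) * hWr y hy
  -- derivative of G
  have hGderiv : ∀ y ∈ Ioi (0:ℝ),
      HasDerivAt G (-(ψ y * deriv (fun t => R' t / ψ' t) y)) y := by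
    intro y hy
    have hq := hqderiv y hy
    have h : HasDerivAt (fun t => R t - R' t / ψ' t * ψ t)
        (R' y - ((D y * ψ' y - R' y * ψ'' y) / ψ' y ^ 2 * ψ y + R' y / ψ' y * ψ' y)) y :=
      (hRderiv y hy).sub (hq.mul (hψ1 y hy))
    have hψ'ne : ψ' y ≠ 0 := ne_of_gt (hψ'pos y hy)
    have hval : R' y - ((D y * ψ' y - R' y * ψ'' y) / ψ' y ^ 2 * ψ y + R' y / ψ' y * ψ' y)
        = -(ψ y * deriv (fun t => R' t / ψ' t) y) := by
      rw [hq.deriv, div_mul_cancel₀ _ hψ'ne]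
      ring
    rw [hval] at h
    apply h.congr_of_eventuallyEq
    apply Filter.eventuallyEq_of_mem (isOpen_Ioi.mem_nhds hy)
    intro t ht
    exact hGalt t ht
  -- G is strictly decreasing on [β, x]
  have hanti : StrictAntiOn G (Icc β x) := by
    apply strictAntiOn_of_deriv_neg (convex_Icc β x)
    · intro y hy
      have hy0 : y ∈ Ioi (0:ℝ) := lt_of_lt_of_le hβ0 hy.1
      exact (hGderiv y hy0).continuousAt.continuousWithinAt
    · intro y hy
      rw [interior_Icc] at hy
      have hy0 : y ∈ Ioi (0:ℝ) := lt_trans hβ0 hy.1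
      rw [(hGderiv y hy0).deriv]
      have h1 := hxl2 y (lt_trans hβ hy.1)
      have h2 := hψpos y hy0
      nlinarith
  have hGx : G x < G β :=
    hanti ⟨le_refl β, le_of_lt hβx⟩ ⟨le_of_lt hβx, le_refl x⟩ hβx
  have hrx : 0 < r x := lt_of_lt_of_le hr₀ (hrbd x hx0).1
  calc Θ x < r x * G x := hmain x (lt_trans hβ hβx)
    _ < r x * G β := by exact mul_lt_mul_of_pos_left hGx hrx
end
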